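/- arXiv:0803.3121 — 7 statements merged into one kernel-verified Lean document; each statement's English description precedes it below -/
import Mathlib

section
/- Let C : ℤ × ℤ → ℂ and D : ℤ → ℂ both be local, i.e. there exist K > 0 and r > 0 with |C(k,l)| ≤ K·exp(−r(|k|+|l|)) and |D(m)| ≤ K·exp(−r|m|) for all k, l, m ∈ ℤ. Then the Leibniz rule — for all l, m, n ∈ ℤ: Σ_{k∈ℤ} C(l−k, m−k) D(k−n) = Σ_{k∈ℤ} C(k−n, m−n) D(l−k) + Σ_{k∈ℤ} C(l−n, k−n) D(m−k), all series being absolutely convergent — holds if and only if Ĉ(v,w)·(D̂(vw) − D̂(v) − D̂(w)) = 0 for all v, w ∈ ℂ with |v| = |w| = 1, where Ĉ(v,w) = Σ_{k,l∈ℤ} C(k,l) v^k w^l and D̂(z) = Σ_{m∈ℤ} D(m) z^m. -/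
open Complex MeasureTheory

lemma sumexp {r : ℝ} (hr : 0 < r) : Summable fun k : ℤ => Real.exp (-r * |(k : ℝ)|) := by
  apply Summable.of_nat_of_neg <;>
  · refine Summable.congr (summable_geometric_of_lt_one (le_of_lt (Real.exp_pos _))
      (Real.exp_lt_one_iff.mpr (neg_neg_of_pos hr))) (fun n => ?_)
    simp [← Real.exp_nat_mul, mul_comm, abs_of_nonneg, Int.cast_natCast]


def sigma1 : ((ℤ × ℤ) × ℤ) ≃ ((ℤ × ℤ) × ℤ) where
  toFun x := ((x.1.1 + x.2, x.1.2 + x.2), x.2)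
  invFun x := ((x.1.1 - x.2, x.1.2 - x.2), x.2)
  left_inv := by rintro ⟨⟨p, q⟩, k⟩; simp
  right_inv := by rintro ⟨⟨p, q⟩, k⟩; simp

def sigma2 : ((ℤ × ℤ) × ℤ) ≃ ((ℤ × ℤ) × ℤ) where
  toFun x := ((x.1.1 + x.2, x.1.2), x.1.1)
  invFun x := ((x.2, x.1.2), x.1.1 - x.2)
  left_inv := by rintro ⟨⟨p, q⟩, k⟩; simp
  right_inv := by rintro ⟨⟨p, q⟩, k⟩; simp

def sigma3 : ((ℤ × ℤ) × ℤ) ≃ ((ℤ × ℤ) × ℤ) where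
  toFun x := ((x.1.1, x.1.2 + x.2), x.1.2)
  invFun x := ((x.1.1, x.2), x.1.2 - x.2)
  left_inv := by rintro ⟨⟨p, q⟩, k⟩; simp
  right_inv := by rintro ⟨⟨p, q⟩, k⟩; simp

lemma outer_summable {ι κ : Type*} (G : ι × κ → ℂ) (hG : Summable fun x => ‖G x‖) :
    Summable fun p : ι => ∑' k : κ, G (p, k) := by
  obtain ⟨hfac, houter⟩ := (summable_prod_of_nonneg (fun _ => norm_nonneg _)).mp hG
  apply Summable.of_norm_bounded houter
  intro p
  exact norm_tsum_le_tsum_norm (hfac p)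

lemma norm_weight {v w : ℂ} (hv : ‖v‖ = 1) (hw : ‖w‖ = 1)
    (z : ℂ) (a b : ℤ) : ‖z * v ^ a * w ^ b‖ = ‖z‖ := by
  rw [norm_mul, norm_mul]
  simp only [norm_zpow, hv, hw, one_zpow, mul_one]

set_option maxHeartbeats 1000000 in
lemma onepiece (C : ℤ × ℤ → ℂ) (D : ℤ → ℂ)
    (hCn : Summable fun p : ℤ × ℤ => ‖C p‖) (hDn : Summable fun m : ℤ => ‖D m‖)
    (v w z : ℂ) (hv : ‖v‖ = 1) (hw : ‖w‖ = 1) (hz : ‖z‖ = 1)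
    (σ : ((ℤ × ℤ) × ℤ) ≃ ((ℤ × ℤ) × ℤ)) (T : ℤ × ℤ → ℤ → ℂ)
    (hσ : ∀ x : (ℤ × ℤ) × ℤ, T (σ x).1 (σ x).2 = C x.1 * D x.2)
    (hweight : ∀ x : (ℤ × ℤ) × ℤ,
      v ^ (σ x).1.1 * w ^ (σ x).1.2 = v ^ x.1.1 * w ^ x.1.2 * z ^ x.2) :
    (∀ p : ℤ × ℤ, Summable fun k : ℤ => ‖T p k‖) ∧
    (Summable fun p : ℤ × ℤ => ∑' k : ℤ, ‖T p k‖) ∧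
    (Summable fun p : ℤ × ℤ => (∑' k : ℤ, T p k) * v ^ p.1 * w ^ p.2) ∧
    ∑' p : ℤ × ℤ, (∑' k : ℤ, T p k) * v ^ p.1 * w ^ p.2
      = (∑' p : ℤ × ℤ, C p * v ^ p.1 * w ^ p.2) * ∑' m : ℤ, D m * z ^ m := by
  set G : (ℤ × ℤ) × ℤ → ℂ := fun y => T y.1 y.2 * v ^ y.1.1 * w ^ y.1.2 with hGdef
  set H : (ℤ × ℤ) × ℤ → ℂ :=
    fun x => (C x.1 * v ^ x.1.1 * w ^ x.1.2) * (D x.2 * z ^ x.2) with hHdef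
  have hGH : ∀ x, G (σ x) = H x := by
    intro x
    simp only [hGdef, hHdef]
    rw [mul_assoc, hweight, hσ]
    ring
  have hCv : Summable fun p : ℤ × ℤ => ‖C p * v ^ p.1 * w ^ p.2‖ :=
    Summable.congr hCn (fun p => (norm_weight hv hw (C p) p.1 p.2).symm)
  have hDz : Summable fun m : ℤ => ‖D m * z ^ m‖ := by
    apply Summable.congr hDn
    intro m
    rw [norm_mul, norm_zpow, show ‖z‖ = 1 from by rw [hz], one_zpow, mul_one]
  have hHn : Summable fun x : (ℤ × ℤ) × ℤ => ‖H x‖ :=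
    Summable.mul_norm (f := fun p : ℤ × ℤ => C p * v ^ p.1 * w ^ p.2)
      (g := fun m : ℤ => D m * z ^ m) hCv hDz
  have hGn : Summable fun y => ‖G y‖ := by
    have h1 : Summable fun x => ‖G (σ x)‖ := Summable.congr hHn (fun x => by rw [hGH x])
    exact (Equiv.summable_iff σ (f := fun y => ‖G y‖)).mp h1
  have heval : ∀ p : ℤ × ℤ, ∑' k : ℤ, G (p, k) = (∑' k : ℤ, T p k) * v ^ p.1 * w ^ p.2 := by
    intro p
    simp only [hGdef]
    rw [show (fun k : ℤ => T p k * v ^ p.1 * w ^ p.2)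
      = fun k : ℤ => T p k * (v ^ p.1 * w ^ p.2) from funext fun k => by ring]
    rw [tsum_mul_right, mul_assoc]
  have hTn : Summable fun y : (ℤ × ℤ) × ℤ => ‖T y.1 y.2‖ := by
    apply Summable.congr hGn
    intro y
    exact norm_weight hv hw (T y.1 y.2) y.1.1 y.1.2
  obtain ⟨hTfac, hTout⟩ := (summable_prod_of_nonneg (fun _ => norm_nonneg _)).mp hTn
  refine ⟨hTfac, hTout, (outer_summable G hGn).congr heval, ?_⟩
  calc ∑' p : ℤ × ℤ, (∑' k : ℤ, T p k) * v ^ p.1 * w ^ p.2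
      = ∑' p : ℤ × ℤ, ∑' k : ℤ, G (p, k) := tsum_congr (fun p => (heval p).symm)
    _ = ∑' y : (ℤ × ℤ) × ℤ, G y := (Summable.tsum_prod hGn.of_norm).symm
    _ = ∑' x : (ℤ × ℤ) × ℤ, G (σ x) := (σ.tsum_eq G).symm
    _ = ∑' x : (ℤ × ℤ) × ℤ, H x := tsum_congr hGH
    _ = (∑' p : ℤ × ℤ, C p * v ^ p.1 * w ^ p.2) * ∑' m : ℤ, D m * z ^ m :=
        (tsum_mul_tsum_of_summable_norm (f := fun p : ℤ × ℤ => C p * v ^ p.1 * w ^ p.2)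
          (g := fun m : ℤ => D m * z ^ m) hCv hDz).symm

lemma factor (C : ℤ × ℤ → ℂ) (D : ℤ → ℂ)
    (hCn : Summable fun p : ℤ × ℤ => ‖C p‖) (hDn : Summable fun m : ℤ => ‖D m‖)
    (v w : ℂ) (hv : ‖v‖ = 1) (hw : ‖w‖ = 1) :
    (Summable fun p : ℤ × ℤ => ‖(∑' k : ℤ, C (p.1 - k, p.2 - k) * D k)
        - (∑' k : ℤ, C (k, p.2) * D (p.1 - k)) - ∑' k : ℤ, C (p.1, k) * D (p.2 - k)‖) ∧
    ∑' p : ℤ × ℤ, ((∑' k : ℤ, C (p.1 - k, p.2 - k) * D k)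
        - (∑' k : ℤ, C (k, p.2) * D (p.1 - k))
        - ∑' k : ℤ, C (p.1, k) * D (p.2 - k)) * v ^ p.1 * w ^ p.2
      = (∑' p : ℤ × ℤ, C p * v ^ p.1 * w ^ p.2) *
        ((∑' m : ℤ, D m * (v * w) ^ m) - (∑' m : ℤ, D m * v ^ m) -
          ∑' m : ℤ, D m * w ^ m) := by
  have hv0 : v ≠ 0 := fun h => by simp [h] at hv
  have hw0 : w ≠ 0 := fun h => by simp [h] at hw
  have hvw : ‖v * w‖ = 1 := by rw [norm_mul, hv, hw, mul_one]
  obtain ⟨ha1, hb1, hs1, he1⟩ := onepiece C D hCn hDn v w (v * w) hv hw hvw sigma1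
    (fun p k => C (p.1 - k, p.2 - k) * D k)
    (by rintro ⟨⟨p, q⟩, k⟩; simp [sigma1])
    (by
      rintro ⟨⟨p, q⟩, k⟩
      simp only [sigma1, Equiv.coe_fn_mk]
      rw [zpow_add₀ hv0, zpow_add₀ hw0, mul_zpow]
      ring)
  obtain ⟨ha2, hb2, hs2, he2⟩ := onepiece C D hCn hDn v w v hv hw hv sigma2
    (fun p k => C (k, p.2) * D (p.1 - k))
    (by rintro ⟨⟨p, q⟩, k⟩; simp [sigma2])
    (by
      rintro ⟨⟨p, q⟩, k⟩
      simp only [sigma2, Equiv.coe_fn_mk]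
      rw [zpow_add₀ hv0]
      ring)
  obtain ⟨ha3, hb3, hs3, he3⟩ := onepiece C D hCn hDn v w w hv hw hw sigma3
    (fun p k => C (p.1, k) * D (p.2 - k))
    (by rintro ⟨⟨p, q⟩, k⟩; simp [sigma3])
    (by
      rintro ⟨⟨p, q⟩, k⟩
      simp only [sigma3, Equiv.coe_fn_mk]
      rw [zpow_add₀ hw0]
      ring)
  constructor
  · refine Summable.of_nonneg_of_le (fun _ => norm_nonneg _) (fun p => ?_)
      ((hb1.add hb2).add hb3)
    calc ‖(∑' k : ℤ, C (p.1 - k, p.2 - k) * D k)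
            - (∑' k : ℤ, C (k, p.2) * D (p.1 - k)) - ∑' k : ℤ, C (p.1, k) * D (p.2 - k)‖
          ≤ ‖(∑' k : ℤ, C (p.1 - k, p.2 - k) * D k)
            - ∑' k : ℤ, C (k, p.2) * D (p.1 - k)‖ + ‖∑' k : ℤ, C (p.1, k) * D (p.2 - k)‖ :=
            norm_sub_le _ _
        _ ≤ (‖∑' k : ℤ, C (p.1 - k, p.2 - k) * D k‖
            + ‖∑' k : ℤ, C (k, p.2) * D (p.1 - k)‖) + ‖∑' k : ℤ, C (p.1, k) * D (p.2 - k)‖ :=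
            add_le_add (norm_sub_le _ _) le_rfl
        _ ≤ ((∑' k : ℤ, ‖C (p.1 - k, p.2 - k) * D k‖)
            + ∑' k : ℤ, ‖C (k, p.2) * D (p.1 - k)‖) + ∑' k : ℤ, ‖C (p.1, k) * D (p.2 - k)‖ := by
            gcongr
            · exact norm_tsum_le_tsum_norm (ha1 p)
            · exact norm_tsum_le_tsum_norm (ha2 p)
            · exact norm_tsum_le_tsum_norm (ha3 p)
  · have hsplit : ∀ p : ℤ × ℤ, ((∑' k : ℤ, C (p.1 - k, p.2 - k) * D k)
        - (∑' k : ℤ, C (k, p.2) * D (p.1 - k))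
        - ∑' k : ℤ, C (p.1, k) * D (p.2 - k)) * v ^ p.1 * w ^ p.2
        = (∑' k : ℤ, C (p.1 - k, p.2 - k) * D k) * v ^ p.1 * w ^ p.2
          - (∑' k : ℤ, C (k, p.2) * D (p.1 - k)) * v ^ p.1 * w ^ p.2
          - (∑' k : ℤ, C (p.1, k) * D (p.2 - k)) * v ^ p.1 * w ^ p.2 := by
      intro p; ring
    rw [tsum_congr hsplit, Summable.tsum_sub (hs1.sub hs2) hs3, Summable.tsum_sub hs1 hs2, he1, he2, he3]
    ring


lemma uniq1 (g : ℤ → ℂ) (hg : Summable fun n => ‖g n‖)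
    (h : ∀ z : ℂ, ‖z‖ = 1 → ∑' n : ℤ, g n * z ^ n = 0) : ∀ n, g n = 0 := by
  intro n
  have twopi : (0:ℝ) < 2 * Real.pi := by positivity
  set μ := MeasureTheory.volume.restrict (Set.Ioc (0:ℝ) (2*Real.pi)) with hμ
  have hμuniv : μ Set.univ = ENNReal.ofReal (2*Real.pi) := by
    rw [hμ, Measure.restrict_apply_univ, Real.volume_Ioc, sub_zero]
  have habs : ∀ θ : ℝ, ∀ m : ℤ, ‖Complex.exp (((m:ℂ) - n) * θ * I)‖ = 1 := by
    intro θ m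
    rw [Complex.norm_exp]
    have : ((((m:ℂ) - n) * θ * I).re) = 0 := by
      simp [Complex.mul_re, Complex.mul_im]
    rw [this, Real.exp_zero]
  -- each θ: tsum is 0
  have hzero : ∀ θ : ℝ, (∑' m : ℤ, g m * Complex.exp (((m:ℂ) - n) * θ * I)) = 0 := by
    intro θ
    set z : ℂ := Complex.exp (θ * I) with hz
    have hz1 : ‖z‖ = 1 := by
      rw [hz, Complex.norm_exp]; simp [Complex.mul_re]
    have : ∀ m : ℤ, g m * Complex.exp (((m:ℂ) - n) * θ * I) = (g m * z ^ m) * z ^ (-n) := by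
      intro m
      rw [hz, ← Complex.exp_int_mul, ← Complex.exp_int_mul, mul_assoc (g m), ← Complex.exp_add]
      congr 2
      push_cast; ring
    rw [tsum_congr this, tsum_mul_right, h z hz1, zero_mul]
  have key : ∫ θ : ℝ, (∑' m : ℤ, g m * Complex.exp (((m:ℂ) - n) * θ * I)) ∂μ
      = ∑' m : ℤ, ∫ θ : ℝ, g m * Complex.exp (((m:ℂ) - n) * θ * I) ∂μ := by
    apply MeasureTheory.integral_tsum
    · intro m
      exact (Continuous.aestronglyMeasurable (by continuity))
    · have heq : ∀ m : ℤ, ∫⁻ θ, ‖g m * Complex.exp (((m:ℂ) - n) * θ * I)‖₊ ∂μ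
          = (‖g m‖₊ : ENNReal) * ENNReal.ofReal (2*Real.pi) := by
        intro m
        have : ∀ θ : ℝ, (‖g m * Complex.exp (((m:ℂ) - n) * θ * I)‖₊ : ENNReal) = (‖g m‖₊ : ENNReal) := by
          intro θ
          have : ‖g m * Complex.exp (((m:ℂ) - n) * θ * I)‖₊ = ‖g m‖₊ := by
            ext
            simp only [coe_nnnorm, norm_mul]
            rw [show ‖Complex.exp (((m:ℂ) - n) * θ * I)‖ = 1 from habs θ m, mul_one]
          rw [this]
        rw [lintegral_congr this, lintegral_const, hμuniv]
      simp only [enorm_eq_nnnorm]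
      rw [tsum_congr heq, ENNReal.tsum_mul_right]
      apply ENNReal.mul_ne_top _ ENNReal.ofReal_ne_top
      rw [ENNReal.tsum_coe_ne_top_iff_summable]
      exact (NNReal.summable_coe).mp (by simpa [coe_nnnorm] using hg)
  have hval : ∀ m : ℤ, (∫ θ : ℝ, g m * Complex.exp (((m:ℂ) - n) * θ * I) ∂μ)
      = if m = n then (2*Real.pi : ℝ) • g n else 0 := by
    intro m
    by_cases hmn : m = n
    · subst hmn
      rw [if_pos rfl]
      simp only [sub_self, zero_mul, Complex.exp_zero, mul_one]
      rw [MeasureTheory.integral_const, measureReal_def, hμuniv, ENNReal.toReal_ofReal twopi.le]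
    · rw [if_neg hmn, MeasureTheory.integral_const_mul]
      have hInt : ∫ θ : ℝ, Complex.exp (((m:ℂ) - n) * θ * I) ∂μ = 0 := by
        have hrw : ∀ θ : ℝ, Complex.exp (((m:ℂ) - n) * θ * I)
            = Complex.exp ((((m:ℂ) - n) * I) * θ) := by intro θ; ring_nf
        have hc : ((m:ℂ) - n) * I ≠ 0 := by
          apply mul_ne_zero _ Complex.I_ne_zero
          simp only [ne_eq, sub_eq_zero]
          exact_mod_cast fun hh => hmn (by exact_mod_cast hh)
        have := integral_exp_mul_complex (a := 0) (b := 2*Real.pi) hc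
        rw [intervalIntegral.integral_of_le twopi.le] at this
        rw [show (∫ θ : ℝ, Complex.exp (((m:ℂ) - n) * θ * I) ∂μ)
            = ∫ θ in Set.Ioc (0:ℝ) (2*Real.pi), Complex.exp ((((m:ℂ) - n) * I) * θ) from
          integral_congr_ae (Filter.Eventually.of_forall (fun θ => hrw θ)), this]
        have h1 : Complex.exp (((m:ℂ) - n) * I * ((2*Real.pi : ℝ) : ℂ)) = 1 := by
          have : ((m:ℂ) - n) * I * ((2*Real.pi : ℝ) : ℂ) = ((m - n : ℤ) : ℂ) * (2*(Real.pi:ℂ)*I) := by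
            push_cast; ring
          rw [this, Complex.exp_int_mul_two_pi_mul_I]
        rw [h1]
        simp
      rw [hInt, mul_zero]
  have : (0:ℂ) = (2*Real.pi : ℝ) • g n := by
    have hL : ∫ θ : ℝ, (∑' m : ℤ, g m * Complex.exp (((m:ℂ) - n) * θ * I)) ∂μ = 0 := by
      rw [integral_congr_ae (Filter.Eventually.of_forall hzero)]; simp
    rw [hL, tsum_congr hval] at key
    rw [key, tsum_eq_single n (fun m hm => if_neg hm), if_pos rfl]
  have := this.symm
  rw [smul_eq_zero] at this
  rcases this with h1 | h2
  · exact absurd h1 (by positivity)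
  · exact h2


lemma zpow_abs_one {v : ℂ} (hv : ‖v‖ = 1) (m : ℤ) : ‖v ^ m‖ = 1 := by
  rw [norm_zpow, hv, one_zpow]

lemma uniq2 (f : ℤ × ℤ → ℂ) (hf : Summable fun p : ℤ × ℤ => ‖f p‖)
    (h : ∀ v w : ℂ, ‖v‖ = 1 → ‖w‖ = 1 →
      ∑' p : ℤ × ℤ, f p * v ^ p.1 * w ^ p.2 = 0) : ∀ p, f p = 0 := by
  have hswap : Summable fun q : ℤ × ℤ => ‖f (q.2, q.1)‖ := by
    have := ((Equiv.prodComm ℤ ℤ).summable_iff (f := fun p : ℤ × ℤ => ‖f p‖)).mpr hf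
    exact this
  obtain ⟨hfac, houter⟩ := (summable_prod_of_nonneg (fun _ => norm_nonneg _)).mp hswap
  -- for each v on the circle, the partial Fourier transform in the first variable vanishes
  have key : ∀ v : ℂ, ‖v‖ = 1 → ∀ q : ℤ, (∑' p : ℤ, f (p, q) * v ^ p) = 0 := by
    intro v hv
    set g : ℤ → ℂ := fun q => ∑' p : ℤ, f (p, q) * v ^ p with hgdef
    have hnorm : ∀ q p : ℤ, ‖f (p, q) * v ^ p‖ = ‖f (p, q)‖ := by
      intro q p
      rw [norm_mul, show ‖v ^ p‖ = 1 from zpow_abs_one hv p, mul_one]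
    have hsum_inner : ∀ q : ℤ, Summable fun p : ℤ => ‖f (p, q) * v ^ p‖ := by
      intro q
      exact Summable.congr (hfac q) (fun p => (hnorm q p).symm)
    have hg : Summable fun q => ‖g q‖ := by
      apply Summable.of_nonneg_of_le (fun _ => norm_nonneg _) _ houter
      intro q
      calc ‖g q‖ ≤ ∑' p : ℤ, ‖f (p, q) * v ^ p‖ := norm_tsum_le_tsum_norm (hsum_inner q)
        _ = ∑' p : ℤ, ‖f (p, q)‖ := tsum_congr (hnorm q)
    apply uniq1 g hg
    intro w hw
    -- rewrite as double sum
    have hGsum : Summable fun x : ℤ × ℤ => f (x.2, x.1) * v ^ x.2 * w ^ x.1 := by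
      apply Summable.of_norm
      apply Summable.congr hswap
      intro x
      rw [norm_mul, norm_mul, show ‖v ^ x.2‖ = 1 from zpow_abs_one hv _,
        show ‖w ^ x.1‖ = 1 from zpow_abs_one hw _, mul_one, mul_one]
    have h1 : ∑' q : ℤ, g q * w ^ q
        = ∑' x : ℤ × ℤ, f (x.2, x.1) * v ^ x.2 * w ^ x.1 := by
      rw [Summable.tsum_prod hGsum]
      apply tsum_congr
      intro q
      rw [hgdef]
      rw [← tsum_mul_right]
    rw [h1]
    have h2 : ∑' x : ℤ × ℤ, f (x.2, x.1) * v ^ x.2 * w ^ x.1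
        = ∑' p : ℤ × ℤ, f p * v ^ p.1 * w ^ p.2 := by
      rw [← (Equiv.prodComm ℤ ℤ).tsum_eq (f := fun p : ℤ × ℤ => f p * v ^ p.1 * w ^ p.2)]
      rfl
    rw [h2]
    exact h v w hv hw
  intro p
  have := uniq1 (fun a => f (a, p.2)) (hfac p.2) (fun v hv => key v hv p.2) p.1
  simpa using this

/-- For local `C` and `D`, the lattice Leibniz rule (with all
series absolutely convergent) holds iff
`Ĉ(v,w)·(D̂(vw) − D̂(v) − D̂(w)) = 0` on the unit torus. -/
theorem stmt_3 (C : ℤ × ℤ → ℂ) (D : ℤ → ℂ) (K r : ℝ) (hK : 0 < K) (hr : 0 < r)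
    (hC : ∀ k l : ℤ,
      ‖C (k, l)‖ ≤ K * Real.exp (-r * ((|k| : ℝ) + (|l| : ℝ))))
    (hD : ∀ m : ℤ, ‖D m‖ ≤ K * Real.exp (-r * (|m| : ℝ))) :
    (∀ l m n : ℤ,
      (Summable fun k : ℤ => ‖C (l - k, m - k) * D (k - n)‖) ∧
      (Summable fun k : ℤ => ‖C (k - n, m - n) * D (l - k)‖) ∧
      (Summable fun k : ℤ => ‖C (l - n, k - n) * D (m - k)‖) ∧
      ∑' k : ℤ, C (l - k, m - k) * D (k - n) =
        (∑' k : ℤ, C (k - n, m - n) * D (l - k)) +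
          ∑' k : ℤ, C (l - n, k - n) * D (m - k)) ↔
    (∀ v w : ℂ, ‖v‖ = 1 → ‖w‖ = 1 →
      (∑' p : ℤ × ℤ, C p * v ^ p.1 * w ^ p.2) *
        ((∑' m : ℤ, D m * (v * w) ^ m) - (∑' m : ℤ, D m * v ^ m) -
          ∑' m : ℤ, D m * w ^ m) = 0) := by
  set E : ℤ → ℝ := fun a => Real.exp (-r * |(a : ℝ)|) with hEdef
  have hE : Summable E := sumexp hr
  have hEpos : ∀ a : ℤ, 0 < E a := fun a => Real.exp_pos _
  have hE1 : ∀ a : ℤ, E a ≤ 1 := by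
    intro a
    rw [hEdef, ← Real.exp_zero]
    apply Real.exp_le_exp.mpr
    exact mul_nonpos_of_nonpos_of_nonneg (by linarith) (abs_nonneg _)
  have hCb : ∀ p : ℤ × ℤ, ‖C p‖ ≤ K * (E p.1 * E p.2) := by
    intro p
    have h1 := hC p.1 p.2
    have h2 : Real.exp (-r * (|(p.1 : ℝ)| + |(p.2 : ℝ)|)) = E p.1 * E p.2 := by
      rw [hEdef, ← Real.exp_add]
      congr 1
      ring
    calc ‖C p‖ = ‖C (p.1, p.2)‖ := rfl
      _ ≤ K * Real.exp (-r * (|(p.1 : ℝ)| + |(p.2 : ℝ)|)) := h1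
      _ = K * (E p.1 * E p.2) := by rw [h2]
  have hDb : ∀ m : ℤ, ‖D m‖ ≤ K * E m := by
    intro m
    exact hD m
  have hCn : Summable fun p : ℤ × ℤ => ‖C p‖ := by
    refine Summable.of_nonneg_of_le (fun _ => norm_nonneg _) hCb ?_
    exact (hE.mul_of_nonneg hE (fun a => (hEpos a).le) (fun a => (hEpos a).le)).mul_left K
  have hDn : Summable fun m : ℤ => ‖D m‖ :=
    Summable.of_nonneg_of_le (fun _ => norm_nonneg _) hDb (hE.mul_left K)
  have shiftE : ∀ n : ℤ, Summable fun k : ℤ => E (k - n) := by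
    intro n
    exact ((Equiv.subRight n).summable_iff (f := E)).mpr hE
  have hCK : ∀ p : ℤ × ℤ, ‖C p‖ ≤ K := by
    intro p
    refine le_trans (hCb p) (mul_le_of_le_one_right hK.le ?_)
    exact mul_le_one₀ (hE1 _) (hEpos _).le (hE1 _)
  have hDK : ∀ m : ℤ, ‖D m‖ ≤ K := fun m =>
    le_trans (hDb m) (mul_le_of_le_one_right hK.le (hE1 _))
  constructor
  · -- Leibniz ⇒ Fourier identity
    intro H v w hv hw
    rw [← (factor C D hCn hDn v w hv hw).2]
    have hp : ∀ p : ℤ × ℤ, ((∑' k : ℤ, C (p.1 - k, p.2 - k) * D k)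
        - (∑' k : ℤ, C (k, p.2) * D (p.1 - k))
        - ∑' k : ℤ, C (p.1, k) * D (p.2 - k)) = 0 := by
      intro p
      obtain ⟨-, -, -, h4⟩ := H p.1 p.2 0
      simp only [sub_zero] at h4
      rw [sub_sub, h4, sub_self]
    rw [tsum_congr (fun p => by rw [hp p, zero_mul, zero_mul])]
    exact tsum_zero
  · -- Fourier identity ⇒ Leibniz
    intro hF l m n
    have s1 : Summable fun k : ℤ => ‖C (l - k, m - k) * D (k - n)‖ := by
      refine Summable.of_nonneg_of_le (fun _ => norm_nonneg _) (fun k => ?_)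
        (((shiftE n).mul_left K).mul_left K)
      calc ‖C (l - k, m - k) * D (k - n)‖ ≤ ‖C (l - k, m - k)‖ * ‖D (k - n)‖ := norm_mul_le _ _
        _ ≤ K * (K * E (k - n)) := by
            apply mul_le_mul (hCK _) (hDb _) (norm_nonneg _) hK.le
    have s2 : Summable fun k : ℤ => ‖C (k - n, m - n) * D (l - k)‖ := by
      refine Summable.of_nonneg_of_le (fun _ => norm_nonneg _) (fun k => ?_)
        ((((shiftE n).mul_left K).mul_right K))
      calc ‖C (k - n, m - n) * D (l - k)‖ ≤ ‖C (k - n, m - n)‖ * ‖D (l - k)‖ := norm_mul_le _ _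
        _ ≤ (K * E (k - n)) * K := by
            apply mul_le_mul _ (hDK _) (norm_nonneg _)
              (mul_nonneg hK.le (hEpos _).le)
            refine le_trans (hCb _) ?_
            have : E (k - n) * E (m - n) ≤ E (k - n) * 1 :=
              mul_le_mul_of_nonneg_left (hE1 _) (hEpos _).le
            calc K * (E (k - n) * E (m - n)) ≤ K * (E (k - n) * 1) :=
                mul_le_mul_of_nonneg_left this hK.le
              _ = K * E (k - n) := by ring
    have s3 : Summable fun k : ℤ => ‖C (l - n, k - n) * D (m - k)‖ := by
      refine Summable.of_nonneg_of_le (fun _ => norm_nonneg _) (fun k => ?_)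
        ((((shiftE n).mul_left K).mul_right K))
      calc ‖C (l - n, k - n) * D (m - k)‖ ≤ ‖C (l - n, k - n)‖ * ‖D (m - k)‖ := norm_mul_le _ _
        _ ≤ (K * E (k - n)) * K := by
            apply mul_le_mul _ (hDK _) (norm_nonneg _)
              (mul_nonneg hK.le (hEpos _).le)
            refine le_trans (hCb _) ?_
            have : E (l - n) * E (k - n) ≤ 1 * E (k - n) :=
              mul_le_mul_of_nonneg_right (hE1 _) (hEpos _).le
            calc K * (E (l - n) * E (k - n)) ≤ K * (1 * E (k - n)) :=
                mul_le_mul_of_nonneg_left this hK.le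
              _ = K * E (k - n) := by ring
    refine ⟨s1,
      s2,
      s3, ?_⟩
    -- the coefficient function vanishes
    have hfn := (factor C D hCn hDn 1 1 (by simp) (by simp)).1
    have hzero : ∀ p : ℤ × ℤ, (∑' k : ℤ, C (p.1 - k, p.2 - k) * D k)
        - (∑' k : ℤ, C (k, p.2) * D (p.1 - k))
        - (∑' k : ℤ, C (p.1, k) * D (p.2 - k)) = 0 := by
      apply uniq2 _ hfn
      intro v w hv hw
      rw [(factor C D hCn hDn v w hv hw).2]
      exact hF v w hv hw
    have t1 : ∑' k : ℤ, C (l - k, m - k) * D (k - n)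
        = ∑' k : ℤ, C (l - n - k, m - n - k) * D k := by
      rw [← Equiv.tsum_eq (Equiv.addRight n) (fun k => C (l - k, m - k) * D (k - n))]
      apply tsum_congr
      intro k
      simp only [Equiv.coe_addRight]
      rw [show l - (k + n) = l - n - k by ring, show m - (k + n) = m - n - k by ring,
        add_sub_cancel_right]
    have t2 : ∑' k : ℤ, C (k - n, m - n) * D (l - k)
        = ∑' k : ℤ, C (k, m - n) * D (l - n - k) := by
      rw [← Equiv.tsum_eq (Equiv.addRight n) (fun k => C (k - n, m - n) * D (l - k))]
      apply tsum_congr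
      intro k
      simp only [Equiv.coe_addRight]
      rw [show l - (k + n) = l - n - k by ring, add_sub_cancel_right]
    have t3 : ∑' k : ℤ, C (l - n, k - n) * D (m - k)
        = ∑' k : ℤ, C (l - n, k) * D (m - n - k) := by
      rw [← Equiv.tsum_eq (Equiv.addRight n) (fun k => C (l - n, k - n) * D (m - k))]
      apply tsum_congr
      intro k
      simp only [Equiv.coe_addRight]
      rw [show m - (k + n) = m - n - k by ring, add_sub_cancel_right]
    rw [t1, t2, t3]
    have h0 := hzero (l - n, m - n)
    rw [sub_sub, sub_eq_zero] at h0
    exact h0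
end

section
/- Let C : ℤ × ℤ → ℂ be local, i.e. there exist K > 0 and r > 0 with |C(k,l)| ≤ K·exp(−r(|k|+|l|)) for all k, l ∈ ℤ. Then the associative law — for all l, m, n, k ∈ ℤ: Σ_{j∈ℤ} C(l−j, m−j) C(j−k, n−k) = Σ_{j∈ℤ} C(l−k, j−k) C(m−j, n−j), all series being absolutely convergent — holds if and only if Ĉ(v,w)·Ĉ(vw,z) = Ĉ(v,wz)·Ĉ(w,z) for all v, w, z ∈ ℂ with |v| = |w| = |z| = 1, where Ĉ(v,w) = Σ_{k,l∈ℤ} C(k,l) v^k w^l. -/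
open Complex Real MeasureTheory
set_option maxHeartbeats 1000000
set_option linter.unusedSectionVars false
set_option linter.unusedVariables false

lemma expz_summable {s : ℝ} (hs : 0 < s) :
    Summable (fun k : ℤ => Real.exp (-s * |(k : ℝ)|)) := by
  have hlt : Real.exp (-s) < 1 := by
    rw [Real.exp_lt_one_iff]; linarith
  have hgeo : Summable (fun n : ℕ => Real.exp (-s) ^ n) :=
    summable_geometric_of_lt_one (Real.exp_pos _).le hlt
  apply Summable.of_nat_of_neg
  · refine hgeo.congr fun n => ?_
    rw [← Real.exp_nat_mul]
    congr 1
    push_cast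
    rw [_root_.abs_of_nonneg (by positivity : (0:ℝ) ≤ (n:ℝ))]
    ring
  · refine hgeo.congr fun n => ?_
    rw [← Real.exp_nat_mul]
    congr 1
    push_cast
    rw [abs_neg, _root_.abs_of_nonneg (by positivity : (0:ℝ) ≤ (n:ℝ))]
    ring

noncomputable def AA (C : ℤ × ℤ → ℂ) (t : ℤ × ℤ × ℤ) : ℂ :=
  ∑' j : ℤ, C (t.1 - j, t.2.1 - j) * C (j, t.2.2)

noncomputable def BB (C : ℤ × ℤ → ℂ) (t : ℤ × ℤ × ℤ) : ℂ :=
  ∑' j : ℤ, C (t.1, j) * C (t.2.1 - j, t.2.2 - j)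

lemma tri (x y j : ℝ) : |x| + |y| + |j| ≤ 3 * (|x - j| + |y - j| + |j|) := by
  have h1 : |x| ≤ |x - j| + |j| := by
    calc |x| = |(x - j) + j| := by ring_nf
    _ ≤ |x - j| + |j| := abs_add_le _ _
  have h2 : |y| ≤ |y - j| + |j| := by
    calc |y| = |(y - j) + j| := by ring_nf
    _ ≤ |y - j| + |j| := abs_add_le _ _
  have h3 : 0 ≤ |x - j| := abs_nonneg _
  have h4 : 0 ≤ |y - j| := abs_nonneg _
  linarith

section
variable {C : ℤ × ℤ → ℂ} {K r : ℝ} (hK : 0 < K) (hr : 0 < r)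
  (hC : ∀ k l : ℤ, ‖C (k, l)‖ ≤ K * Real.exp (-r * (|(k:ℝ)| + |(l:ℝ)|)))

include hK hr hC

lemma normC_le (p : ℤ × ℤ) :
    ‖C p‖ ≤ K * (Real.exp (-r * |(p.1:ℝ)|) * Real.exp (-r * |(p.2:ℝ)|)) := by
  have h := hC p.1 p.2
  rw [← Real.exp_add,
    show -r * |(p.1:ℝ)| + -r * |(p.2:ℝ)| = -r * (|(p.1:ℝ)| + |(p.2:ℝ)|) by ring]
  simpa using h

lemma normC_leK (p : ℤ × ℤ) : ‖C p‖ ≤ K := by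
  have h := hC p.1 p.2
  have h2 : Real.exp (-r * (|(p.1:ℝ)| + |(p.2:ℝ)|)) ≤ 1 := by
    apply Real.exp_le_one_iff.mpr
    nlinarith [abs_nonneg ((p.1:ℝ)), abs_nonneg ((p.2:ℝ))]
  calc ‖C p‖ = ‖C (p.1, p.2)‖ := by rw [Prod.mk.eta]
  _ ≤ K * Real.exp (-r * (|(p.1:ℝ)| + |(p.2:ℝ)|)) := h
  _ ≤ K * 1 := mul_le_mul_of_nonneg_left h2 hK.le
  _ = K := mul_one K

lemma sumCnorm : Summable fun p : ℤ × ℤ => ‖C p‖ := by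
  refine Summable.of_nonneg_of_le (fun p => norm_nonneg _) (normC_le hK hr hC) ?_
  exact (((expz_summable hr).mul_of_nonneg (expz_summable hr)
    (fun _ => Real.exp_nonneg _) (fun _ => Real.exp_nonneg _))).mul_left K

lemma norm_term (v w : ℂ) (hv : ‖v‖ = 1) (hw : ‖w‖ = 1) (p : ℤ × ℤ) :
    ‖C p * v ^ p.1 * w ^ p.2‖ = ‖C p‖ := by
  simp [norm_mul, norm_zpow, hv, hw]

lemma sumF (v w : ℂ) (hv : ‖v‖ = 1) (hw : ‖w‖ = 1) :
    Summable fun p : ℤ × ℤ => ‖C p * v ^ p.1 * w ^ p.2‖ :=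
  (sumCnorm hK hr hC).congr fun p => (norm_term hK hr hC v w hv hw p).symm

lemma term1_bound (l m n j : ℤ) :
    ‖C (l - j, m - j) * C (j, n)‖ ≤
      K^2 * (Real.exp (-(r/3) * |(l:ℝ)|) * Real.exp (-(r/3) * |(m:ℝ)|) *
        Real.exp (-(r/3) * |(n:ℝ)|) * Real.exp (-(r/3) * |(j:ℝ)|)) := by
  have h1 := hC (l - j) (m - j)
  have h2 := hC j n
  have key : Real.exp (-r * (|((l - j : ℤ):ℝ)| + |((m - j : ℤ):ℝ)|)) *
      Real.exp (-r * (|(j:ℝ)| + |(n:ℝ)|)) ≤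
      Real.exp (-(r/3) * |(l:ℝ)|) * Real.exp (-(r/3) * |(m:ℝ)|) *
        Real.exp (-(r/3) * |(n:ℝ)|) * Real.exp (-(r/3) * |(j:ℝ)|) := by
    rw [← Real.exp_add, ← Real.exp_add, ← Real.exp_add, ← Real.exp_add]
    apply Real.exp_le_exp.mpr
    have ht := tri (l:ℝ) (m:ℝ) (j:ℝ)
    have hn : (0:ℝ) ≤ |(n:ℝ)| := abs_nonneg _
    push_cast
    nlinarith [abs_nonneg ((l:ℝ) - j), abs_nonneg ((m:ℝ) - j)]
  calc ‖C (l - j, m - j) * C (j, n)‖ = ‖C (l - j, m - j)‖ * ‖C (j, n)‖ := norm_mul _ _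
  _ ≤ (K * Real.exp (-r * (|((l - j : ℤ):ℝ)| + |((m - j : ℤ):ℝ)|))) *
      (K * Real.exp (-r * (|(j:ℝ)| + |(n:ℝ)|))) := by
    exact mul_le_mul h1 h2 (norm_nonneg _) (by positivity)
  _ ≤ _ := by
    rw [show (K * Real.exp (-r * (|((l - j : ℤ):ℝ)| + |((m - j : ℤ):ℝ)|))) *
      (K * Real.exp (-r * (|(j:ℝ)| + |(n:ℝ)|))) = K^2 * (Real.exp (-r * (|((l - j : ℤ):ℝ)| + |((m - j : ℤ):ℝ)|)) *
      Real.exp (-r * (|(j:ℝ)| + |(n:ℝ)|))) by ring]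
    have hK2 : (0:ℝ) ≤ K^2 := by positivity
    exact mul_le_mul_of_nonneg_left key hK2

end

section
variable {C : ℤ × ℤ → ℂ} {K r : ℝ} (hK : 0 < K) (hr : 0 < r)
  (hC : ∀ k l : ℤ, ‖C (k, l)‖ ≤ K * Real.exp (-r * (|(k:ℝ)| + |(l:ℝ)|)))
include hK hr hC

lemma sumJfirst (l m n k : ℤ) :
    Summable fun j : ℤ => ‖C (l - j, m - j) * C (j - k, n - k)‖ := by
  refine Summable.of_nonneg_of_le (fun j => norm_nonneg _) (fun j => ?_)
    ((expz_summable hr).mul_left (K^2 * Real.exp (r * |(l:ℝ)|)))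
  · 
    have h1 := hC (l - j) (m - j)
    have h2 := normC_leK hK hr hC (j - k, n - k)
    have hexp : Real.exp (-r * (|((l - j:ℤ):ℝ)| + |((m - j:ℤ):ℝ)|)) ≤
        Real.exp (r * |(l:ℝ)|) * Real.exp (-r * |(j:ℝ)|) := by
      rw [← Real.exp_add]
      apply Real.exp_le_exp.mpr
      have h5 : |(j:ℝ)| - |(l:ℝ)| ≤ |(l:ℝ) - (j:ℝ)| := by
        have := abs_sub_abs_le_abs_sub (j:ℝ) (l:ℝ)
        rwa [abs_sub_comm] at this
      push_cast
      have h6 := mul_le_mul_of_nonneg_left h5 hr.le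
      have h7 := mul_nonneg hr.le (abs_nonneg ((m:ℝ) - (j:ℝ)))
      nlinarith
    calc ‖C (l - j, m - j) * C (j - k, n - k)‖
        = ‖C (l - j, m - j)‖ * ‖C (j - k, n - k)‖ := norm_mul _ _
      _ ≤ (K * Real.exp (-r * (|((l - j:ℤ):ℝ)| + |((m - j:ℤ):ℝ)|))) * K :=
          mul_le_mul h1 h2 (norm_nonneg _) (by positivity)
      _ ≤ (K * (Real.exp (r * |(l:ℝ)|) * Real.exp (-r * |(j:ℝ)|))) * K := by
          have hKpos := hK.le
          gcongr
      _ = (K^2 * Real.exp (r * |(l:ℝ)|)) * Real.exp (-r * |(j:ℝ)|) := by ring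

lemma sumJsecond (l m n k : ℤ) :
    Summable fun j : ℤ => ‖C (l - k, j - k) * C (m - j, n - j)‖ := by
  refine Summable.of_nonneg_of_le (fun j => norm_nonneg _) (fun j => ?_)
    ((expz_summable hr).mul_left (K^2 * Real.exp (r * |(m:ℝ)|)))
  · 
    have h1 := hC (m - j) (n - j)
    have h2 := normC_leK hK hr hC (l - k, j - k)
    have hexp : Real.exp (-r * (|((m - j:ℤ):ℝ)| + |((n - j:ℤ):ℝ)|)) ≤
        Real.exp (r * |(m:ℝ)|) * Real.exp (-r * |(j:ℝ)|) := by
      rw [← Real.exp_add]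
      apply Real.exp_le_exp.mpr
      have h5 : |(j:ℝ)| - |(m:ℝ)| ≤ |(m:ℝ) - (j:ℝ)| := by
        have := abs_sub_abs_le_abs_sub (j:ℝ) (m:ℝ)
        rwa [abs_sub_comm] at this
      push_cast
      have h6 := mul_le_mul_of_nonneg_left h5 hr.le
      have h7 := mul_nonneg hr.le (abs_nonneg ((n:ℝ) - (j:ℝ)))
      nlinarith
    calc ‖C (l - k, j - k) * C (m - j, n - j)‖
        = ‖C (l - k, j - k)‖ * ‖C (m - j, n - j)‖ := norm_mul _ _
      _ ≤ K * (K * Real.exp (-r * (|((m - j:ℤ):ℝ)| + |((n - j:ℤ):ℝ)|))) :=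
          mul_le_mul h2 h1 (norm_nonneg _) hK.le
      _ ≤ K * (K * (Real.exp (r * |(m:ℝ)|) * Real.exp (-r * |(j:ℝ)|))) := by
          have hKpos := hK.le
          gcongr
      _ = (K^2 * Real.exp (r * |(m:ℝ)|)) * Real.exp (-r * |(j:ℝ)|) := by ring

lemma sumJ1 (l m n : ℤ) : Summable fun j : ℤ => ‖C (l - j, m - j) * C (j, n)‖ :=
  (sumJfirst hK hr hC l m n 0).congr fun j => by rw [sub_zero, sub_zero]

lemma sumJ2 (l m n : ℤ) : Summable fun j : ℤ => ‖C (l, j) * C (m - j, n - j)‖ :=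
  (sumJsecond hK hr hC l m n 0).congr fun j => by rw [sub_zero, sub_zero]
end

section
variable {C : ℤ × ℤ → ℂ} {K r : ℝ} (hK : 0 < K) (hr : 0 < r)
  (hC : ∀ k l : ℤ, ‖C (k, l)‖ ≤ K * Real.exp (-r * (|(k:ℝ)| + |(l:ℝ)|)))
include hK hr hC

lemma term2_bound (l m n j : ℤ) :
    ‖C (l, j) * C (m - j, n - j)‖ ≤
      K^2 * (Real.exp (-(r/3) * |(l:ℝ)|) * Real.exp (-(r/3) * |(m:ℝ)|) *
        Real.exp (-(r/3) * |(n:ℝ)|) * Real.exp (-(r/3) * |(j:ℝ)|)) := by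
  have h1 := hC l j
  have h2 := hC (m - j) (n - j)
  have key : Real.exp (-r * (|(l:ℝ)| + |(j:ℝ)|)) *
      Real.exp (-r * (|((m - j : ℤ):ℝ)| + |((n - j : ℤ):ℝ)|)) ≤
      Real.exp (-(r/3) * |(l:ℝ)|) * Real.exp (-(r/3) * |(m:ℝ)|) *
        Real.exp (-(r/3) * |(n:ℝ)|) * Real.exp (-(r/3) * |(j:ℝ)|) := by
    rw [← Real.exp_add, ← Real.exp_add, ← Real.exp_add, ← Real.exp_add]
    apply Real.exp_le_exp.mpr
    have ht := tri (m:ℝ) (n:ℝ) (j:ℝ)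
    have t1 := mul_le_mul_of_nonneg_left ht (by linarith : (0:ℝ) ≤ r/3)
    have t2 := mul_nonneg hr.le (abs_nonneg (l:ℝ))
    push_cast
    nlinarith
  calc ‖C (l, j) * C (m - j, n - j)‖ = ‖C (l, j)‖ * ‖C (m - j, n - j)‖ := norm_mul _ _
  _ ≤ (K * Real.exp (-r * (|(l:ℝ)| + |(j:ℝ)|))) *
      (K * Real.exp (-r * (|((m - j : ℤ):ℝ)| + |((n - j : ℤ):ℝ)|))) :=
    mul_le_mul h1 h2 (norm_nonneg _) (by positivity)
  _ ≤ _ := by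
    rw [show (K * Real.exp (-r * (|(l:ℝ)| + |(j:ℝ)|))) *
      (K * Real.exp (-r * (|((m - j : ℤ):ℝ)| + |((n - j : ℤ):ℝ)|))) =
      K^2 * (Real.exp (-r * (|(l:ℝ)| + |(j:ℝ)|)) *
      Real.exp (-r * (|((m - j : ℤ):ℝ)| + |((n - j : ℤ):ℝ)|))) by ring]
    exact mul_le_mul_of_nonneg_left key (by positivity)

lemma AAbound (t : ℤ × ℤ × ℤ) :
    ‖AA C t‖ ≤ (K^2 * ∑' j : ℤ, Real.exp (-(r/3) * |(j:ℝ)|)) *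
      (Real.exp (-(r/3) * |(t.1:ℝ)|) *
        (Real.exp (-(r/3) * |(t.2.1:ℝ)|) * Real.exp (-(r/3) * |(t.2.2:ℝ)|))) := by
  obtain ⟨l, m, n⟩ := t
  have hρ : (0:ℝ) < r/3 := by linarith
  have hS := expz_summable hρ
  calc ‖AA C (l, m, n)‖ ≤ ∑' j : ℤ, ‖C (l - j, m - j) * C (j, n)‖ :=
        norm_tsum_le_tsum_norm (sumJ1 hK hr hC l m n)
    _ ≤ ∑' j : ℤ, (K^2 * (Real.exp (-(r/3) * |(l:ℝ)|) *
          (Real.exp (-(r/3) * |(m:ℝ)|) * Real.exp (-(r/3) * |(n:ℝ)|)))) *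
          Real.exp (-(r/3) * |(j:ℝ)|) := by
        refine Summable.tsum_le_tsum (fun j => ?_) (sumJ1 hK hr hC l m n) (hS.mul_left _)
        exact (term1_bound hK hr hC l m n j).trans_eq (by ring)
    _ = _ := by rw [tsum_mul_left]; ring

lemma BBbound (t : ℤ × ℤ × ℤ) :
    ‖BB C t‖ ≤ (K^2 * ∑' j : ℤ, Real.exp (-(r/3) * |(j:ℝ)|)) *
      (Real.exp (-(r/3) * |(t.1:ℝ)|) *
        (Real.exp (-(r/3) * |(t.2.1:ℝ)|) * Real.exp (-(r/3) * |(t.2.2:ℝ)|))) := by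
  obtain ⟨l, m, n⟩ := t
  have hρ : (0:ℝ) < r/3 := by linarith
  have hS := expz_summable hρ
  calc ‖BB C (l, m, n)‖ ≤ ∑' j : ℤ, ‖C (l, j) * C (m - j, n - j)‖ :=
        norm_tsum_le_tsum_norm (sumJ2 hK hr hC l m n)
    _ ≤ ∑' j : ℤ, (K^2 * (Real.exp (-(r/3) * |(l:ℝ)|) *
          (Real.exp (-(r/3) * |(m:ℝ)|) * Real.exp (-(r/3) * |(n:ℝ)|)))) *
          Real.exp (-(r/3) * |(j:ℝ)|) := by
        refine Summable.tsum_le_tsum (fun j => ?_) (sumJ2 hK hr hC l m n) (hS.mul_left _)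
        exact (term2_bound hK hr hC l m n j).trans_eq (by ring)
    _ = _ := by rw [tsum_mul_left]; ring

lemma sum_e3 : Summable fun t : ℤ × ℤ × ℤ =>
    (K^2 * ∑' j : ℤ, Real.exp (-(r/3) * |(j:ℝ)|)) *
      (Real.exp (-(r/3) * |(t.1:ℝ)|) *
        (Real.exp (-(r/3) * |(t.2.1:ℝ)|) * Real.exp (-(r/3) * |(t.2.2:ℝ)|))) := by
  have hρ : (0:ℝ) < r/3 := by linarith
  have h1 : Summable fun q : ℤ × ℤ =>
      Real.exp (-(r/3) * |(q.1:ℝ)|) * Real.exp (-(r/3) * |(q.2:ℝ)|) :=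
    (expz_summable hρ).mul_of_nonneg (expz_summable hρ)
      (fun _ => Real.exp_nonneg _) (fun _ => Real.exp_nonneg _)
  have h2 : Summable fun t : ℤ × (ℤ × ℤ) =>
      Real.exp (-(r/3) * |(t.1:ℝ)|) *
        (Real.exp (-(r/3) * |(t.2.1:ℝ)|) * Real.exp (-(r/3) * |(t.2.2:ℝ)|)) :=
    (expz_summable hρ).mul_of_nonneg h1 (fun _ => Real.exp_nonneg _)
      (fun q => mul_nonneg (Real.exp_nonneg _) (Real.exp_nonneg _))
  exact h2.mul_left _

lemma sumAAnorm : Summable fun t : ℤ × ℤ × ℤ => ‖AA C t‖ :=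
  Summable.of_nonneg_of_le (fun t => norm_nonneg _) (AAbound hK hr hC) (sum_e3 hK hr hC)

lemma sumBBnorm : Summable fun t : ℤ × ℤ × ℤ => ‖BB C t‖ :=
  Summable.of_nonneg_of_le (fun t => norm_nonneg _) (BBbound hK hr hC) (sum_e3 hK hr hC)

end

def eA : ((ℤ × ℤ × ℤ) × ℤ) ≃ ((ℤ × ℤ) × (ℤ × ℤ)) where
  toFun u := ((u.1.1 - u.2, u.1.2.1 - u.2), (u.2, u.1.2.2))
  invFun q := ((q.1.1 + q.2.1, q.1.2 + q.2.1, q.2.2), q.2.1)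
  left_inv := by rintro ⟨⟨l, m, n⟩, j⟩; simp [Prod.ext_iff]
  right_inv := by rintro ⟨⟨a, b⟩, ⟨c, d⟩⟩; simp [Prod.ext_iff]

def eB : ((ℤ × ℤ × ℤ) × ℤ) ≃ ((ℤ × ℤ) × (ℤ × ℤ)) where
  toFun u := ((u.1.1, u.2), (u.1.2.1 - u.2, u.1.2.2 - u.2))
  invFun q := ((q.1.1, q.2.1 + q.1.2, q.2.2 + q.1.2), q.1.2)
  left_inv := by rintro ⟨⟨l, m, n⟩, j⟩; simp [Prod.ext_iff]
  right_inv := by rintro ⟨⟨a, b⟩, ⟨c, d⟩⟩; simp [Prod.ext_iff]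

section
variable {C : ℤ × ℤ → ℂ} {K r : ℝ} (hK : 0 < K) (hr : 0 < r)
  (hC : ∀ k l : ℤ, ‖C (k, l)‖ ≤ K * Real.exp (-r * (|(k:ℝ)| + |(l:ℝ)|)))
include hK hr hC

lemma rearrA (v w z : ℂ) (hv : ‖v‖ = 1) (hw : ‖w‖ = 1) (hz : ‖z‖ = 1) :
    (∑' p : ℤ × ℤ, C p * v ^ p.1 * w ^ p.2) *
      (∑' p : ℤ × ℤ, C p * (v * w) ^ p.1 * z ^ p.2) =
    ∑' t : ℤ × ℤ × ℤ, AA C t * (v ^ t.1 * (w ^ t.2.1 * z ^ t.2.2)) := by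
  have hv0 : v ≠ 0 := by intro h; rw [h] at hv; simp at hv
  have hw0 : w ≠ 0 := by intro h; rw [h] at hw; simp at hw
  have hvw : ‖v * w‖ = 1 := by rw [norm_mul, hv, hw, mul_one]
  have hFsum : Summable (fun q : (ℤ × ℤ) × (ℤ × ℤ) =>
      (C q.1 * v ^ q.1.1 * w ^ q.1.2) * (C q.2 * (v * w) ^ q.2.1 * z ^ q.2.2)) :=
    Summable.of_norm (Summable.mul_norm
      (f := fun p : ℤ × ℤ => C p * v ^ p.1 * w ^ p.2)
      (g := fun p : ℤ × ℤ => C p * (v * w) ^ p.1 * z ^ p.2)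
      (sumF hK hr hC v w hv hw) (sumF hK hr hC (v * w) z hvw hz))
  have pointwise : ∀ u : (ℤ × ℤ × ℤ) × ℤ,
      (C ((eA u).1) * v ^ ((eA u).1).1 * w ^ ((eA u).1).2) *
        (C ((eA u).2) * (v * w) ^ ((eA u).2).1 * z ^ ((eA u).2).2)
      = (C (u.1.1 - u.2, u.1.2.1 - u.2) * C (u.2, u.1.2.2)) *
        (v ^ u.1.1 * (w ^ u.1.2.1 * z ^ u.1.2.2)) := by
    rintro ⟨⟨l, m, n⟩, j⟩
    show (C (l - j, m - j) * v ^ (l - j) * w ^ (m - j)) *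
        (C (j, n) * (v * w) ^ j * z ^ n) = _
    have hvl : v ^ (l - j) * v ^ j = v ^ l := by
      rw [← zpow_add₀ hv0]; congr 1; omega
    have hwm : w ^ (m - j) * w ^ j = w ^ m := by
      rw [← zpow_add₀ hw0]; congr 1; omega
    calc (C (l - j, m - j) * v ^ (l - j) * w ^ (m - j)) *
        (C (j, n) * (v * w) ^ j * z ^ n)
        = (C (l - j, m - j) * C (j, n)) *
          ((v ^ (l - j) * v ^ j) * ((w ^ (m - j) * w ^ j) * z ^ n)) := by
          rw [mul_zpow]; ring
      _ = (C (l - j, m - j) * C (j, n)) * (v ^ l * (w ^ m * z ^ n)) := by rw [hvl, hwm]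
  have hGsum : Summable fun u : (ℤ × ℤ × ℤ) × ℤ =>
      (C (u.1.1 - u.2, u.1.2.1 - u.2) * C (u.2, u.1.2.2)) *
        (v ^ u.1.1 * (w ^ u.1.2.1 * z ^ u.1.2.2)) :=
    ((eA.summable_iff.mpr hFsum).congr pointwise)
  have step1 : (∑' p : ℤ × ℤ, C p * v ^ p.1 * w ^ p.2) *
      (∑' p : ℤ × ℤ, C p * (v * w) ^ p.1 * z ^ p.2)
      = ∑' q : (ℤ × ℤ) × (ℤ × ℤ),
          (C q.1 * v ^ q.1.1 * w ^ q.1.2) * (C q.2 * (v * w) ^ q.2.1 * z ^ q.2.2) :=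
    tsum_mul_tsum_of_summable_norm
      (f := fun p : ℤ × ℤ => C p * v ^ p.1 * w ^ p.2)
      (g := fun p : ℤ × ℤ => C p * (v * w) ^ p.1 * z ^ p.2)
      (sumF hK hr hC v w hv hw) (sumF hK hr hC (v * w) z hvw hz)
  have step2 : (∑' q : (ℤ × ℤ) × (ℤ × ℤ),
          (C q.1 * v ^ q.1.1 * w ^ q.1.2) * (C q.2 * (v * w) ^ q.2.1 * z ^ q.2.2))
      = ∑' u : (ℤ × ℤ × ℤ) × ℤ,
          (C (u.1.1 - u.2, u.1.2.1 - u.2) * C (u.2, u.1.2.2)) *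
            (v ^ u.1.1 * (w ^ u.1.2.1 * z ^ u.1.2.2)) :=
    ((eA.tsum_eq (fun q : (ℤ × ℤ) × (ℤ × ℤ) =>
      (C q.1 * v ^ q.1.1 * w ^ q.1.2) *
        (C q.2 * (v * w) ^ q.2.1 * z ^ q.2.2))).symm.trans (tsum_congr pointwise))
  have step3 : (∑' u : (ℤ × ℤ × ℤ) × ℤ,
          (C (u.1.1 - u.2, u.1.2.1 - u.2) * C (u.2, u.1.2.2)) *
            (v ^ u.1.1 * (w ^ u.1.2.1 * z ^ u.1.2.2)))
      = ∑' t : ℤ × ℤ × ℤ, ∑' j : ℤ,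
          (C (t.1 - j, t.2.1 - j) * C (j, t.2.2)) *
            (v ^ t.1 * (w ^ t.2.1 * z ^ t.2.2)) :=
    Summable.tsum_prod' hGsum (fun t =>
      ((Summable.of_norm (f := fun j : ℤ => C (t.1 - j, t.2.1 - j) * C (j, t.2.2))
        (sumJ1 hK hr hC t.1 t.2.1 t.2.2)).mul_right (v ^ t.1 * (w ^ t.2.1 * z ^ t.2.2))))
  have step4 : (∑' t : ℤ × ℤ × ℤ, ∑' j : ℤ,
          (C (t.1 - j, t.2.1 - j) * C (j, t.2.2)) *
            (v ^ t.1 * (w ^ t.2.1 * z ^ t.2.2)))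
      = ∑' t : ℤ × ℤ × ℤ, AA C t * (v ^ t.1 * (w ^ t.2.1 * z ^ t.2.2)) :=
    tsum_congr fun t => tsum_mul_right
  exact ((step1.trans step2).trans step3).trans step4

lemma rearrB (v w z : ℂ) (hv : ‖v‖ = 1) (hw : ‖w‖ = 1) (hz : ‖z‖ = 1) :
    (∑' p : ℤ × ℤ, C p * v ^ p.1 * (w * z) ^ p.2) *
      (∑' p : ℤ × ℤ, C p * w ^ p.1 * z ^ p.2) =
    ∑' t : ℤ × ℤ × ℤ, BB C t * (v ^ t.1 * (w ^ t.2.1 * z ^ t.2.2)) := by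
  have hw0 : w ≠ 0 := by intro h; rw [h] at hw; simp at hw
  have hz0 : z ≠ 0 := by intro h; rw [h] at hz; simp at hz
  have hwz : ‖w * z‖ = 1 := by rw [norm_mul, hw, hz, mul_one]
  have hFsum : Summable (fun q : (ℤ × ℤ) × (ℤ × ℤ) =>
      (C q.1 * v ^ q.1.1 * (w * z) ^ q.1.2) * (C q.2 * w ^ q.2.1 * z ^ q.2.2)) :=
    Summable.of_norm (Summable.mul_norm
      (f := fun p : ℤ × ℤ => C p * v ^ p.1 * (w * z) ^ p.2)
      (g := fun p : ℤ × ℤ => C p * w ^ p.1 * z ^ p.2)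
      (sumF hK hr hC v (w * z) hv hwz) (sumF hK hr hC w z hw hz))
  have pointwise : ∀ u : (ℤ × ℤ × ℤ) × ℤ,
      (C ((eB u).1) * v ^ ((eB u).1).1 * (w * z) ^ ((eB u).1).2) *
        (C ((eB u).2) * w ^ ((eB u).2).1 * z ^ ((eB u).2).2)
      = (C (u.1.1, u.2) * C (u.1.2.1 - u.2, u.1.2.2 - u.2)) *
        (v ^ u.1.1 * (w ^ u.1.2.1 * z ^ u.1.2.2)) := by
    rintro ⟨⟨l, m, n⟩, j⟩
    show (C (l, j) * v ^ l * (w * z) ^ j) *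
        (C (m - j, n - j) * w ^ (m - j) * z ^ (n - j)) = _
    have hwm : w ^ (m - j) * w ^ j = w ^ m := by
      rw [← zpow_add₀ hw0]; congr 1; omega
    have hzn : z ^ (n - j) * z ^ j = z ^ n := by
      rw [← zpow_add₀ hz0]; congr 1; omega
    calc (C (l, j) * v ^ l * (w * z) ^ j) *
        (C (m - j, n - j) * w ^ (m - j) * z ^ (n - j))
        = (C (l, j) * C (m - j, n - j)) *
          (v ^ l * ((w ^ (m - j) * w ^ j) * (z ^ (n - j) * z ^ j))) := by
          rw [mul_zpow]; ring
      _ = (C (l, j) * C (m - j, n - j)) * (v ^ l * (w ^ m * z ^ n)) := by rw [hwm, hzn]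
  have hGsum : Summable fun u : (ℤ × ℤ × ℤ) × ℤ =>
      (C (u.1.1, u.2) * C (u.1.2.1 - u.2, u.1.2.2 - u.2)) *
        (v ^ u.1.1 * (w ^ u.1.2.1 * z ^ u.1.2.2)) :=
    ((eB.summable_iff.mpr hFsum).congr pointwise)
  have step1 : (∑' p : ℤ × ℤ, C p * v ^ p.1 * (w * z) ^ p.2) *
      (∑' p : ℤ × ℤ, C p * w ^ p.1 * z ^ p.2)
      = ∑' q : (ℤ × ℤ) × (ℤ × ℤ),
          (C q.1 * v ^ q.1.1 * (w * z) ^ q.1.2) * (C q.2 * w ^ q.2.1 * z ^ q.2.2) :=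
    tsum_mul_tsum_of_summable_norm
      (f := fun p : ℤ × ℤ => C p * v ^ p.1 * (w * z) ^ p.2)
      (g := fun p : ℤ × ℤ => C p * w ^ p.1 * z ^ p.2)
      (sumF hK hr hC v (w * z) hv hwz) (sumF hK hr hC w z hw hz)
  have step2 : (∑' q : (ℤ × ℤ) × (ℤ × ℤ),
          (C q.1 * v ^ q.1.1 * (w * z) ^ q.1.2) * (C q.2 * w ^ q.2.1 * z ^ q.2.2))
      = ∑' u : (ℤ × ℤ × ℤ) × ℤ,
          (C (u.1.1, u.2) * C (u.1.2.1 - u.2, u.1.2.2 - u.2)) *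
            (v ^ u.1.1 * (w ^ u.1.2.1 * z ^ u.1.2.2)) :=
    ((eB.tsum_eq (fun q : (ℤ × ℤ) × (ℤ × ℤ) =>
      (C q.1 * v ^ q.1.1 * (w * z) ^ q.1.2) *
        (C q.2 * w ^ q.2.1 * z ^ q.2.2))).symm.trans (tsum_congr pointwise))
  have step3 : (∑' u : (ℤ × ℤ × ℤ) × ℤ,
          (C (u.1.1, u.2) * C (u.1.2.1 - u.2, u.1.2.2 - u.2)) *
            (v ^ u.1.1 * (w ^ u.1.2.1 * z ^ u.1.2.2)))
      = ∑' t : ℤ × ℤ × ℤ, ∑' j : ℤ,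
          (C (t.1, j) * C (t.2.1 - j, t.2.2 - j)) *
            (v ^ t.1 * (w ^ t.2.1 * z ^ t.2.2)) :=
    Summable.tsum_prod' hGsum (fun t =>
      ((Summable.of_norm (f := fun j : ℤ => C (t.1, j) * C (t.2.1 - j, t.2.2 - j))
        (sumJ2 hK hr hC t.1 t.2.1 t.2.2)).mul_right (v ^ t.1 * (w ^ t.2.1 * z ^ t.2.2))))
  have step4 : (∑' t : ℤ × ℤ × ℤ, ∑' j : ℤ,
          (C (t.1, j) * C (t.2.1 - j, t.2.2 - j)) *
            (v ^ t.1 * (w ^ t.2.1 * z ^ t.2.2)))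
      = ∑' t : ℤ × ℤ × ℤ, BB C t * (v ^ t.1 * (w ^ t.2.1 * z ^ t.2.2)) :=
    tsum_congr fun t => tsum_mul_right
  exact ((step1.trans step2).trans step3).trans step4

end

noncomputable def Gfun (a : ℤ → ℂ) (k n : ℤ) (θ : ℝ) : ℂ :=
  a n * Complex.exp ((((n : ℝ) - (k : ℝ)) * θ : ℝ) * Complex.I)

lemma Gfun_norm (a : ℤ → ℂ) (k n : ℤ) (θ : ℝ) : ‖Gfun a k n θ‖ = ‖a n‖ := by
  unfold Gfun
  rw [norm_mul]
  have h1 := Complex.norm_exp_ofReal_mul_I (((n : ℝ) - (k : ℝ)) * θ)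
  rw [h1, mul_one]

lemma Gfun_cont (a : ℤ → ℂ) (k n : ℤ) : Continuous (Gfun a k n) := by
  unfold Gfun
  exact continuous_const.mul (Complex.continuous_exp.comp
    ((Complex.continuous_ofReal.comp (continuous_const.mul continuous_id)).mul continuous_const))

lemma U1 (a : ℤ → ℂ) (ha : Summable fun n : ℤ => ‖a n‖)
    (h : ∀ v : ℂ, ‖v‖ = 1 → ∑' n : ℤ, a n * v ^ n = 0) : ∀ k, a k = 0 := by
  intro k
  have hpi : (0:ℝ) < 2 * Real.pi := by positivity
  have hint : ∀ n : ℤ, Integrable (Gfun a k n) (volume.restrict (Set.Ioc 0 (2 * Real.pi))) :=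
    fun n => (Gfun_cont a k n).integrableOn_Ioc
  have hvol : (volume (Set.Ioc (0:ℝ) (2 * Real.pi))).toReal = 2 * Real.pi := by
    rw [Real.volume_Ioc, sub_zero, ENNReal.toReal_ofReal hpi.le]
  have hnormint : ∀ n : ℤ, ∫ θ in Set.Ioc (0:ℝ) (2 * Real.pi), ‖Gfun a k n θ‖ = (2 * Real.pi) * ‖a n‖ := by
    intro n
    have : (fun θ : ℝ => ‖Gfun a k n θ‖) = fun _ : ℝ => ‖a n‖ := funext (Gfun_norm a k n)
    rw [this, setIntegral_const, measureReal_def, hvol, smul_eq_mul]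
  have hsumint : Summable fun n : ℤ => ∫ θ in Set.Ioc (0:ℝ) (2 * Real.pi), ‖Gfun a k n θ‖ := by
    refine Summable.congr (ha.mul_left (2 * Real.pi)) fun n => (hnormint n).symm
  have key : ∑' n : ℤ, ∫ θ in Set.Ioc (0:ℝ) (2 * Real.pi), Gfun a k n θ
      = ∫ θ in Set.Ioc (0:ℝ) (2 * Real.pi), ∑' n : ℤ, Gfun a k n θ :=
    integral_tsum_of_summable_integral_norm hint hsumint
  -- the integrand on the right is identically zero
  have hzero : ∀ θ : ℝ, ∑' n : ℤ, Gfun a k n θ = 0 := by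
    intro θ
    have hv : ‖Complex.exp ((θ:ℂ) * Complex.I)‖ = 1 := by
      exact Complex.norm_exp_ofReal_mul_I θ
    have hpt : ∀ n : ℤ, Gfun a k n θ
        = (a n * (Complex.exp ((θ:ℂ) * Complex.I)) ^ n) *
            Complex.exp ((-(k : ℝ) * θ : ℝ) * Complex.I) := by
      intro n
      unfold Gfun
      rw [mul_assoc]
      congr 1
      rw [← Complex.exp_int_mul, ← Complex.exp_add]
      congr 1
      push_cast
      ring
    calc ∑' n : ℤ, Gfun a k n θ
        = ∑' n : ℤ, (a n * (Complex.exp ((θ:ℂ) * Complex.I)) ^ n) *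
            Complex.exp ((-(k : ℝ) * θ : ℝ) * Complex.I) := tsum_congr hpt
      _ = (∑' n : ℤ, a n * (Complex.exp ((θ:ℂ) * Complex.I)) ^ n) *
            Complex.exp ((-(k : ℝ) * θ : ℝ) * Complex.I) := tsum_mul_right
      _ = 0 := by rw [h _ hv, zero_mul]
  have hR : ∫ θ in Set.Ioc (0:ℝ) (2 * Real.pi), ∑' n : ℤ, Gfun a k n θ = 0 := by
    simp only [hzero, integral_zero]
  -- compute the individual integrals
  have hIk : ∫ θ in Set.Ioc (0:ℝ) (2 * Real.pi), Gfun a k k θ = (2 * Real.pi) * a k := by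
    have : (fun θ : ℝ => Gfun a k k θ) = fun _ : ℝ => a k := by
      funext θ
      unfold Gfun
      simp
    rw [this, setIntegral_const, measureReal_def, hvol]
    rw [Complex.real_smul]
    push_cast
    ring
  have hIn : ∀ n : ℤ, n ≠ k → ∫ θ in Set.Ioc (0:ℝ) (2 * Real.pi), Gfun a k n θ = 0 := by
    intro n hn
    have hc : ((n : ℂ) - (k : ℂ)) * Complex.I ≠ 0 := by
      apply mul_ne_zero
      · intro hc0
        have : (n : ℂ) = (k : ℂ) := by linear_combination hc0
        exact hn (by exact_mod_cast this)
      · exact Complex.I_ne_zero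
    have hGint : ∀ θ : ℝ, Gfun a k n θ = a n * Complex.exp ((((n : ℂ) - (k : ℂ)) * Complex.I) * (θ:ℂ)) := by
      intro θ
      unfold Gfun
      congr 1
      congr 1
      push_cast
      ring
    have hI0 : ∫ θ in Set.Ioc (0:ℝ) (2 * Real.pi),
        Complex.exp ((((n : ℂ) - (k : ℂ)) * Complex.I) * (θ:ℂ)) = 0 := by
      rw [← intervalIntegral.integral_of_le hpi.le, integral_exp_mul_complex hc]
      have h2 : Complex.exp ((((n : ℂ) - (k : ℂ)) * Complex.I) * ((2 * Real.pi : ℝ):ℂ)) = 1 := by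
        have := Complex.exp_int_mul_two_pi_mul_I (n - k)
        rw [← this]
        congr 1
        push_cast
        ring
      rw [h2]
      simp
    calc ∫ θ in Set.Ioc (0:ℝ) (2 * Real.pi), Gfun a k n θ
        = ∫ θ in Set.Ioc (0:ℝ) (2 * Real.pi),
            a n * Complex.exp ((((n : ℂ) - (k : ℂ)) * Complex.I) * (θ:ℂ)) := by
          simp only [hGint]
      _ = a n * ∫ θ in Set.Ioc (0:ℝ) (2 * Real.pi),
            Complex.exp ((((n : ℂ) - (k : ℂ)) * Complex.I) * (θ:ℂ)) :=
          integral_const_mul _ _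
      _ = 0 := by rw [hI0, mul_zero]
  have hL : ∑' n : ℤ, ∫ θ in Set.Ioc (0:ℝ) (2 * Real.pi), Gfun a k n θ = (2 * Real.pi) * a k := by
    rw [tsum_eq_single k (fun n hn => hIn n hn), hIk]
  have h0 : (2 * (Real.pi:ℂ)) * a k = 0 := hL.symm.trans (key.trans hR)
  have hpi2 : (2 * (Real.pi:ℂ)) ≠ 0 :=
    mul_ne_zero two_ne_zero (by exact_mod_cast Real.pi_ne_zero)
  exact (mul_eq_zero.mp h0).resolve_left hpi2

lemma normut (x : ℂ) {v w : ℂ} (hv : ‖v‖ = 1) (hw : ‖w‖ = 1) (i j : ℤ) :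
    ‖x * v ^ i * w ^ j‖ = ‖x‖ := by
  rw [norm_mul, norm_mul, norm_zpow, norm_zpow, hv, hw, one_zpow, one_zpow, mul_one, mul_one]

lemma normut3 (x : ℂ) {v w z : ℂ} (hv : ‖v‖ = 1) (hw : ‖w‖ = 1) (hz : ‖z‖ = 1)
    (i j k : ℤ) : ‖x * (v ^ i * (w ^ j * z ^ k))‖ = ‖x‖ := by
  rw [norm_mul, norm_mul, norm_mul, norm_zpow, norm_zpow, norm_zpow, hv, hw, hz,
    one_zpow, one_zpow, one_zpow, one_mul, one_mul, mul_one]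

lemma U2 (d : ℤ × ℤ → ℂ) (hd : Summable fun q : ℤ × ℤ => ‖d q‖)
    (h : ∀ w z : ℂ, ‖w‖ = 1 → ‖z‖ = 1 → ∑' q : ℤ × ℤ, d q * w ^ q.1 * z ^ q.2 = 0) :
    ∀ q, d q = 0 := by
  have hcomp := (summable_prod_of_nonneg (f := fun q : ℤ × ℤ => ‖d q‖)
    (fun _ => norm_nonneg _)).mp hd
  have inner0 : ∀ z : ℂ, ‖z‖ = 1 → ∀ m : ℤ, (∑' n : ℤ, d (m, n) * z ^ n) = 0 := by
    intro z hz
    apply U1 (fun m => ∑' n : ℤ, d (m, n) * z ^ n)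
    · refine Summable.of_nonneg_of_le (fun m => norm_nonneg _) (fun m => ?_) hcomp.2
      calc ‖∑' n : ℤ, d (m, n) * z ^ n‖
          ≤ ∑' n : ℤ, ‖d (m, n) * z ^ n‖ :=
            norm_tsum_le_tsum_norm ((hcomp.1 m).congr fun n => by
              rw [norm_mul, norm_zpow, hz, one_zpow, mul_one])
        _ = ∑' n : ℤ, ‖d (m, n)‖ := tsum_congr fun n => by
              rw [norm_mul, norm_zpow, hz, one_zpow, mul_one]
    · intro w hw
      have hq : Summable fun q : ℤ × ℤ => d q * w ^ q.1 * z ^ q.2 :=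
        Summable.of_norm (f := fun q : ℤ × ℤ => d q * w ^ q.1 * z ^ q.2)
          (hd.congr fun q => (normut (d q) hw hz q.1 q.2).symm)
      have hinner : ∀ m : ℤ, Summable fun n : ℤ => d (m, n) * w ^ m * z ^ n :=
        fun m => Summable.of_norm (f := fun n : ℤ => d (m, n) * w ^ m * z ^ n)
          ((hcomp.1 m).congr fun n => (normut (d (m, n)) hw hz m n).symm)
      have hps := Summable.tsum_prod' hq hinner
      calc ∑' m : ℤ, (∑' n : ℤ, d (m, n) * z ^ n) * w ^ m
          = ∑' m : ℤ, ∑' n : ℤ, d (m, n) * w ^ m * z ^ n := by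
            refine tsum_congr fun m => ?_
            rw [← tsum_mul_right]
            exact tsum_congr fun n => by ring
        _ = ∑' q : ℤ × ℤ, d q * w ^ q.1 * z ^ q.2 := hps.symm
        _ = 0 := h w z hw hz
  intro q
  obtain ⟨m0, n0⟩ := q
  exact U1 (fun n => d (m0, n)) (hcomp.1 m0) (fun z hz => inner0 z hz m0) n0

lemma U3 (d : ℤ × ℤ × ℤ → ℂ) (hd : Summable fun t : ℤ × ℤ × ℤ => ‖d t‖)
    (h : ∀ v w z : ℂ, ‖v‖ = 1 → ‖w‖ = 1 → ‖z‖ = 1 →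
      ∑' t : ℤ × ℤ × ℤ, d t * (v ^ t.1 * (w ^ t.2.1 * z ^ t.2.2)) = 0) :
    ∀ t, d t = 0 := by
  have hcomp := (summable_prod_of_nonneg (f := fun t : ℤ × (ℤ × ℤ) => ‖d t‖)
    (fun _ => norm_nonneg _)).mp hd
  have inner0 : ∀ w z : ℂ, ‖w‖ = 1 → ‖z‖ = 1 → ∀ l : ℤ,
      (∑' q : ℤ × ℤ, d (l, q) * w ^ q.1 * z ^ q.2) = 0 := by
    intro w z hw hz
    apply U1 (fun l => ∑' q : ℤ × ℤ, d (l, q) * w ^ q.1 * z ^ q.2)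
    · refine Summable.of_nonneg_of_le (fun l => norm_nonneg _) (fun l => ?_) hcomp.2
      calc ‖∑' q : ℤ × ℤ, d (l, q) * w ^ q.1 * z ^ q.2‖
          ≤ ∑' q : ℤ × ℤ, ‖d (l, q) * w ^ q.1 * z ^ q.2‖ :=
            norm_tsum_le_tsum_norm ((hcomp.1 l).congr fun q =>
              (normut (d (l, q)) hw hz q.1 q.2).symm)
        _ = ∑' q : ℤ × ℤ, ‖d (l, q)‖ :=
            tsum_congr fun q => normut (d (l, q)) hw hz q.1 q.2
    · intro v hv
      have hq : Summable fun t : ℤ × (ℤ × ℤ) =>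
          d t * (v ^ t.1 * (w ^ t.2.1 * z ^ t.2.2)) :=
        Summable.of_norm (f := fun t : ℤ × (ℤ × ℤ) =>
            d t * (v ^ t.1 * (w ^ t.2.1 * z ^ t.2.2)))
          (hd.congr fun t => (normut3 (d t) hv hw hz t.1 t.2.1 t.2.2).symm)
      have hinner : ∀ l : ℤ, Summable fun q : ℤ × ℤ =>
          d (l, q) * (v ^ l * (w ^ q.1 * z ^ q.2)) :=
        fun l => Summable.of_norm (f := fun q : ℤ × ℤ =>
            d (l, q) * (v ^ l * (w ^ q.1 * z ^ q.2)))
          ((hcomp.1 l).congr fun q => (normut3 (d (l, q)) hv hw hz l q.1 q.2).symm)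
      have hps := Summable.tsum_prod' hq hinner
      calc ∑' l : ℤ, (∑' q : ℤ × ℤ, d (l, q) * w ^ q.1 * z ^ q.2) * v ^ l
          = ∑' l : ℤ, ∑' q : ℤ × ℤ, d (l, q) * (v ^ l * (w ^ q.1 * z ^ q.2)) := by
            refine tsum_congr fun l => ?_
            rw [← tsum_mul_right]
            exact tsum_congr fun q => by ring
        _ = ∑' t : ℤ × ℤ × ℤ, d t * (v ^ t.1 * (w ^ t.2.1 * z ^ t.2.2)) := hps.symm
        _ = 0 := h v w z hv hw hz
  intro t
  obtain ⟨l0, q0⟩ := t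
  exact U2 (fun q => d (l0, q)) (hcomp.1 l0) (fun w z hw hz => inner0 w z hw hz l0) q0


/-- For a local `C`, the lattice associative law (with all series
absolutely convergent) holds iff the Fourier transform satisfies the cocycle
equation `Ĉ(v,w)·Ĉ(vw,z) = Ĉ(v,wz)·Ĉ(w,z)` on the unit torus. -/
theorem stmt_4 (C : ℤ × ℤ → ℂ) (K r : ℝ) (hK : 0 < K) (hr : 0 < r)
    (hC : ∀ k l : ℤ,
      ‖C (k, l)‖ ≤ K * Real.exp (-r * ((|k| : ℝ) + (|l| : ℝ)))) :
    (∀ l m n k : ℤ,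
      (Summable fun j : ℤ => ‖C (l - j, m - j) * C (j - k, n - k)‖) ∧
      (Summable fun j : ℤ => ‖C (l - k, j - k) * C (m - j, n - j)‖) ∧
      ∑' j : ℤ, C (l - j, m - j) * C (j - k, n - k) =
        ∑' j : ℤ, C (l - k, j - k) * C (m - j, n - j)) ↔
    (∀ v w z : ℂ, ‖v‖ = 1 → ‖w‖ = 1 → ‖z‖ = 1 →
      (∑' p : ℤ × ℤ, C p * v ^ p.1 * w ^ p.2) *
          (∑' p : ℤ × ℤ, C p * (v * w) ^ p.1 * z ^ p.2) =
        (∑' p : ℤ × ℤ, C p * v ^ p.1 * (w * z) ^ p.2) *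
          ∑' p : ℤ × ℤ, C p * w ^ p.1 * z ^ p.2) := by
  have hC' : ∀ k l : ℤ, ‖C (k, l)‖ ≤ K * Real.exp (-r * (|(k:ℝ)| + |(l:ℝ)|)) := by
    intro k l
    have h := hC k l
    exact h
  constructor
  · -- associativity ⇒ cocycle
    intro H v w z hv hw hz
    have hv' : ‖v‖ = 1 := by exact hv
    have hw' : ‖w‖ = 1 := by exact hw
    have hz' : ‖z‖ = 1 := by exact hz
    rw [rearrA hK hr hC' v w z hv' hw' hz', rearrB hK hr hC' v w z hv' hw' hz']
    refine tsum_congr fun t => ?_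
    have h := (H t.1 t.2.1 t.2.2 0).2.2
    simp only [sub_zero] at h
    have hAB : AA C t = BB C t := h
    rw [hAB]
  · -- cocycle ⇒ associativity
    intro H l m n k
    have hS1 := sumJfirst hK hr hC' l m n k
    have hS2 := sumJsecond hK hr hC' l m n k
    refine ⟨hS1,
      hS2, ?_⟩
    -- the difference of the two double-sum kernels vanishes identically
    have hDsum : Summable fun t : ℤ × ℤ × ℤ => ‖AA C t - BB C t‖ :=
      Summable.of_nonneg_of_le (fun t => norm_nonneg _)
        (fun t => norm_sub_le _ _) ((sumAAnorm hK hr hC').add (sumBBnorm hK hr hC'))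
    have hDzero : ∀ v w z : ℂ, ‖v‖ = 1 → ‖w‖ = 1 → ‖z‖ = 1 →
        ∑' t : ℤ × ℤ × ℤ, (AA C t - BB C t) *
          (v ^ t.1 * (w ^ t.2.1 * z ^ t.2.2)) = 0 := by
      intro v w z hv hw hz
      have hA : Summable fun t : ℤ × ℤ × ℤ =>
          AA C t * (v ^ t.1 * (w ^ t.2.1 * z ^ t.2.2)) :=
        Summable.of_norm (f := fun t : ℤ × ℤ × ℤ =>
            AA C t * (v ^ t.1 * (w ^ t.2.1 * z ^ t.2.2)))
          ((sumAAnorm hK hr hC').congr fun t =>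
            (normut3 (AA C t) hv hw hz t.1 t.2.1 t.2.2).symm)
      have hB : Summable fun t : ℤ × ℤ × ℤ =>
          BB C t * (v ^ t.1 * (w ^ t.2.1 * z ^ t.2.2)) :=
        Summable.of_norm (f := fun t : ℤ × ℤ × ℤ =>
            BB C t * (v ^ t.1 * (w ^ t.2.1 * z ^ t.2.2)))
          ((sumBBnorm hK hr hC').congr fun t =>
            (normut3 (BB C t) hv hw hz t.1 t.2.1 t.2.2).symm)
      have hsplit : ∑' t : ℤ × ℤ × ℤ, (AA C t - BB C t) *
            (v ^ t.1 * (w ^ t.2.1 * z ^ t.2.2))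
          = ∑' t : ℤ × ℤ × ℤ, (AA C t * (v ^ t.1 * (w ^ t.2.1 * z ^ t.2.2)) -
              BB C t * (v ^ t.1 * (w ^ t.2.1 * z ^ t.2.2))) :=
        tsum_congr fun t => by ring
      rw [hsplit, Summable.tsum_sub hA hB,
        ← rearrA hK hr hC' v w z hv hw hz, ← rearrB hK hr hC' v w z hv hw hz]
      have habs := H v w z (by exact hv)
        (by exact hw)
        (by exact hz)
      exact sub_eq_zero.mpr habs
    have hD := U3 (fun t => AA C t - BB C t) hDsum hDzero
    have hABeq : ∀ t : ℤ × ℤ × ℤ, AA C t = BB C t := fun t => sub_eq_zero.mp (hD t)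
    have e1 : ∑' j : ℤ, C (l - j, m - j) * C (j - k, n - k)
        = AA C (l - k, m - k, n - k) := by
      show _ = ∑' i : ℤ, C (l - k - i, m - k - i) * C (i, n - k)
      rw [← (Equiv.subRight k).tsum_eq (fun i : ℤ => C (l - k - i, m - k - i) * C (i, n - k))]
      refine tsum_congr fun j => ?_
      show C (l - j, m - j) * C (j - k, n - k)
          = C (l - k - (j - k), m - k - (j - k)) * C (j - k, n - k)
      rw [show l - k - (j - k) = l - j by ring, show m - k - (j - k) = m - j by ring]
    have e2 : ∑' j : ℤ, C (l - k, j - k) * C (m - j, n - j)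
        = BB C (l - k, m - k, n - k) := by
      show _ = ∑' i : ℤ, C (l - k, i) * C (m - k - i, n - k - i)
      rw [← (Equiv.subRight k).tsum_eq (fun i : ℤ => C (l - k, i) * C (m - k - i, n - k - i))]
      refine tsum_congr fun j => ?_
      show C (l - k, j - k) * C (m - j, n - j)
          = C (l - k, j - k) * C (m - k - (j - k), n - k - (j - k))
      rw [show m - k - (j - k) = m - j by ring, show n - k - (j - k) = n - j by ring]
    rw [e1, e2]
    exact hABeq _
end

section
/- Let 0 < ε < 1 and let A = {z ∈ ℂ : 1−ε < |z| < 1+ε}. Suppose Ĉ is analytic (jointly holomorphic) on A × A, not identically zero, and satisfies the cocycle equation Ĉ(v,w)·Ĉ(vw,z) = Ĉ(v,wz)·Ĉ(w,z) for all v, w, z ∈ A such that vw ∈ A and wz ∈ A. Then there exists a nonzero constant α ∈ ℂ such that Ĉ(1,z) = α for all z ∈ A and Ĉ(v,1) = α for all v ∈ A. -/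
/-- The annulus `1-ε < |z| < 1+ε` around the unit circle. -/
def annulus (ε : ℝ) : Set ℂ := {z : ℂ | 1 - ε < ‖z‖ ∧ ‖z‖ < 1 + ε}

lemma annulus_isOpen (ε : ℝ) : IsOpen (annulus ε) :=
  isOpen_Ioo.preimage continuous_norm

lemma annulus_preconnected {ε : ℝ} (hε0 : 0 < ε) (hε1 : ε < 1) :
    IsPreconnected (annulus ε) := by
  have himg : annulus ε =
      (fun p : ℝ × ℝ => (p.1 : ℂ) * Complex.exp ((p.2 : ℂ) * Complex.I)) ''
        (Set.Ioo (1 - ε) (1 + ε) ×ˢ (Set.univ : Set ℝ)) := by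
    ext z
    constructor
    · intro hz
      exact ⟨(‖z‖, Complex.arg z), Set.mk_mem_prod ⟨hz.1, hz.2⟩ (Set.mem_univ _),
        Complex.norm_mul_exp_arg_mul_I z⟩
    · rintro ⟨⟨r, θ⟩, ⟨hr, -⟩, rfl⟩
      have hr0 : (0:ℝ) < r := by have := hr.1; linarith
      have habs : ‖(r : ℂ) * Complex.exp ((θ : ℂ) * Complex.I)‖ = r := by
        rw [norm_mul, Complex.norm_exp_ofReal_mul_I, mul_one, Complex.norm_real,
          Real.norm_eq_abs, abs_of_pos hr0]
      exact ⟨by rw [habs]; exact hr.1, by rw [habs]; exact hr.2⟩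
  rw [himg]
  apply (isPreconnected_Ioo.prod isPreconnected_univ).image
  apply Continuous.continuousOn
  exact (Complex.continuous_ofReal.comp continuous_fst).mul
    (Complex.continuous_exp.comp
      ((Complex.continuous_ofReal.comp continuous_snd).mul continuous_const))

/-- A nontrivial holomorphic solution of the cocycle equation on
the polyannulus has `Ĉ(1,·)` and `Ĉ(·,1)` equal to one and the same nonzero
constant. -/
theorem stmt_5 (ε : ℝ) (hε0 : 0 < ε) (hε1 : ε < 1) (Chat : ℂ × ℂ → ℂ)
    (hol : AnalyticOnNhd ℂ Chat (annulus ε ×ˢ annulus ε))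
    (hnz : ∃ p ∈ annulus ε ×ˢ annulus ε, Chat p ≠ 0)
    (hcocycle : ∀ v ∈ annulus ε, ∀ w ∈ annulus ε, ∀ z ∈ annulus ε,
      v * w ∈ annulus ε → w * z ∈ annulus ε →
      Chat (v, w) * Chat (v * w, z) = Chat (v, w * z) * Chat (w, z)) :
    ∃ α : ℂ, α ≠ 0 ∧ (∀ z ∈ annulus ε, Chat (1, z) = α) ∧
      ∀ v ∈ annulus ε, Chat (v, 1) = α := by
  have hopen : IsOpen (annulus ε) := annulus_isOpen ε
  have hconn : IsPreconnected (annulus ε) := annulus_preconnected hε0 hε1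
  have hmem1 : ∀ w : ℂ, ‖w‖ = 1 → w ∈ annulus ε := by
    intro w hw
    exact ⟨by rw [hw]; linarith, by rw [hw]; linarith⟩
  have h1 : (1:ℂ) ∈ annulus ε := hmem1 1 (by simp)
  obtain ⟨⟨v₀, z₀⟩, hmem, hC0⟩ := hnz
  have hv₀ : v₀ ∈ annulus ε := hmem.1
  have hz₀ : z₀ ∈ annulus ε := hmem.2
  -- slice analyticity
  have sliceR : ∀ v ∈ annulus ε, AnalyticOnNhd ℂ (fun z => Chat (v, z)) (annulus ε) := by
    intro v hv
    exact hol.comp₂ analyticOnNhd_const analyticOnNhd_id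
      (fun z hz => Set.mk_mem_prod hv hz)
  have sliceL : ∀ w ∈ annulus ε, AnalyticOnNhd ℂ (fun v => Chat (v, w)) (annulus ε) := by
    intro w hw
    exact hol.comp₂ analyticOnNhd_id analyticOnNhd_const
      (fun v hv => Set.mk_mem_prod hv hw)
  -- the basic relation from w = 1
  have key : ∀ v ∈ annulus ε, ∀ z ∈ annulus ε,
      Chat (v, 1) * Chat (v, z) = Chat (v, z) * Chat (1, z) := by
    intro v hv z hz
    have h := hcocycle v hv 1 h1 z hz (by rwa [mul_one]) (by rwa [one_mul])
    rwa [mul_one, one_mul] at h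
  set α := Chat (1, z₀) with hα
  have hv01 : Chat (v₀, 1) = α := by
    have h := key v₀ hv₀ z₀ hz₀
    exact mul_right_cancel₀ hC0 (by rw [h, mul_comm])
  -- Chat (1, ·) ≡ α
  have hg : ∀ z ∈ annulus ε, Chat (1, z) = α := by
    have hana : AnalyticOnNhd ℂ (fun z => Chat (1, z) - α) (annulus ε) :=
      (sliceR 1 h1).sub analyticOnNhd_const
    have hev : (fun z => Chat (1, z) - α) =ᶠ[nhds z₀] 0 := by
      have hEvz : ∀ᶠ z in nhds z₀, z ∈ annulus ε ∧ Chat (v₀, z) ≠ 0 :=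
        (hopen.eventually_mem hz₀).and
          (((sliceR v₀ hv₀ z₀ hz₀).continuousAt).eventually_ne hC0)
      filter_upwards [hEvz] with z hz
      obtain ⟨hzA, hzne⟩ := hz
      have h := key v₀ hv₀ z hzA
      rw [hv01] at h
      have : Chat (1, z) = α := by
        apply mul_left_cancel₀ hzne
        rw [← h, mul_comm]
      simp [this]
    have hEq := hana.eqOn_zero_of_preconnected_of_eventuallyEq_zero hconn hz₀ hev
    intro z hz
    have h0 := hEq hz
    simpa [sub_eq_zero] using h0
  -- Chat (·, 1) ≡ α
  have hf : ∀ v ∈ annulus ε, Chat (v, 1) = α := by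
    have hana : AnalyticOnNhd ℂ (fun v => Chat (v, 1) - α) (annulus ε) :=
      (sliceL 1 h1).sub analyticOnNhd_const
    have hev : (fun v => Chat (v, 1) - α) =ᶠ[nhds v₀] 0 := by
      have hEvv : ∀ᶠ v in nhds v₀, v ∈ annulus ε ∧ Chat (v, z₀) ≠ 0 :=
        (hopen.eventually_mem hv₀).and
          (((sliceL z₀ hz₀ v₀ hv₀).continuousAt).eventually_ne hC0)
      filter_upwards [hEvv] with v hv
      obtain ⟨hvA, hvne⟩ := hv
      have h := key v hvA z₀ hz₀
      have : Chat (v, 1) = α := by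
        apply mul_right_cancel₀ hvne
        rw [h, mul_comm]
      simp [this]
    have hEq := hana.eqOn_zero_of_preconnected_of_eventuallyEq_zero hconn hv₀ hev
    intro v hv
    have h0 := hEq hv
    simpa [sub_eq_zero] using h0
  -- α ≠ 0
  have hαne : α ≠ 0 := by
    intro hα0
    -- dichotomy on the unit circle
    have hdich : ∀ w : ℂ, ‖w‖ = 1 →
        (∀ v ∈ annulus ε, Chat (v, w) = 0) ∨ (∀ v ∈ annulus ε, Chat (v, w⁻¹) = 0) := by
      intro w hw
      have hwA := hmem1 w hw
      have hw0 : w ≠ 0 := by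
        intro h; rw [h] at hw; simp at hw
      have hwi : ‖w⁻¹‖ = 1 := by rw [norm_inv, hw]; norm_num
      have hwiA := hmem1 _ hwi
      have hmul : ∀ v ∈ annulus ε, v * w ∈ annulus ε := by
        intro v hv
        have habs : ‖v * w‖ = ‖v‖ := by
          rw [norm_mul, hw, mul_one]
        exact ⟨by rw [habs]; exact hv.1, by rw [habs]; exact hv.2⟩
      have hmuli : ∀ v ∈ annulus ε, v * w⁻¹ ∈ annulus ε := by
        intro v hv
        have habs : ‖v * w⁻¹‖ = ‖v‖ := by
          rw [norm_mul, hwi, mul_one]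
        exact ⟨by rw [habs]; exact hv.1, by rw [habs]; exact hv.2⟩
      have hprod : ∀ v ∈ annulus ε, Chat (v, w) * Chat (v * w, w⁻¹) = 0 := by
        intro v hv
        have hwwi : w * w⁻¹ = 1 := mul_inv_cancel₀ hw0
        have h := hcocycle v hv w hwA w⁻¹ hwiA (hmul v hv) (by rw [hwwi]; exact h1)
        rw [hwwi] at h
        rw [h, hf v hv, hα0, zero_mul]
      by_contra hcon
      push_neg at hcon
      obtain ⟨⟨v₁, hv₁, hv₁ne⟩, ⟨u₁, hu₁, hu₁ne⟩⟩ := hcon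
      have hg₂ana : AnalyticOnNhd ℂ (fun v => Chat (v * w, w⁻¹)) (annulus ε) :=
        hol.comp₂ (analyticOnNhd_id.mul analyticOnNhd_const) analyticOnNhd_const
          (fun v hv => Set.mk_mem_prod (hmul v hv) hwiA)
      have hev : (fun v => Chat (v * w, w⁻¹)) =ᶠ[nhds v₁] 0 := by
        have hEvv : ∀ᶠ v in nhds v₁, v ∈ annulus ε ∧ Chat (v, w) ≠ 0 :=
          (hopen.eventually_mem hv₁).and
            (((sliceL w hwA v₁ hv₁).continuousAt).eventually_ne hv₁ne)
        filter_upwards [hEvv] with v hv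
        obtain ⟨hvA, hvne⟩ := hv
        exact (mul_eq_zero.mp (hprod v hvA)).resolve_left hvne
      have hEq := hg₂ana.eqOn_zero_of_preconnected_of_eventuallyEq_zero hconn hv₁ hev
      have h0 := hEq (hmuli u₁ hu₁)
      have : Chat (u₁ * w⁻¹ * w, w⁻¹) = 0 := h0
      rw [mul_assoc, inv_mul_cancel₀ hw0, mul_one] at this
      exact hu₁ne this
    -- the set of circle points where the left slice vanishes identically
    set S : Set ℂ := {w | ‖w‖ = 1 ∧ ∀ v ∈ annulus ε, Chat (v, w) = 0} with hS
    have hSinf : S.Infinite := by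
      by_contra hfin
      rw [Set.not_infinite] at hfin
      have hinj : Set.InjOn (fun t : ℝ => Complex.exp ((t : ℂ) * Complex.I))
          (Set.Ioo (0:ℝ) 1) := by
        intro s hs t ht h
        have := Complex.exp_eq_exp_iff_exists_int.mp h
        obtain ⟨n, hn⟩ := this
        have him : (s : ℝ) = t + n * (2 * Real.pi) := by
          have := congrArg Complex.im hn
          simpa [Complex.add_im, Complex.mul_im] using this
        have hpi := Real.pi_gt_three
        rcases lt_trichotomy n 0 with hn0 | hn0 | hn0
        · exfalso
          have : (n : ℝ) ≤ -1 := by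
            have h' := Int.le_sub_one_of_lt hn0
            have : n ≤ -1 := by omega
            exact_mod_cast this
          nlinarith [hs.1, hs.2, ht.1, ht.2]
        · rw [hn0] at him; simpa using him
        · exfalso
          have : (1 : ℝ) ≤ (n : ℝ) := by exact_mod_cast hn0
          nlinarith [hs.1, hs.2, ht.1, ht.2]
      have hEinf : ((fun t : ℝ => Complex.exp ((t : ℂ) * Complex.I)) ''
          Set.Ioo (0:ℝ) 1).Infinite :=
        Set.Infinite.image hinj (Set.Ioo_infinite (by norm_num))
      have hEsub : (fun t : ℝ => Complex.exp ((t : ℂ) * Complex.I)) '' Set.Ioo (0:ℝ) 1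
          ⊆ S ∪ (Inv.inv '' S) := by
        rintro w ⟨t, -, rfl⟩
        have hw : ‖Complex.exp ((t : ℂ) * Complex.I)‖ = 1 :=
          Complex.norm_exp_ofReal_mul_I t
        have hw0 : Complex.exp ((t : ℂ) * Complex.I) ≠ 0 := Complex.exp_ne_zero _
        rcases hdich _ hw with hl | hr
        · exact Or.inl ⟨hw, hl⟩
        · refine Or.inr ⟨(Complex.exp ((t : ℂ) * Complex.I))⁻¹,
            ⟨by rw [norm_inv, hw]; norm_num, hr⟩, inv_inv _⟩
      exact hEinf ((hfin.union (hfin.image _)).subset hEsub)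
    have hSsub : S ⊆ Metric.sphere (0:ℂ) 1 := by
      intro w hw
      exact mem_sphere_zero_iff_norm.mpr (by exact hw.1)
    obtain ⟨x, hxsph, hxacc⟩ :=
      hSinf.exists_accPt_of_subset_isCompact (isCompact_sphere 0 1) hSsub
    have hxA : x ∈ annulus ε := by
      apply hmem1
      exact mem_sphere_zero_iff_norm.mp hxsph
    have hfreq : ∃ᶠ z in nhdsWithin x {x}ᶜ, Chat (v₀, z) = 0 := by
      have hmemS : ∃ᶠ z in nhdsWithin x {x}ᶜ, z ∈ S :=
        Filter.frequently_mem_iff_neBot.mpr hxacc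
      exact hmemS.mono (fun z hz => hz.2 v₀ hv₀)
    have hEq := (sliceR v₀ hv₀).eqOn_zero_of_preconnected_of_frequently_eq_zero
      hconn hxA hfreq
    exact hC0 (hEq hz₀)
  exact ⟨α, hαne, hg, hf⟩
end

section
/- Let 0 < ε < 1 and let A = {z ∈ ℂ : 1−ε < |z| < 1+ε}. Suppose f, g, h are holomorphic on A and satisfy the Pexider equation h(vw) = f(v) + g(w) for all v, w ∈ A such that vw ∈ A. Then f, g and h are constant functions on A, with f ≡ f(1), g ≡ g(1) and h ≡ f(1) + g(1). -/
/-- Holomorphic solutions on a full annulus encircling the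
origin of the Pexider equation `h(vw) = f(v) + g(w)` are constant, with
`f ≡ f(1)`, `g ≡ g(1)` and `h ≡ f(1) + g(1)`. -/
theorem stmt_10 (ε : ℝ) (hε0 : 0 < ε) (hε1 : ε < 1) (f g h : ℂ → ℂ)
    (hf : AnalyticOnNhd ℂ f (annulus ε))
    (hg : AnalyticOnNhd ℂ g (annulus ε))
    (hh : AnalyticOnNhd ℂ h (annulus ε))
    (hfe : ∀ v ∈ annulus ε, ∀ w ∈ annulus ε, v * w ∈ annulus ε →
      h (v * w) = f v + g w) :
    (∀ v ∈ annulus ε, f v = f 1) ∧ (∀ w ∈ annulus ε, g w = g 1) ∧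
      ∀ z ∈ annulus ε, h z = f 1 + g 1 := by
  have hoa : IsOpen (annulus ε) := by
    have : annulus ε = (fun z : ℂ => ‖z‖) ⁻¹' (Set.Ioo (1 - ε) (1 + ε)) := rfl
    rw [this]
    exact isOpen_Ioo.preimage continuous_norm
  have h1mem : (1 : ℂ) ∈ annulus ε := by
    constructor <;> simp <;> linarith
  -- the basic substitutions
  have hsub1 : ∀ v ∈ annulus ε, h v = f v + g 1 := fun v hv => by
    simpa using hfe v hv 1 h1mem (by simpa using hv)
  have hsub2 : ∀ w ∈ annulus ε, h w = f 1 + g w := fun w hw => by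
    simpa using hfe 1 h1mem w hw (by simpa using hw)
  have hcocycle : ∀ v ∈ annulus ε, ∀ w ∈ annulus ε, v * w ∈ annulus ε →
      h (v * w) = h v + (h w - h 1) := by
    intro v hv w hw hvw
    rw [hfe v hv w hw hvw, hsub1 v hv, hsub2 w hw, hsub1 1 h1mem]
    ring
  -- key: z * h'(z) is constant on the annulus
  have key : ∀ w ∈ annulus ε, deriv h w * w = deriv h 1 := by
    intro w hw
    set U : Set ℂ := annulus ε ∩ (fun v => v * w) ⁻¹' annulus ε with hU
    have hUopen : IsOpen U :=
      hoa.inter (hoa.preimage (continuous_id.mul continuous_const))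
    have h1U : (1 : ℂ) ∈ U := ⟨h1mem, by simpa using hw⟩
    have heq : ∀ v ∈ U, h (v * w) = h v + (h w - h 1) := fun v hv =>
      hcocycle v hv.1 w hw hv.2
    have hd1 : HasDerivAt (fun v => h (v * w)) (deriv h w * w) 1 := by
      have hmul : HasDerivAt (fun v : ℂ => v * w) w 1 := hasDerivAt_mul_const w
      have hhw : HasDerivAt h (deriv h w) ((1 : ℂ) * w) := by
        rw [one_mul]; exact ((hh w hw).differentiableAt).hasDerivAt
      exact hhw.comp 1 hmul
    have hd2 : HasDerivAt (fun v => h v + (h w - h 1)) (deriv h 1) 1 :=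
      ((hh 1 h1mem).differentiableAt).hasDerivAt.add_const _
    have hev : (fun v => h (v * w)) =ᶠ[nhds 1] (fun v => h v + (h w - h 1)) := by
      filter_upwards [hUopen.mem_nhds h1U] with v hv
      exact heq v hv
    exact hd1.unique (hd2.congr_of_eventuallyEq hev)
  -- the constant must vanish: integrate around the unit circle
  set β : ℂ := deriv h 1 with hβdef
  have hβ : β = 0 := by
    have hmem : ∀ θ : ℝ, circleMap 0 1 θ ∈ annulus ε := by
      intro θ
      constructor <;> rw [norm_circleMap_zero] <;> simp <;> linarith
    have hF : ∀ θ : ℝ, HasDerivAt (fun θ : ℝ => h (circleMap 0 1 θ)) (β * Complex.I) θ := by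
      intro θ
      have hc : HasDerivAt (circleMap 0 1) (circleMap 0 1 θ * Complex.I) θ :=
        hasDerivAt_circleMap 0 1 θ
      have hhc : HasDerivAt h (deriv h (circleMap 0 1 θ)) (circleMap 0 1 θ) :=
        ((hh _ (hmem θ)).differentiableAt).hasDerivAt
      have := hhc.comp θ hc
      have heq : deriv h (circleMap 0 1 θ) * (circleMap 0 1 θ * Complex.I) = β * Complex.I := by
        rw [← mul_assoc, key _ (hmem θ)]
      rwa [heq] at this
    have hint : ∫ θ in (0:ℝ)..(2 * Real.pi), β * Complex.I =
        h (circleMap 0 1 (2 * Real.pi)) - h (circleMap 0 1 0) := by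
      exact intervalIntegral.integral_eq_sub_of_hasDerivAt (fun θ _ => hF θ)
        intervalIntegrable_const
    have hper : circleMap 0 1 (2 * Real.pi) = circleMap 0 1 0 := by
      have := periodic_circleMap 0 1 0
      simpa [zero_add] using this
    rw [hper, sub_self, intervalIntegral.integral_const, sub_zero] at hint
    have h2π : (2 * Real.pi : ℝ) ≠ 0 := by positivity
    have : β * Complex.I = 0 := by
      have := hint
      rwa [smul_eq_zero, or_iff_right h2π] at this
    have hI : (Complex.I : ℂ) ≠ 0 := Complex.I_ne_zero
    exact (mul_eq_zero.mp this).resolve_right hI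
  -- hence h' vanishes on the annulus
  have hd0 : ∀ z ∈ annulus ε, deriv h z = 0 := by
    intro z hz
    have hz0 : z ≠ 0 := by
      intro h0
      have h1 := hz.1
      rw [h0, norm_zero] at h1
      linarith
    have := key z hz
    rw [hβ] at this
    exact (mul_eq_zero.mp this).resolve_right hz0
  -- constancy of h via the convex strip in log coordinates
  have hconst : ∀ z ∈ annulus ε, h z = h 1 := by
    intro z hz
    set S : Set ℂ := Complex.re ⁻¹' Set.Ioo (Real.log (1 - ε)) (Real.log (1 + ε)) with hS
    have hSopen : IsOpen S := isOpen_Ioo.preimage Complex.continuous_re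
    have hSconv : Convex ℝ S := by
      have : Convex ℝ (Set.Ioo (Real.log (1 - ε)) (Real.log (1 + ε))) := convex_Ioo _ _
      exact this.linear_preimage Complex.reLm
    have h1ε : (0:ℝ) < 1 - ε := by linarith
    have hmemexp : ∀ ζ ∈ S, Complex.exp ζ ∈ annulus ε := by
      intro ζ hζ
      obtain ⟨h1, h2⟩ := hζ
      rw [hS] at *
      constructor <;> rw [Complex.norm_exp]
      · calc 1 - ε = Real.exp (Real.log (1 - ε)) := (Real.exp_log h1ε).symm
          _ < Real.exp ζ.re := Real.exp_lt_exp.mpr h1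
      · calc Real.exp ζ.re < Real.exp (Real.log (1 + ε)) := Real.exp_lt_exp.mpr h2
          _ = 1 + ε := Real.exp_log (by linarith)
    have hΦd : ∀ ζ ∈ S, HasDerivAt (fun ζ => h (Complex.exp ζ)) 0 ζ := by
      intro ζ hζ
      have he : HasDerivAt Complex.exp (Complex.exp ζ) ζ := Complex.hasDerivAt_exp ζ
      have hhc : HasDerivAt h (deriv h (Complex.exp ζ)) (Complex.exp ζ) :=
        ((hh _ (hmemexp ζ hζ)).differentiableAt).hasDerivAt
      have := hhc.comp ζ he
      rwa [hd0 _ (hmemexp ζ hζ), zero_mul] at this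
    have hΦdiff : DifferentiableOn ℂ (fun ζ => h (Complex.exp ζ)) S := fun ζ hζ =>
      ((hΦd ζ hζ).differentiableAt).differentiableWithinAt
    have hΦfd : ∀ ζ ∈ S, fderivWithin ℂ (fun ζ => h (Complex.exp ζ)) S ζ = 0 := by
      intro ζ hζ
      have : HasFDerivWithinAt (fun ζ => h (Complex.exp ζ))
          (ContinuousLinearMap.smulRight (1 : ℂ →L[ℂ] ℂ) (0:ℂ)) S ζ :=
        ((hΦd ζ hζ).hasFDerivAt).hasFDerivWithinAt
      rw [this.fderivWithin (hSopen.uniqueDiffWithinAt hζ)]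
      ext x
      simp
    have hz0 : z ≠ 0 := by
      intro h0
      have h1 := hz.1
      rw [h0, norm_zero] at h1
      linarith
    have hzS : Complex.log z ∈ S := by
      constructor <;> rw [Complex.log_re]
      · exact Real.log_lt_log h1ε hz.1
      · exact Real.log_lt_log (lt_trans h1ε hz.1) hz.2
    have h0S : (0 : ℂ) ∈ S := by
      constructor <;> simp
      · exact Real.log_neg h1ε (by linarith)
      · exact Real.log_pos (by linarith)
    have := hSconv.is_const_of_fderivWithin_eq_zero hΦdiff hΦfd hzS h0S
    simpa [Complex.exp_log hz0, Complex.exp_zero] using this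
  -- conclude
  have h1val : h 1 = f 1 + g 1 := hsub1 1 h1mem
  refine ⟨fun v hv => ?_, fun w hw => ?_, fun z hz => ?_⟩
  · have := hsub1 v hv
    rw [hconst v hv, h1val] at this
    exact (add_right_cancel this).symm
  · have := hsub2 w hw
    rw [hconst w hw, h1val] at this
    exact (add_left_cancel this).symm
  · rw [hconst z hz, h1val]
end

section
/- (Theorem 1) Let C : ℤ × ℤ → ℂ and D : ℤ → ℂ and suppose: (i) there exist K > 0 and r > 0 with |C(k,l)| ≤ K·exp(−r(|k|+|l|)) and |D(m)| ≤ K·exp(−r|m|) for all k, l, m ∈ ℤ (locality); (ii) C is not identically zero; (iii) Σ_{m∈ℤ} D(m) = 0; (iv) the associative law holds: for all l, m, n, k ∈ ℤ, Σ_{j∈ℤ} C(l−j, m−j) C(j−k, n−k) = Σ_{j∈ℤ} C(l−k, j−k) C(m−j, n−j); (v) the Leibniz rule holds: for all l, m, n ∈ ℤ, Σ_{k∈ℤ} C(l−k, m−k) D(k−n) = Σ_{k∈ℤ} C(k−n, m−n) D(l−k) + Σ_{k∈ℤ} C(l−n, k−n) D(m−k). Then D(m) = 0 for all m ∈ ℤ.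 -/
open Complex Filter Set

lemma summable_exp_neg_abs {c : ℝ} (hc : 0 < c) :
    Summable fun m : ℤ => Real.exp (-(c * |(m : ℝ)|)) := by
  have hlt : Real.exp (-c) < 1 := Real.exp_lt_one_iff.2 (by linarith)
  have hgeo : Summable fun n : ℕ => Real.exp (-c) ^ n :=
    summable_geometric_of_lt_one (Real.exp_nonneg _) hlt
  have key : ∀ n : ℕ, Real.exp (-(c * |((n : ℤ) : ℝ)|)) = Real.exp (-c) ^ n := by
    intro n
    rw [← Real.exp_nat_mul]
    push_cast
    rw [_root_.abs_of_nonneg (by positivity : (0:ℝ) ≤ (n:ℝ))]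
    ring_nf
  apply Summable.of_nat_of_neg
  · exact hgeo.congr fun n => (key n).symm
  · refine hgeo.congr fun n => ?_
    rw [← key n]
    congr 1
    push_cast
    rw [abs_neg]

lemma exp_re_bound (m : ℤ) (u : ℂ) (a : ℝ) (h : |u.re| ≤ a) :
    ‖Complex.exp ((m : ℂ) * u)‖ ≤ Real.exp (a * |(m : ℝ)|) := by
  rw [Complex.norm_exp]
  apply Real.exp_le_exp.2
  have h1 : ((m : ℂ) * u).re = (m : ℝ) * u.re := by simp [Complex.mul_re]
  rw [h1]
  calc (m : ℝ) * u.re ≤ |(m : ℝ) * u.re| := le_abs_self _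
    _ = |(m : ℝ)| * |u.re| := abs_mul _ _
    _ ≤ |(m : ℝ)| * a := mul_le_mul_of_nonneg_left h (abs_nonneg _)
    _ = a * |(m : ℝ)| := mul_comm _ _

lemma differentiableOn_tsum {ι : Type*} [Countable ι] {F : ι → ℂ → ℂ} {S : Set ℂ}
    (hS : IsOpen S) (hF : ∀ i, Differentiable ℂ (F i))
    (hb : ∀ z ∈ S, ∃ ε > 0, Metric.ball z ε ⊆ S ∧ ∃ u : ι → ℝ, Summable u ∧
        ∀ i, ∀ w ∈ Metric.ball z ε, ‖F i w‖ ≤ u i) :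
    DifferentiableOn ℂ (fun z => ∑' i, F i z) S := by
  intro z hz
  obtain ⟨ε, hε, hball, u, hu, hbd⟩ := hb z hz
  have htu : TendstoUniformlyOn (fun (t : Finset ι) (w : ℂ) => ∑ i ∈ t, F i w)
      (fun w => ∑' i, F i w) atTop (Metric.ball z ε) :=
    tendstoUniformlyOn_tsum hu fun i w hw => hbd i w hw
  have hdiff : DifferentiableOn ℂ (fun w => ∑' i, F i w) (Metric.ball z ε) :=
    htu.tendstoLocallyUniformlyOn.differentiableOn
      (Filter.Eventually.of_forall fun t =>
        (Differentiable.fun_sum fun i _ => hF i).differentiableOn)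
      Metric.isOpen_ball
  exact (hdiff.differentiableAt
    (Metric.isOpen_ball.mem_nhds (Metric.mem_ball_self hε))).differentiableWithinAt

open MeasureTheory intervalIntegral in
lemma fourier_unique {a : ℤ → ℂ} (ha : Summable fun m => ‖a m‖)
    (h : ∀ θ : ℝ, ∑' m : ℤ, a m * Complex.exp ((m : ℂ) * θ * Complex.I) = 0) (n : ℤ) :
    a n = 0 := by
  have twopi_pos : (0:ℝ) < 2 * Real.pi := by positivity
  set g : ℤ → ℝ → ℂ := fun m θ => a m * Complex.exp (((m - n : ℤ) : ℂ) * θ * Complex.I) with hg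
  have hexp1 : ∀ (k : ℤ) (θ : ℝ), ‖Complex.exp ((k : ℂ) * θ * Complex.I)‖ = 1 := by
    intro k θ
    rw [Complex.norm_exp]
    norm_num [Complex.mul_re]
  have hnorm : ∀ m θ, ‖g m θ‖ = ‖a m‖ := by
    intro m θ
    rw [hg]
    simp only [norm_mul, hexp1, mul_one]
  have hcont : ∀ m, Continuous (g m) := by
    intro m
    apply Continuous.mul continuous_const
    exact Complex.continuous_exp.comp (by continuity)
  have hint : ∀ m, IntegrableOn (g m) (Set.Ioc (0:ℝ) (2 * Real.pi)) volume :=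
    fun m => (hcont m).integrableOn_Ioc
  have hsumint : Summable fun m => ∫ θ in Set.Ioc (0:ℝ) (2 * Real.pi), ‖g m θ‖ := by
    apply (ha.mul_left (2 * Real.pi)).congr
    intro m
    have : (fun θ => ‖g m θ‖) = fun _ : ℝ => ‖a m‖ := funext fun θ => hnorm m θ
    rw [this, MeasureTheory.setIntegral_const]
    simp [Real.volume_Ioc, ENNReal.toReal_ofReal twopi_pos.le, smul_eq_mul, Real.pi_pos.le]
  have hswap : ∑' m, (∫ θ in Set.Ioc (0:ℝ) (2 * Real.pi), g m θ) =
      ∫ θ in Set.Ioc (0:ℝ) (2 * Real.pi), (∑' m, g m θ) :=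
    MeasureTheory.integral_tsum_of_summable_integral_norm hint hsumint
  have hzero : ∀ θ : ℝ, (∑' m, g m θ) = 0 := by
    intro θ
    have hpt : ∀ m : ℤ, g m θ = (a m * Complex.exp ((m : ℂ) * θ * Complex.I)) *
        Complex.exp (((-n : ℤ) : ℂ) * θ * Complex.I) := by
      intro m
      rw [hg]
      simp only
      rw [mul_assoc (a m), ← Complex.exp_add]
      congr 2
      push_cast
      ring
    rw [tsum_congr hpt, tsum_mul_right, h θ, zero_mul]
  have heval : ∀ m : ℤ, (∫ θ in Set.Ioc (0:ℝ) (2 * Real.pi), g m θ) =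
      if m = n then ((2 * Real.pi : ℝ) : ℂ) * a n else 0 := by
    intro m
    have hIoc : (∫ θ in Set.Ioc (0:ℝ) (2 * Real.pi), g m θ) =
        ∫ θ in (0:ℝ)..(2 * Real.pi), g m θ := (intervalIntegral.integral_of_le twopi_pos.le).symm
    by_cases hmn : m = n
    · subst hmn
      simp only [hg, sub_self, Int.cast_zero, zero_mul, Complex.exp_zero, mul_one, if_true]
      rw [MeasureTheory.setIntegral_const]
      simp [Real.volume_Ioc, ENNReal.toReal_ofReal twopi_pos.le, Complex.real_smul, max_eq_left twopi_pos.le]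
    · rw [hIoc, if_neg hmn]
      have hk : ((m - n : ℤ) : ℂ) ≠ 0 := Int.cast_ne_zero.2 (sub_ne_zero.2 hmn)
      have hc : ((m - n : ℤ) : ℂ) * Complex.I ≠ 0 := mul_ne_zero hk Complex.I_ne_zero
      have harg : ∀ θ : ℝ, g m θ = a m * Complex.exp ((((m - n : ℤ) : ℂ) * Complex.I) * θ) := by
        intro θ
        rw [hg]
        simp only
        congr 2
        ring
      calc (∫ θ in (0:ℝ)..(2 * Real.pi), g m θ)
          = ∫ θ in (0:ℝ)..(2 * Real.pi), a m *
              Complex.exp ((((m - n : ℤ) : ℂ) * Complex.I) * θ) := by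
            exact intervalIntegral.integral_congr fun θ _ => harg θ
        _ = a m * ∫ θ in (0:ℝ)..(2 * Real.pi),
              Complex.exp ((((m - n : ℤ) : ℂ) * Complex.I) * θ) :=
            intervalIntegral.integral_const_mul _ _
        _ = 0 := by
            rw [integral_exp_mul_complex hc]
            have h1 : Complex.exp ((((m - n : ℤ) : ℂ) * Complex.I) * ((2 * Real.pi : ℝ) : ℂ)) = 1 := by
              rw [show (((m - n : ℤ) : ℂ) * Complex.I) * ((2 * Real.pi : ℝ) : ℂ) =
                  ((m - n : ℤ) : ℂ) * (2 * (Real.pi : ℂ) * Complex.I) by push_cast; ring]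
              exact Complex.exp_int_mul_two_pi_mul_I (m - n)
            rw [h1]
            simp
  have hfinal : ((2 * Real.pi : ℝ) : ℂ) * a n = 0 := by
    have h1 : ∑' m, (∫ θ in Set.Ioc (0:ℝ) (2 * Real.pi), g m θ) = ((2 * Real.pi : ℝ) : ℂ) * a n := by
      rw [tsum_congr (g := fun m => if m = n then ((2 * Real.pi : ℝ) : ℂ) * a n else 0) heval,
        tsum_eq_single n fun m hm => if_neg hm]
      simp
    rw [h1] at hswap
    rw [hswap]
    have : (fun θ : ℝ => ∑' m, g m θ) = fun _ => (0:ℂ) := funext hzero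
    rw [this]
    simp
  have h2 : ((2 * Real.pi : ℝ) : ℂ) ≠ 0 := by
    simp [Complex.ofReal_ne_zero]
  exact (mul_eq_zero.1 hfinal).resolve_left h2

section Main

variable {C : ℤ × ℤ → ℂ} {D : ℤ → ℂ} {K r : ℝ}

/-- the generating function of `D` -/
noncomputable def dd (D : ℤ → ℂ) : ℂ → ℂ := fun z => ∑' m : ℤ, D m * Complex.exp ((m : ℂ) * z)

/-- the generating function of `C` -/
noncomputable def cc (C : ℤ × ℤ → ℂ) : ℂ → ℂ → ℂ := fun s t =>
  ∑' p : ℤ × ℤ, C p * Complex.exp ((p.1 : ℂ) * s + (p.2 : ℂ) * t)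

/-- open vertical strip -/
def strip (a : ℝ) : Set ℂ := {z : ℂ | |z.re| < a}

lemma strip_open (a : ℝ) : IsOpen (strip a) := by
  have : strip a = Complex.re ⁻¹' (Set.Ioo (-a) a) := by
    ext z
    simp [strip, abs_lt]
  rw [this]
  exact isOpen_Ioo.preimage Complex.continuous_re

lemma strip_preconnected (a : ℝ) : IsPreconnected (strip a) := by
  apply Convex.isPreconnected
  have : strip a = Complex.re ⁻¹' (Set.Ioo (-a) a) := by
    ext z; simp [strip, abs_lt]
  rw [this]
  exact (convex_Ioo (-a) a).linear_preimage Complex.reLm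

lemma normD_le (hD : ∀ m : ℤ, ‖D m‖ ≤ K * Real.exp (-r * (|m| : ℝ)))
    (hK : 0 < K) {a : ℝ} {z : ℂ} (hz : |z.re| ≤ a) (m : ℤ) :
    ‖D m * Complex.exp ((m : ℂ) * z)‖ ≤ K * Real.exp (-((r - a) * |(m : ℝ)|)) := by
  rw [norm_mul]
  have hDm : ‖D m‖ ≤ K * Real.exp (-r * |(m : ℝ)|) := by
    exact hD m
  calc ‖D m‖ * ‖Complex.exp ((m : ℂ) * z)‖
      ≤ (K * Real.exp (-r * |(m : ℝ)|)) * Real.exp (a * |(m : ℝ)|) :=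
        mul_le_mul hDm (exp_re_bound m z a hz) (norm_nonneg _) (by positivity)
    _ = K * Real.exp (-((r - a) * |(m : ℝ)|)) := by
        rw [mul_assoc, ← Real.exp_add]
        congr 1
        ring

lemma summableD (hD : ∀ m : ℤ, ‖D m‖ ≤ K * Real.exp (-r * (|m| : ℝ)))
    (hK : 0 < K) {a : ℝ} (ha : a < r) {z : ℂ} (hz : |z.re| ≤ a) :
    Summable fun m : ℤ => ‖D m * Complex.exp ((m : ℂ) * z)‖ := by
  apply Summable.of_nonneg_of_le (fun m => norm_nonneg _) (normD_le hD hK hz)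
  exact (summable_exp_neg_abs (by linarith)).mul_left K

lemma normC_le_s11 (hC : ∀ k l : ℤ,
      ‖C (k, l)‖ ≤ K * Real.exp (-r * ((|k| : ℝ) + (|l| : ℝ))))
    (hK : 0 < K) {a b : ℝ} {s t : ℂ} (hs : |s.re| ≤ a) (ht : |t.re| ≤ b) (p : ℤ × ℤ) :
    ‖C p * Complex.exp ((p.1 : ℂ) * s + (p.2 : ℂ) * t)‖ ≤
      (K * Real.exp (-((r - a) * |(p.1 : ℝ)|))) * Real.exp (-((r - b) * |(p.2 : ℝ)|)) := by
  rw [norm_mul, Complex.exp_add, norm_mul]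
  have hCp : ‖C p‖ ≤ K * (Real.exp (-r * |(p.1 : ℝ)|) * Real.exp (-r * |(p.2 : ℝ)|)) := by
    calc ‖C p‖ = ‖C (p.1, p.2)‖ := by rw [Prod.mk.eta]
      _ ≤ K * Real.exp (-r * (|(p.1 : ℝ)| + |(p.2 : ℝ)|)) := hC p.1 p.2
      _ = K * (Real.exp (-r * |(p.1 : ℝ)|) * Real.exp (-r * |(p.2 : ℝ)|)) := by
          rw [← Real.exp_add]
          congr 1
          ring
  calc ‖C p‖ * (‖Complex.exp ((p.1 : ℂ) * s)‖ * ‖Complex.exp ((p.2 : ℂ) * t)‖)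
      ≤ (K * (Real.exp (-r * |(p.1 : ℝ)|) * Real.exp (-r * |(p.2 : ℝ)|))) *
          (Real.exp (a * |(p.1 : ℝ)|) * Real.exp (b * |(p.2 : ℝ)|)) := by
        apply mul_le_mul hCp _ (by positivity) (by positivity)
        exact mul_le_mul (exp_re_bound p.1 s a hs) (exp_re_bound p.2 t b ht)
          (norm_nonneg _) (by positivity)
    _ = (K * Real.exp (-((r - a) * |(p.1 : ℝ)|))) * Real.exp (-((r - b) * |(p.2 : ℝ)|)) := by
        have hkey : ∀ x y u v : ℝ, K * (Real.exp x * Real.exp y) * (Real.exp u * Real.exp v) =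
            (K * Real.exp (x + u)) * Real.exp (y + v) := by
          intros x y u v
          rw [Real.exp_add, Real.exp_add]
          ring
        rw [hkey,
          show -r * |(p.1 : ℝ)| + a * |(p.1 : ℝ)| = -((r - a) * |(p.1 : ℝ)|) by ring,
          show -r * |(p.2 : ℝ)| + b * |(p.2 : ℝ)| = -((r - b) * |(p.2 : ℝ)|) by ring]

lemma summableC (hC : ∀ k l : ℤ,
      ‖C (k, l)‖ ≤ K * Real.exp (-r * ((|k| : ℝ) + (|l| : ℝ))))
    (hK : 0 < K) {a b : ℝ} (ha : a < r) (hb : b < r) {s t : ℂ}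
    (hs : |s.re| ≤ a) (ht : |t.re| ≤ b) :
    Summable fun p : ℤ × ℤ => ‖C p * Complex.exp ((p.1 : ℂ) * s + (p.2 : ℂ) * t)‖ := by
  have hsum : Summable fun p : ℤ × ℤ =>
      (K * Real.exp (-((r - a) * |(p.1 : ℝ)|))) * Real.exp (-((r - b) * |(p.2 : ℝ)|)) := by
    have h1 : Summable fun m : ℤ => K * Real.exp (-((r - a) * |(m : ℝ)|)) :=
      (summable_exp_neg_abs (by linarith : (0:ℝ) < r - a)).mul_left K
    have h2 : Summable fun m : ℤ => Real.exp (-((r - b) * |(m : ℝ)|)) :=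
      summable_exp_neg_abs (by linarith : (0:ℝ) < r - b)
    exact h1.mul_of_nonneg h2 (fun m => by positivity) (fun m => Real.exp_nonneg _)
  exact Summable.of_nonneg_of_le (fun p => norm_nonneg _) (normC_le_s11 hC hK hs ht) hsum

lemma ball_subset_strip {z : ℂ} {b : ℝ} (hz : |z.re| < b) :
    ∀ w ∈ Metric.ball z ((b - |z.re|) / 2), |w.re| ≤ (|z.re| + b) / 2 := by
  intro w hw
  have h1 : |w.re - z.re| ≤ ‖w - z‖ := by
    have := Complex.abs_re_le_norm (w - z)
    simpa using this
  have h2 : ‖w - z‖ < (b - |z.re|) / 2 := by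
    rw [← Complex.dist_eq]
    exact hw
  calc |w.re| ≤ |z.re| + |w.re - z.re| := by
        have := abs_sub_abs_le_abs_sub w.re z.re
        have h3 := abs_sub w.re z.re
        nlinarith [abs_abs_sub_abs_le_abs_sub w.re z.re, le_abs_self (w.re - z.re)]
    _ ≤ (|z.re| + b) / 2 := by nlinarith

lemma dd_diff (hD : ∀ m : ℤ, ‖D m‖ ≤ K * Real.exp (-r * (|m| : ℝ)))
    (hK : 0 < K) (hr : 0 < r) : DifferentiableOn ℂ (dd D) (strip r) := by
  apply differentiableOn_tsum (strip_open r)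
  · intro m
    apply Differentiable.const_mul
    exact Complex.differentiable_exp.comp (differentiable_id.const_mul _)
  · intro z hz
    have hzr : |z.re| < r := hz
    refine ⟨(r - |z.re|) / 2, by linarith [abs_nonneg z.re], ?_,
      fun m : ℤ => K * Real.exp (-((r - (|z.re| + r) / 2) * |(m : ℝ)|)), ?_, ?_⟩
    · intro w hw
      have := ball_subset_strip hzr w hw
      have : |w.re| < r := lt_of_le_of_lt this (by simp [strip] at hz ⊢; linarith)
      exact this
    · exact (summable_exp_neg_abs (by simp [strip] at hz; linarith)).mul_left K
    · intro m w hw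
      exact normD_le hD hK (ball_subset_strip hzr w hw) m

lemma cc_slice_diff (hC : ∀ k l : ℤ,
      ‖C (k, l)‖ ≤ K * Real.exp (-r * ((|k| : ℝ) + (|l| : ℝ))))
    (hK : 0 < K) (hr : 0 < r) {t : ℂ} (ht : |t.re| < r) :
    DifferentiableOn ℂ (fun s => cc C s t) (strip r) := by
  apply differentiableOn_tsum (strip_open r)
  · intro p
    apply Differentiable.const_mul
    apply Complex.differentiable_exp.comp
    exact (differentiable_id.const_mul _).add_const _
  · intro z hz
    have hzr : |z.re| < r := hz
    refine ⟨(r - |z.re|) / 2, by linarith [abs_nonneg z.re], ?_,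
      fun p : ℤ × ℤ => (K * Real.exp (-((r - (|z.re| + r) / 2) * |(p.1 : ℝ)|))) *
        Real.exp (-((r - |t.re|) * |(p.2 : ℝ)|)), ?_, ?_⟩
    · intro w hw
      exact lt_of_le_of_lt (ball_subset_strip hzr w hw) (by linarith)
    · have h1 : Summable fun m : ℤ => K * Real.exp (-((r - (|z.re| + r) / 2) * |(m : ℝ)|)) :=
        (summable_exp_neg_abs (by linarith)).mul_left K
      have h2 : Summable fun m : ℤ => Real.exp (-((r - |t.re|) * |(m : ℝ)|)) :=
        summable_exp_neg_abs (by linarith)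
      exact h1.mul_of_nonneg h2 (fun m => by positivity) (fun m => Real.exp_nonneg _)
    · intro p w hw
      exact normC_le_s11 hC hK (ball_subset_strip hzr w hw) (le_refl |t.re|) p

lemma key_identity
    (hC : ∀ k l : ℤ,
      ‖C (k, l)‖ ≤ K * Real.exp (-r * ((|k| : ℝ) + (|l| : ℝ))))
    (hD : ∀ m : ℤ, ‖D m‖ ≤ K * Real.exp (-r * (|m| : ℝ)))
    (hK : 0 < K) (hr : 0 < r)
    (hleib : ∀ l m n : ℤ,
      ∑' k : ℤ, C (l - k, m - k) * D (k - n) =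
        (∑' k : ℤ, C (k - n, m - n) * D (l - k)) +
          ∑' k : ℤ, C (l - n, k - n) * D (m - k))
    {s t : ℂ} (hs : |s.re| < r / 2) (ht : |t.re| < r / 2) :
    cc C s t * dd D (s + t) = dd D s * cc C s t + dd D t * cc C s t := by
  have hsr : |s.re| < r := by linarith
  have htr : |t.re| < r := by linarith
  have hstr : |(s + t).re| ≤ |s.re| + |t.re| := by
    rw [Complex.add_re]; exact abs_add_le _ _
  have hstlt : |s.re| + |t.re| < r := by linarith
  -- summability of the basic families
  have SC : Summable fun p : ℤ × ℤ => ‖C p * Complex.exp ((p.1 : ℂ) * s + (p.2 : ℂ) * t)‖ :=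
    summableC hC hK hsr htr (le_refl _) (le_refl _)
  have SDs : Summable fun k : ℤ => ‖D k * Complex.exp ((k : ℂ) * s)‖ :=
    summableD hD hK hsr (le_refl _)
  have SDt : Summable fun k : ℤ => ‖D k * Complex.exp ((k : ℂ) * t)‖ :=
    summableD hD hK htr (le_refl _)
  have SDst : Summable fun k : ℤ => ‖D k * Complex.exp ((k : ℂ) * (s + t))‖ :=
    summableD hD hK hstlt hstr
  set g : ℤ × ℤ → ℂ := fun p => C p * Complex.exp ((p.1 : ℂ) * s + (p.2 : ℂ) * t) with hg
  set f1 : ℤ → ℂ := fun j => D j * Complex.exp ((j : ℂ) * s) with hf1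
  set f2 : ℤ → ℂ := fun j => D j * Complex.exp ((j : ℂ) * t) with hf2
  set f3 : ℤ → ℂ := fun k => D k * Complex.exp ((k : ℂ) * (s + t)) with hf3
  set F : (ℤ × ℤ) × ℤ → ℂ := fun q =>
    Complex.exp ((q.1.1 : ℂ) * s + (q.1.2 : ℂ) * t) * (C (q.1.1 - q.2, q.1.2 - q.2) * D q.2)
    with hF
  set G1 : (ℤ × ℤ) × ℤ → ℂ := fun q =>
    Complex.exp ((q.1.1 : ℂ) * s + (q.1.2 : ℂ) * t) * (C (q.2, q.1.2) * D (q.1.1 - q.2)) with hG1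
  set G2 : (ℤ × ℤ) × ℤ → ℂ := fun q =>
    Complex.exp ((q.1.1 : ℂ) * s + (q.1.2 : ℂ) * t) * (C (q.1.1, q.2) * D (q.1.2 - q.2)) with hG2
  -- equivalences
  let eF : (ℤ × ℤ) × ℤ ≃ (ℤ × ℤ) × ℤ :=
    ⟨fun q => ((q.1.1 + q.2, q.1.2 + q.2), q.2),
     fun q => ((q.1.1 - q.2, q.1.2 - q.2), q.2),
     fun q => by simp, fun q => by simp⟩
  let e1 : ℤ × (ℤ × ℤ) ≃ (ℤ × ℤ) × ℤ :=
    ⟨fun z => ((z.1 + z.2.1, z.2.2), z.2.1),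
     fun q => (q.1.1 - q.2, (q.2, q.1.2)),
     fun z => by simp, fun q => by simp⟩
  let e2 : ℤ × (ℤ × ℤ) ≃ (ℤ × ℤ) × ℤ :=
    ⟨fun z => ((z.2.1, z.1 + z.2.2), z.2.2),
     fun q => (q.1.2 - q.2, (q.1.1, q.2)),
     fun z => by simp, fun q => by simp⟩
  -- pointwise identification after reindexing
  have hFe : ∀ q : (ℤ × ℤ) × ℤ, F (eF q) = g q.1 * f3 q.2 := by
    rintro ⟨⟨a, b⟩, k⟩
    simp only [hF, hg, hf3, eF, Equiv.coe_fn_mk, add_sub_cancel_right]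
    rw [show ((a + k : ℤ) : ℂ) * s + ((b + k : ℤ) : ℂ) * t =
        ((a : ℂ) * s + (b : ℂ) * t) + (k : ℂ) * (s + t) by push_cast; ring, Complex.exp_add]
    ring
  have hG1e : ∀ z : ℤ × (ℤ × ℤ), G1 (e1 z) = f1 z.1 * g z.2 := by
    rintro ⟨j, k, m⟩
    simp only [hG1, hf1, hg, e1, Equiv.coe_fn_mk, add_sub_cancel_right]
    rw [show ((j + k : ℤ) : ℂ) * s + (m : ℂ) * t =
        ((j : ℂ) * s) + ((k : ℂ) * s + (m : ℂ) * t) by push_cast; ring, Complex.exp_add]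
    ring
  have hG2e : ∀ z : ℤ × (ℤ × ℤ), G2 (e2 z) = f2 z.1 * g z.2 := by
    rintro ⟨j, l, k⟩
    simp only [hG2, hf2, hg, e2, Equiv.coe_fn_mk, add_sub_cancel_right]
    rw [show ((l : ℤ) : ℂ) * s + ((j + k : ℤ) : ℂ) * t =
        ((j : ℂ) * t) + ((l : ℂ) * s + (k : ℂ) * t) by push_cast; ring, Complex.exp_add]
    ring
  -- summability of the triple families
  have hsumF : Summable F := by
    apply eF.summable_iff.mp
    exact (summable_mul_of_summable_norm SC SDst).congr fun q => (hFe q).symm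
  have hsumG1 : Summable G1 := by
    apply e1.summable_iff.mp
    exact (summable_mul_of_summable_norm SDs SC).congr fun z => (hG1e z).symm
  have hsumG2 : Summable G2 := by
    apply e2.summable_iff.mp
    exact (summable_mul_of_summable_norm SDt SC).congr fun z => (hG2e z).symm
  -- evaluation of the three triple sums
  have hFtsum : ∑' q, F q = cc C s t * dd D (s + t) := by
    calc ∑' q, F q = ∑' q, F (eF q) := (eF.tsum_eq F).symm
      _ = ∑' q : (ℤ × ℤ) × ℤ, g q.1 * f3 q.2 := tsum_congr hFe
      _ = (∑' p, g p) * ∑' k, f3 k := (tsum_mul_tsum_of_summable_norm SC SDst).symm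
      _ = cc C s t * dd D (s + t) := rfl
  have hG1tsum : ∑' q, G1 q = dd D s * cc C s t := by
    calc ∑' q, G1 q = ∑' z, G1 (e1 z) := (e1.tsum_eq G1).symm
      _ = ∑' z : ℤ × (ℤ × ℤ), f1 z.1 * g z.2 := tsum_congr hG1e
      _ = (∑' j, f1 j) * ∑' p, g p := (tsum_mul_tsum_of_summable_norm SDs SC).symm
      _ = dd D s * cc C s t := rfl
  have hG2tsum : ∑' q, G2 q = dd D t * cc C s t := by
    calc ∑' q, G2 q = ∑' z, G2 (e2 z) := (e2.tsum_eq G2).symm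
      _ = ∑' z : ℤ × (ℤ × ℤ), f2 z.1 * g z.2 := tsum_congr hG2e
      _ = (∑' j, f2 j) * ∑' p, g p := (tsum_mul_tsum_of_summable_norm SDt SC).symm
      _ = dd D t * cc C s t := rfl
  -- the Leibniz rule identifies the fibers
  have inner : ∀ p : ℤ × ℤ, (∑' k, F (p, k)) = (∑' k, G1 (p, k)) + ∑' k, G2 (p, k) := by
    intro p
    have hl := hleib p.1 p.2 0
    simp only [sub_zero] at hl
    calc (∑' k, F (p, k))
        = ∑' k, Complex.exp ((p.1 : ℂ) * s + (p.2 : ℂ) * t) * (C (p.1 - k, p.2 - k) * D k) := rfl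
      _ = Complex.exp ((p.1 : ℂ) * s + (p.2 : ℂ) * t) * ∑' k, C (p.1 - k, p.2 - k) * D k :=
          tsum_mul_left
      _ = Complex.exp ((p.1 : ℂ) * s + (p.2 : ℂ) * t) *
            ((∑' k, C (k, p.2) * D (p.1 - k)) + ∑' k, C (p.1, k) * D (p.2 - k)) := by rw [hl]
      _ = (∑' k, G1 (p, k)) + ∑' k, G2 (p, k) := by
          rw [mul_add, ← tsum_mul_left, ← tsum_mul_left]
  calc cc C s t * dd D (s + t) = ∑' q, F q := hFtsum.symm
    _ = ∑' p : ℤ × ℤ, ∑' k, F (p, k) := Summable.tsum_prod hsumF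
    _ = ∑' p : ℤ × ℤ, ((∑' k, G1 (p, k)) + ∑' k, G2 (p, k)) := tsum_congr inner
    _ = (∑' p : ℤ × ℤ, ∑' k, G1 (p, k)) + ∑' p : ℤ × ℤ, ∑' k, G2 (p, k) :=
        Summable.tsum_add hsumG1.prod hsumG2.prod
    _ = (∑' q, G1 q) + ∑' q, G2 q := by rw [← Summable.tsum_prod hsumG1, ← Summable.tsum_prod hsumG2]
    _ = dd D s * cc C s t + dd D t * cc C s t := by rw [hG1tsum, hG2tsum]

lemma cc_slice_diff' (hC : ∀ k l : ℤ,
      ‖C (k, l)‖ ≤ K * Real.exp (-r * ((|k| : ℝ) + (|l| : ℝ))))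
    (hK : 0 < K) (hr : 0 < r) {s : ℂ} (hs : |s.re| < r) :
    DifferentiableOn ℂ (fun t => cc C s t) (strip r) := by
  apply differentiableOn_tsum (strip_open r)
  · intro p
    apply Differentiable.const_mul
    apply Complex.differentiable_exp.comp
    exact (differentiable_const _).add (differentiable_id.const_mul _)
  · intro z hz
    have hzr : |z.re| < r := hz
    refine ⟨(r - |z.re|) / 2, by linarith [abs_nonneg z.re], ?_,
      fun p : ℤ × ℤ => (K * Real.exp (-((r - |s.re|) * |(p.1 : ℝ)|))) *
        Real.exp (-((r - (|z.re| + r) / 2) * |(p.2 : ℝ)|)), ?_, ?_⟩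
    · intro w hw
      exact lt_of_le_of_lt (ball_subset_strip hzr w hw) (by linarith)
    · have h1 : Summable fun m : ℤ => K * Real.exp (-((r - |s.re|) * |(m : ℝ)|)) :=
        (summable_exp_neg_abs (by linarith)).mul_left K
      have h2 : Summable fun m : ℤ => Real.exp (-((r - (|z.re| + r) / 2) * |(m : ℝ)|)) :=
        summable_exp_neg_abs (by linarith)
      exact h1.mul_of_nonneg h2 (fun m => by positivity) (fun m => Real.exp_nonneg _)
    · intro p w hw
      exact normC_le_s11 hC hK (le_refl |s.re|) (ball_subset_strip hzr w hw) p

lemma norm_exp_mul_I (k : ℤ) (θ : ℝ) : ‖Complex.exp ((k : ℂ) * ((θ : ℂ) * Complex.I))‖ = 1 := by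
  rw [Complex.norm_exp]
  norm_num [Complex.mul_re]

lemma cc_ne_zero (hC : ∀ k l : ℤ,
      ‖C (k, l)‖ ≤ K * Real.exp (-r * ((|k| : ℝ) + (|l| : ℝ))))
    (hK : 0 < K) (hr : 0 < r) (hne : ∃ k l : ℤ, C (k, l) ≠ 0) :
    ∃ θ φ : ℝ, cc C ((θ : ℂ) * Complex.I) ((φ : ℂ) * Complex.I) ≠ 0 := by
  by_contra hall
  push_neg at hall
  obtain ⟨k0, l0, hkl⟩ := hne
  apply hkl
  have hre : ∀ θ : ℝ, (((θ : ℂ)) * Complex.I).re = 0 := fun θ => by simp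
  have hre' : ∀ θ : ℝ, |(((θ : ℂ)) * Complex.I).re| ≤ r / 2 := fun θ => by
    rw [hre]; simp; positivity
  -- the partial Fourier coefficients
  have hCrow : ∀ (k : ℤ) (φ : ℝ), Summable fun l : ℤ =>
      ‖C (k, l) * Complex.exp ((l : ℂ) * ((φ : ℂ) * Complex.I))‖ := by
    intro k φ
    apply Summable.of_nonneg_of_le (fun l => norm_nonneg _)
      (fun l => ?_) (((summable_exp_neg_abs hr).mul_left (K * Real.exp (-(r * |(k : ℝ)|)))))
    rw [norm_mul, norm_exp_mul_I, mul_one]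
    calc ‖C (k, l)‖ ≤ K * Real.exp (-r * (|(k : ℝ)| + |(l : ℝ)|)) := hC k l
      _ = K * Real.exp (-(r * |(k : ℝ)|)) * Real.exp (-(r * |(l : ℝ)|)) := by
          rw [mul_assoc, ← Real.exp_add]; congr 2; ring
  set a : ℝ → ℤ → ℂ := fun φ k =>
    ∑' l : ℤ, C (k, l) * Complex.exp ((l : ℂ) * ((φ : ℂ) * Complex.I)) with ha
  have hZ : Summable fun l : ℤ => Real.exp (-(r * |(l : ℝ)|)) := summable_exp_neg_abs hr
  have hanorm : ∀ (φ : ℝ), Summable fun k => ‖a φ k‖ := by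
    intro φ
    apply Summable.of_nonneg_of_le (fun k => norm_nonneg _) (fun k => ?_)
      ((hZ.mul_left K).mul_right (∑' l : ℤ, Real.exp (-(r * |(l : ℝ)|))))
    calc ‖a φ k‖ ≤ ∑' l : ℤ, ‖C (k, l) * Complex.exp ((l : ℂ) * ((φ : ℂ) * Complex.I))‖ :=
          norm_tsum_le_tsum_norm (hCrow k φ)
      _ ≤ ∑' l : ℤ, (K * Real.exp (-(r * |(k : ℝ)|))) * Real.exp (-(r * |(l : ℝ)|)) := by
          apply Summable.tsum_le_tsum _ (hCrow k φ) ((hZ.mul_left _))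
          intro l
          rw [norm_mul, norm_exp_mul_I, mul_one]
          calc ‖C (k, l)‖ ≤ K * Real.exp (-r * (|(k : ℝ)| + |(l : ℝ)|)) := hC k l
            _ = K * Real.exp (-(r * |(k : ℝ)|)) * Real.exp (-(r * |(l : ℝ)|)) := by
                rw [mul_assoc, ← Real.exp_add]; congr 2; ring
      _ = K * Real.exp (-(r * |(k : ℝ)|)) * ∑' l : ℤ, Real.exp (-(r * |(l : ℝ)|)) :=
          tsum_mul_left
  -- for each φ, the fourier expansion in θ of cc vanishes
  have hrow0 : ∀ (φ : ℝ) (k : ℤ), a φ k = 0 := by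
    intro φ
    apply fourier_unique (hanorm φ)
    intro θ
    have SC0 : Summable fun p : ℤ × ℤ =>
        ‖C p * Complex.exp ((p.1 : ℂ) * ((θ : ℂ) * Complex.I) +
          (p.2 : ℂ) * ((φ : ℂ) * Complex.I))‖ :=
      summableC hC hK (by linarith : r / 2 < r) (by linarith : r / 2 < r) (hre' θ) (hre' φ)
    have hcc := hall θ φ
    rw [cc, Summable.tsum_prod SC0.of_norm] at hcc
    rw [← hcc]
    apply tsum_congr
    intro k
    rw [show (fun l => C (k, l) * Complex.exp ((k : ℂ) * ((θ : ℂ) * Complex.I) +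
        (l : ℂ) * ((φ : ℂ) * Complex.I))) = fun l =>
        (C (k, l) * Complex.exp ((l : ℂ) * ((φ : ℂ) * Complex.I))) *
          Complex.exp ((k : ℂ) * (θ : ℂ) * Complex.I) from funext fun l => by
          rw [Complex.exp_add]; ring_nf]
    rw [tsum_mul_right]
  -- now fourier uniqueness in φ for the row k0
  have hCnorm : Summable fun l : ℤ => ‖C (k0, l)‖ := by
    apply Summable.of_nonneg_of_le (fun l => norm_nonneg _) (fun l => ?_)
      ((hZ.mul_left (K * Real.exp (-(r * |(k0 : ℝ)|)))))
    calc ‖C (k0, l)‖ ≤ K * Real.exp (-r * (|(k0 : ℝ)| + |(l : ℝ)|)) := hC k0 l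
      _ = K * Real.exp (-(r * |(k0 : ℝ)|)) * Real.exp (-(r * |(l : ℝ)|)) := by
          rw [mul_assoc, ← Real.exp_add]; congr 2; ring
  apply fourier_unique hCnorm
  intro φ
  have := hrow0 φ k0
  rw [ha] at this
  rw [← this]
  apply tsum_congr
  intro l
  rw [mul_assoc]

end Main





/-- Theorem 1: On an infinite one-dimensional lattice, there is
no nontrivial local translation-invariant difference operator `D` satisfying
the Leibniz rule with respect to a nontrivial local translation-invariant
product rule `C` obeying the associative law: `D` must vanish identically. -/
theorem stmt_11 (C : ℤ × ℤ → ℂ) (D : ℤ → ℂ) (K r : ℝ) (hK : 0 < K) (hr : 0 < r)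
    (hC : ∀ k l : ℤ,
      ‖C (k, l)‖ ≤ K * Real.exp (-r * ((|k| : ℝ) + (|l| : ℝ))))
    (hD : ∀ m : ℤ, ‖D m‖ ≤ K * Real.exp (-r * (|m| : ℝ)))
    (hne : ∃ k l : ℤ, C (k, l) ≠ 0)
    (hzero : ∑' m : ℤ, D m = 0)
    (hassoc : ∀ l m n k : ℤ,
      ∑' j : ℤ, C (l - j, m - j) * C (j - k, n - k) =
        ∑' j : ℤ, C (l - k, j - k) * C (m - j, n - j))
    (hleib : ∀ l m n : ℤ,
      ∑' k : ℤ, C (l - k, m - k) * D (k - n) =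
        (∑' k : ℤ, C (k - n, m - n) * D (l - k)) +
          ∑' k : ℤ, C (l - n, k - n) * D (m - k)) :
    ∀ m : ℤ, D m = 0 := by
  have hr2 : (0:ℝ) < r / 2 := by linarith
  have hdd : DifferentiableOn ℂ (dd D) (strip r) := dd_diff hD hK hr
  have hsub : strip (r / 2) ⊆ strip r := by
    intro z hz
    have hz' : |z.re| < r / 2 := hz
    show |z.re| < r
    linarith
  obtain ⟨θ0, φ0, hc0⟩ := cc_ne_zero hC hK hr hne
  have hre0 : ∀ θ : ℝ, (((θ : ℂ)) * Complex.I).re = 0 := fun θ => by simp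
  have hmem : ∀ θ : ℝ, ((θ : ℂ) * Complex.I) ∈ strip (r / 2) := by
    intro θ
    show |((θ : ℂ) * Complex.I).re| < r / 2
    rw [hre0, abs_zero]
    exact hr2
  have hopen2 := strip_open (r / 2)
  have hpre2 := strip_preconnected (r / 2)
  -- shifted generating function is differentiable
  have hshift : ∀ t : ℂ, |t.re| < r / 2 →
      DifferentiableOn ℂ (fun s => dd D (s + t)) (strip (r / 2)) := by
    intro t ht z hz
    have hz2 : |z.re| < r / 2 := hz
    have hz' : |(z + t).re| < r := by
      rw [Complex.add_re]
      calc |z.re + t.re| ≤ |z.re| + |t.re| := abs_add_le _ _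
        _ < r := by linarith
    have h1 : DifferentiableAt ℂ (dd D) (z + t) :=
      hdd.differentiableAt ((strip_open r).mem_nhds hz')
    exact (h1.comp z (differentiableAt_id.add_const t)).differentiableWithinAt
  have hshift' : ∀ s : ℂ, |s.re| < r / 2 →
      DifferentiableOn ℂ (fun u => dd D (s + u)) (strip (r / 2)) := by
    intro s hs z hz
    have hz2 : |z.re| < r / 2 := hz
    have hz' : |(s + z).re| < r := by
      rw [Complex.add_re]
      calc |s.re + z.re| ≤ |s.re| + |z.re| := abs_add_le _ _
        _ < r := by linarith
    have h1 : DifferentiableAt ℂ (dd D) (s + z) :=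
      hdd.differentiableAt ((strip_open r).mem_nhds hz')
    exact (h1.comp z (differentiableAt_id.const_add s)).differentiableWithinAt
  -- Step A: additivity for t where the slice of cc does not vanish
  have hkeyA : ∀ t : ℂ, t ∈ strip (r / 2) → cc C ((θ0 : ℂ) * Complex.I) t ≠ 0 →
      ∀ s ∈ strip (r / 2), dd D (s + t) = dd D s + dd D t := by
    intro t ht hct
    have ht2 : |t.re| < r / 2 := ht
    have htr : |t.re| < r := by linarith
    set e : ℂ → ℂ := fun s => dd D (s + t) - dd D s - dd D t with he
    have heA : AnalyticOnNhd ℂ e (strip (r / 2)) := by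
      apply DifferentiableOn.analyticOnNhd _ hopen2
      exact ((hshift t ht2).sub (hdd.mono hsub)).sub (differentiableOn_const _)
    have hcA : DifferentiableOn ℂ (fun s => cc C s t) (strip r) := cc_slice_diff hC hK hr htr
    have hz0 : ((θ0 : ℂ) * Complex.I) ∈ strip (r / 2) := hmem θ0
    have hev : e =ᶠ[nhds ((θ0 : ℂ) * Complex.I)] 0 := by
      have hc_at : ContinuousAt (fun s => cc C s t) ((θ0 : ℂ) * Complex.I) :=
        (hcA.differentiableAt ((strip_open r).mem_nhds (hsub hz0))).continuousAt
      have h1 : ∀ᶠ s in nhds ((θ0 : ℂ) * Complex.I), cc C s t ≠ 0 := hc_at.eventually_ne hct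
      have h2 : ∀ᶠ s in nhds ((θ0 : ℂ) * Complex.I), s ∈ strip (r / 2) :=
        hopen2.eventually_mem hz0
      filter_upwards [h1, h2] with s hne' hsmem
      have hs2 : |s.re| < r / 2 := hsmem
      have hker := key_identity hC hD hK hr hleib hs2 ht2
      have hprod : cc C s t * (dd D (s + t) - dd D s - dd D t) = 0 := by
        rw [mul_sub, mul_sub, hker]
        ring
      have h0 := (mul_eq_zero.1 hprod).resolve_left hne'
      simpa [he] using h0
    have hEq := heA.eqOn_zero_of_preconnected_of_eventuallyEq_zero hpre2 hz0 hev
    intro s hsmem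
    have h0 : dd D (s + t) - dd D s - dd D t = 0 := hEq hsmem
    have : dd D (s + t) - (dd D s + dd D t) = 0 := by rw [← h0]; ring
    exact sub_eq_zero.mp this
  -- Step B: additivity everywhere on the half strip
  have hadd : ∀ s ∈ strip (r / 2), ∀ t ∈ strip (r / 2), dd D (s + t) = dd D s + dd D t := by
    intro s hsm t htm
    have hs2 : |s.re| < r / 2 := hsm
    set e2 : ℂ → ℂ := fun u => dd D (s + u) - dd D s - dd D u with he2
    have he2A : AnalyticOnNhd ℂ e2 (strip (r / 2)) := by
      apply DifferentiableOn.analyticOnNhd _ hopen2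
      exact ((hshift' s hs2).sub (differentiableOn_const _)).sub (hdd.mono hsub)
    have hθ0r : |(((θ0 : ℂ)) * Complex.I).re| < r := by rw [hre0, abs_zero]; exact hr
    have hcA' : DifferentiableOn ℂ (fun u => cc C ((θ0 : ℂ) * Complex.I) u) (strip r) :=
      cc_slice_diff' hC hK hr hθ0r
    have hz0' : ((φ0 : ℂ) * Complex.I) ∈ strip (r / 2) := hmem φ0
    have hev2 : e2 =ᶠ[nhds ((φ0 : ℂ) * Complex.I)] 0 := by
      have hc_at : ContinuousAt (fun u => cc C ((θ0 : ℂ) * Complex.I) u)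
          ((φ0 : ℂ) * Complex.I) :=
        (hcA'.differentiableAt ((strip_open r).mem_nhds (hsub hz0'))).continuousAt
      have h1 : ∀ᶠ u in nhds ((φ0 : ℂ) * Complex.I),
          cc C ((θ0 : ℂ) * Complex.I) u ≠ 0 := hc_at.eventually_ne hc0
      have h2 : ∀ᶠ u in nhds ((φ0 : ℂ) * Complex.I), u ∈ strip (r / 2) :=
        hopen2.eventually_mem hz0'
      filter_upwards [h1, h2] with u hu1 hu2
      have hval := hkeyA u hu2 hu1 s hsm
      show dd D (s + u) - dd D s - dd D u = 0
      rw [hval]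
      ring
    have hEq2 := he2A.eqOn_zero_of_preconnected_of_eventuallyEq_zero hpre2 hz0' hev2
    have h0 : dd D (s + t) - dd D s - dd D t = 0 := hEq2 htm
    have : dd D (s + t) - (dd D s + dd D t) = 0 := by rw [← h0]; ring
    exact sub_eq_zero.mp this
  -- Step C: the function is additive and periodic on the imaginary axis, hence zero
  have hψadd : ∀ θ φ : ℝ, dd D ((((θ + φ : ℝ)) : ℂ) * Complex.I) =
      dd D ((θ : ℂ) * Complex.I) + dd D ((φ : ℂ) * Complex.I) := by
    intro θ φ
    have := hadd _ (hmem θ) _ (hmem φ)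
    rw [show (((θ + φ : ℝ)) : ℂ) * Complex.I =
      (θ : ℂ) * Complex.I + (φ : ℂ) * Complex.I by push_cast; ring]
    exact this
  set ψ : ℝ →+ ℂ := AddMonoidHom.mk' (fun θ => dd D ((θ : ℂ) * Complex.I)) hψadd with hψ
  have hψc : Continuous ψ := by
    have hg : Continuous fun θ : ℝ => ((θ : ℂ) * Complex.I) := by continuity
    exact hdd.continuousOn.comp_continuous hg fun θ => hsub (hmem θ)
  have hψsmul : ∀ θ : ℝ, ψ θ = θ • ψ 1 := by
    intro θ
    have h1 := map_real_smul ψ hψc θ 1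
    rwa [smul_eq_mul, mul_one] at h1
  have h2pi : ψ (2 * Real.pi) = 0 := by
    show dd D (((2 * Real.pi : ℝ) : ℂ) * Complex.I) = 0
    rw [show dd D (((2 * Real.pi : ℝ) : ℂ) * Complex.I) =
        ∑' m : ℤ, D m * Complex.exp ((m : ℂ) * (((2 * Real.pi : ℝ) : ℂ) * Complex.I)) from rfl]
    have hterm : ∀ m : ℤ, D m * Complex.exp ((m : ℂ) * (((2 * Real.pi : ℝ) : ℂ) * Complex.I))
        = D m := by
      intro m
      rw [show (m : ℂ) * (((2 * Real.pi : ℝ) : ℂ) * Complex.I) =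
        (m : ℂ) * (2 * (Real.pi : ℂ) * Complex.I) by push_cast; ring]
      rw [Complex.exp_int_mul_two_pi_mul_I, mul_one]
    rw [tsum_congr hterm]
    exact hzero
  have hψ1 : ψ 1 = 0 := by
    have h1 := hψsmul (2 * Real.pi)
    rw [h2pi] at h1
    have h2 : (2 * Real.pi) • ψ 1 = 0 := h1.symm
    rcases smul_eq_zero.mp h2 with h | h
    · exact absurd h (by positivity)
    · exact h
  have hψ0 : ∀ θ : ℝ, ψ θ = 0 := by
    intro θ
    rw [hψsmul θ, hψ1, smul_zero]
  -- conclude by Fourier uniqueness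
  have hDnorm : Summable fun m : ℤ => ‖D m‖ := by
    apply Summable.of_nonneg_of_le (fun m => norm_nonneg _) (fun m => ?_)
      ((summable_exp_neg_abs hr).mul_left K)
    rw [show -(r * |(m : ℝ)|) = -r * |(m : ℝ)| by ring]
    exact hD m
  apply fourier_unique hDnorm
  intro θ
  have hz := hψ0 θ
  rw [hψ] at hz
  simp only [AddMonoidHom.mk'_apply] at hz
  rw [show (fun m : ℤ => D m * Complex.exp ((m : ℂ) * (θ : ℂ) * Complex.I)) =
    fun m : ℤ => D m * Complex.exp ((m : ℂ) * ((θ : ℂ) * Complex.I)) from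
    funext fun m => by rw [mul_assoc]]
  exact hz
end

section
/- (Theorem 2) Let C : ℤ × ℤ → ℂ and D : ℤ → ℂ and suppose: (i) there exist K > 0 and r > 0 with |C(k,l)| ≤ K·exp(−r(|k|+|l|)) and |D(m)| ≤ K·exp(−r|m|) for all k, l, m ∈ ℤ (locality); (ii) C is not identically zero; (iii) Σ_{m∈ℤ} D(m) = 0; (iv) the Leibniz rule holds: for all l, m, n ∈ ℤ, Σ_{k∈ℤ} C(l−k, m−k) D(k−n) = Σ_{k∈ℤ} C(k−n, m−n) D(l−k) + Σ_{k∈ℤ} C(l−n, k−n) D(m−k). Then D(m) = 0 for all m ∈ ℤ. -/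
open Complex Filter MeasureTheory Set Real

noncomputable section
namespace Stmt12


lemma summable_exp_nat {s : ℝ} (hs : 0 < s) : Summable fun n : ℕ => Real.exp (-(s * n)) := by
  have h1 : Real.exp (-s) < 1 := Real.exp_lt_one_iff.mpr (by linarith)
  have := summable_geometric_of_lt_one (Real.exp_pos (-s)).le h1
  refine this.congr fun n => ?_
  rw [← Real.exp_nat_mul]
  ring_nf

lemma summable_exp_int {s : ℝ} (hs : 0 < s) :
    Summable fun m : ℤ => Real.exp (-(s * |(m : ℝ)|)) := by
  apply Summable.of_nat_of_neg
  · refine (summable_exp_nat hs).congr fun n => ?_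
    simp
  · refine (summable_exp_nat hs).congr fun n => ?_
    simp



variable {ι : Type} [Countable ι]

lemma norm_term (c : ℂ) (n : ℤ) (τ : ℂ) :
    ‖c * Complex.exp ((n : ℂ) * τ * I)‖ = ‖c‖ * Real.exp (-(n * τ.im)) := by
  rw [norm_mul, Complex.norm_exp]
  congr 2
  simp [Complex.mul_re, Complex.mul_im]

lemma strip_open (s : ℝ) : IsOpen {τ : ℂ | |τ.im| < s} := by
  have : {τ : ℂ | |τ.im| < s} = (fun τ : ℂ => |τ.im|) ⁻¹' (Iio s) := rfl
  rw [this]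
  exact (Complex.continuous_im.abs).isOpen_preimage _ isOpen_Iio

lemma strip_preconnected (s : ℝ) : IsPreconnected {τ : ℂ | |τ.im| < s} := by
  have hconv : Convex ℝ {τ : ℂ | |τ.im| < s} := by
    have : {τ : ℂ | |τ.im| < s} = Complex.imLm ⁻¹' (Ioo (-s) s) := by
      ext τ; simp [abs_lt, Complex.imLm]
    rw [this]
    exact (convex_Ioo (-s) s).linear_preimage _
  exact hconv.isPreconnected

lemma F_diffOn (c : ι → ℂ) (n : ι → ℤ) (s : ℝ)
    (hsum : Summable fun i => ‖c i‖ * Real.exp (s * |(n i : ℝ)|)) :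
    DifferentiableOn ℂ (fun τ : ℂ => ∑' i, c i * Complex.exp ((n i : ℂ) * τ * I))
      {τ : ℂ | |τ.im| < s} := by
  apply differentiableOn_tsum_of_summable_norm hsum
  · intro i
    apply DifferentiableOn.mul (differentiableOn_const _)
    apply Differentiable.differentiableOn
    apply Complex.differentiable_exp.comp
    exact (differentiable_id.const_mul _).mul_const _
  · exact strip_open s
  · intro i τ hτ
    rw [norm_term]
    apply mul_le_mul_of_nonneg_left _ (norm_nonneg _)
    apply Real.exp_le_exp.mpr
    have h1 : -((n i : ℝ) * τ.im) ≤ |(n i : ℝ)| * |τ.im| :=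
      le_trans (neg_le_abs _) (le_of_eq (abs_mul _ _))
    have hτ' : |τ.im| < s := hτ
    have h2 : |(n i : ℝ)| * |τ.im| ≤ |(n i : ℝ)| * s :=
      mul_le_mul_of_nonneg_left hτ'.le (abs_nonneg _)
    push_cast
    push_cast at h1 h2
    linarith

lemma F_ext_zero (c : ι → ℂ) (n : ι → ℤ) (s : ℝ) (hs : 0 < s)
    (hsum : Summable fun i => ‖c i‖ * Real.exp (s * |(n i : ℝ)|))
    (a b : ℝ) (hab : a < b)
    (hvan : ∀ θ : ℝ, θ ∈ Ioo a b → ∑' i, c i * Complex.exp ((n i : ℂ) * θ * I) = 0) :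
    ∀ θ : ℝ, ∑' i, c i * Complex.exp ((n i : ℂ) * θ * I) = 0 := by
  set F : ℂ → ℂ := fun τ => ∑' i, c i * Complex.exp ((n i : ℂ) * τ * I) with hF
  set U : Set ℂ := {τ : ℂ | |τ.im| < s} with hU
  have hopen : IsOpen U := strip_open s
  have hdiff : DifferentiableOn ℂ F U := F_diffOn c n s hsum
  have han : AnalyticOnNhd ℂ F U := hdiff.analyticOnNhd hopen
  -- accumulation point
  set m : ℝ := (a + b) / 2 with hm
  set δ : ℝ := (b - a) / 2 with hδ
  have hδpos : 0 < δ := by simp [hδ]; linarith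
  have hz₀ : (m : ℂ) ∈ U := by simp [hU]; linarith
  have hfreq : ∃ᶠ z in nhdsWithin (m : ℂ) {(m : ℂ)}ᶜ, F z = 0 := by
    have hseq : Tendsto (fun k : ℕ => ((m + δ / (k + 2) : ℝ) : ℂ)) atTop
        (nhdsWithin (m : ℂ) {(m : ℂ)}ᶜ) := by
      apply tendsto_nhdsWithin_of_tendsto_nhds_of_eventually_within
      · have h0 : Tendsto (fun k : ℕ => δ / (k + 2 : ℝ)) atTop (nhds 0) := by
          apply Tendsto.div_atTop (tendsto_const_nhds)
          exact tendsto_atTop_add_const_right _ _ tendsto_natCast_atTop_atTop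
        have : Tendsto (fun k : ℕ => (m + δ / (k + 2 : ℝ))) atTop (nhds m) := by
          simpa using tendsto_const_nhds.add h0
        exact (Complex.continuous_ofReal.continuousAt).tendsto.comp this
      · filter_upwards with k
        simp only [mem_compl_iff, mem_singleton_iff]
        intro h
        have := Complex.ofReal_injective h
        have hpos : 0 < δ / (k + 2 : ℝ) := by positivity
        linarith [this]
    apply hseq.frequently
    apply Filter.Eventually.frequently
    filter_upwards with k
    apply hvan
    constructor
    · have hpos : 0 < δ / (k + 2 : ℝ) := by positivity
      simp only [hm]; linarith
    · have hle : δ / (k + 2 : ℝ) ≤ δ / 2 := by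
        apply div_le_div_of_nonneg_left hδpos.le (by norm_num)
        norm_num
      simp only [hm, hδ] at *
      linarith
  have := han.eqOn_zero_of_preconnected_of_frequently_eq_zero (strip_preconnected s) hz₀ hfreq
  intro θ
  have hθ : (θ : ℂ) ∈ U := by simp [hU, hs]
  exact this hθ

lemma F_cont (c : ι → ℂ) (n : ι → ℤ) (s : ℝ) (hs : 0 < s)
    (hsum : Summable fun i => ‖c i‖ * Real.exp (s * |(n i : ℝ)|)) :
    Continuous fun θ : ℝ => ∑' i, c i * Complex.exp ((n i : ℂ) * θ * I) := by
  have hdiff := F_diffOn c n s hsum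
  have hcont := hdiff.continuousOn
  have : ∀ θ : ℝ, ContinuousAt (fun τ : ℂ => ∑' i, c i * Complex.exp ((n i : ℂ) * τ * I)) θ := by
    intro θ
    exact hcont.continuousAt ((strip_open s).mem_nhds (by simp [hs]))
  exact continuous_iff_continuousAt.mpr fun θ =>
    ((this θ).comp Complex.continuous_ofReal.continuousAt)



lemma exp_int_integral (k : ℤ) :
    ∫ θ in Ioc (0:ℝ) (2*π), Complex.exp ((k:ℂ) * θ * I) =
      if k = 0 then ((2*π : ℝ) : ℂ) else 0 := by
  have hswap : ∫ θ in Ioc (0:ℝ) (2*π), Complex.exp ((k:ℂ) * θ * I)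
      = ∫ θ in (0:ℝ)..(2*π), Complex.exp ((k:ℂ) * θ * I) :=
    (intervalIntegral.integral_of_le (by positivity)).symm
  rw [hswap]
  by_cases hk : k = 0
  · subst hk
    simp
  · have hc : ((k:ℂ) * I) ≠ 0 := by
      simp [Complex.ext_iff, hk]
    have hre : ∀ θ : ℝ, (k:ℂ) * θ * I = ((k:ℂ) * I) * θ := by intro θ; ring
    simp_rw [hre]
    rw [integral_exp_mul_complex hc]
    have h1 : (k:ℂ) * I * ((2*π:ℝ):ℂ) = (k:ℂ) * (2 * π * I) := by push_cast; ring
    have h2 : Complex.exp ((k:ℂ) * (2 * π * I)) = 1 := Complex.exp_int_mul_two_pi_mul_I k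
    rw [h1, h2]
    simp [hk]

lemma norm_unit_exp (x : ℝ) (k : ℤ) : ‖Complex.exp ((k:ℂ) * x * I)‖ = 1 := by
  rw [Complex.norm_exp]
  have : ((k:ℂ) * x * I).re = 0 := by simp [Complex.mul_re, Complex.mul_im]
  rw [this, Real.exp_zero]

lemma fourier_zero (c : ℤ → ℂ) (hc : Summable fun k => ‖c k‖)
    (h0 : ∀ θ : ℝ, (∑' k : ℤ, c k * Complex.exp ((k:ℂ) * θ * I)) = 0) (m : ℤ) :
    c m = 0 := by
  set μ := volume.restrict (Ioc (0:ℝ) (2*π)) with hμ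
  set G : ℤ → ℝ → ℂ := fun k θ => c k * Complex.exp ((k:ℂ) * θ * I) *
    Complex.exp ((-m : ℂ) * θ * I) with hG
  have hGnorm : ∀ k θ, ‖G k θ‖ = ‖c k‖ := by
    intro k θ
    rw [hG]
    simp only [norm_mul]
    have h1 := norm_unit_exp θ k
    have h2 := norm_unit_exp θ (-m)
    push_cast at h2 ⊢
    rw [h1, h2]; ring
  have hint : ∀ k, Integrable (G k) μ := by
    intro k
    rw [hμ]
    apply Continuous.integrableOn_Ioc
    fun_prop
  have hsumint : Summable fun k => ∫ θ, ‖G k θ‖ ∂μ := by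
    have : ∀ k, ∫ θ, ‖G k θ‖ ∂μ = (volume (Ioc (0:ℝ) (2*π))).toReal * ‖c k‖ := by
      intro k
      simp_rw [hGnorm]
      rw [hμ, setIntegral_const, smul_eq_mul, measureReal_def]
    simp_rw [this]
    exact hc.mul_left _
  have hswap := MeasureTheory.integral_tsum_of_summable_integral_norm hint hsumint
  -- RHS is zero
  have hRHS : (∫ θ, (∑' k, G k θ) ∂μ) = 0 := by
    have : ∀ θ : ℝ, (∑' k, G k θ) = 0 := by
      intro θ
      have : (∑' k, G k θ) = (∑' k, c k * Complex.exp ((k:ℂ) * θ * I)) *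
          Complex.exp ((-m : ℂ) * θ * I) := by
        rw [tsum_mul_right]
      rw [this, h0, zero_mul]
    simp_rw [this]
    simp
  -- each integral computed
  have hterm : ∀ k, (∫ θ, G k θ ∂μ) = if k = m then ((2*π:ℝ):ℂ) * c m else 0 := by
    intro k
    have hcomb : ∀ θ : ℝ, G k θ = c k * Complex.exp (((k - m : ℤ):ℂ) * θ * I) := by
      intro θ
      simp only [hG]
      rw [mul_assoc, ← Complex.exp_add]
      congr 2
      push_cast
      ring
    simp_rw [hcomb]
    rw [MeasureTheory.integral_const_mul, hμ, exp_int_integral (k - m)]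
    by_cases hkm : k = m
    · subst hkm; simp [mul_comm]
    · have : ¬ (k - m = 0) := by omega
      simp [this, hkm]
  have hL : (∑' k, ∫ θ, G k θ ∂μ) = ((2*π:ℝ):ℂ) * c m := by
    rw [tsum_eq_single m]
    · simp [hterm]
    · intro k hk
      rw [hterm k]
      simp [hk]
  rw [hRHS, hL] at hswap
  have h2π : ((2*π:ℝ):ℂ) ≠ 0 := by
    simp [Real.pi_ne_zero]
  rcases mul_eq_zero.mp hswap with h | h
  · exact absurd h h2π
  · exact h



def w (θ : ℝ) (k : ℤ) : ℂ := Complex.exp ((k : ℂ) * θ * I)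

lemma w_norm (θ : ℝ) (k : ℤ) : ‖w θ k‖ = 1 := norm_unit_exp θ k

lemma w_index_add (θ : ℝ) (a k : ℤ) : w θ (a + k) = w θ a * w θ k := by
  unfold w; rw [← Complex.exp_add]; congr 1; push_cast; ring

lemma w_arg_add (θ φ : ℝ) (k : ℤ) : w (θ + φ) k = w θ k * w φ k := by
  unfold w; rw [← Complex.exp_add]; congr 1; push_cast; ring

def eL : ((ℤ×ℤ)×ℤ) ≃ ((ℤ×ℤ)×ℤ) where
  toFun q := ((q.1.1 + q.2, q.1.2 + q.2), q.2)
  invFun q := ((q.1.1 - q.2, q.1.2 - q.2), q.2)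
  left_inv q := by obtain ⟨⟨a,b⟩,k⟩ := q; simp
  right_inv q := by obtain ⟨⟨a,b⟩,k⟩ := q; simp

def e1 : ((ℤ×ℤ)×ℤ) ≃ ((ℤ×ℤ)×ℤ) where
  toFun q := ((q.1.1 + q.2, q.1.2), q.1.1)
  invFun q := ((q.2, q.1.2), q.1.1 - q.2)
  left_inv q := by obtain ⟨⟨a,b⟩,k⟩ := q; simp
  right_inv q := by obtain ⟨⟨a,b⟩,k⟩ := q; simp

def e2 : ((ℤ×ℤ)×ℤ) ≃ ((ℤ×ℤ)×ℤ) where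
  toFun q := ((q.1.1, q.1.2 + q.2), q.1.2)
  invFun q := ((q.1.1, q.2), q.1.2 - q.2)
  left_inv q := by obtain ⟨⟨a,b⟩,k⟩ := q; simp
  right_inv q := by obtain ⟨⟨a,b⟩,k⟩ := q; simp

lemma key (C : ℤ×ℤ → ℂ) (D : ℤ → ℂ)
    (hSC : Summable fun p : ℤ×ℤ => ‖C p‖) (hSD : Summable fun k : ℤ => ‖D k‖)
    (hl : ∀ l m : ℤ, (∑' k : ℤ, C (l-k, m-k) * D k) =
      (∑' k : ℤ, C (k, m) * D (l-k)) + ∑' k : ℤ, C (l, k) * D (m-k))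
    (θ φ : ℝ) :
    (∑' p : ℤ×ℤ, C p * w θ p.1 * w φ p.2) * (∑' k : ℤ, D k * w (θ+φ) k) =
      (∑' p : ℤ×ℤ, C p * w θ p.1 * w φ p.2) * (∑' k : ℤ, D k * w θ k) +
      (∑' p : ℤ×ℤ, C p * w θ p.1 * w φ p.2) * (∑' k : ℤ, D k * w φ k) := by
  classical
  set SL : (ℤ×ℤ)×ℤ → ℂ :=
    fun q => w θ q.1.1 * w φ q.1.2 * (C (q.1.1 - q.2, q.1.2 - q.2) * D q.2) with hSLdef
  set S1 : (ℤ×ℤ)×ℤ → ℂ :=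
    fun q => w θ q.1.1 * w φ q.1.2 * (C (q.2, q.1.2) * D (q.1.1 - q.2)) with hS1def
  set S2 : (ℤ×ℤ)×ℤ → ℂ :=
    fun q => w θ q.1.1 * w φ q.1.2 * (C (q.1.1, q.2) * D (q.1.2 - q.2)) with hS2def
  -- summability of the base product family
  have hbase : Summable fun q : (ℤ×ℤ)×ℤ => ‖C q.1‖ * ‖D q.2‖ :=
    hSC.mul_of_nonneg hSD (fun _ => norm_nonneg _) (fun _ => norm_nonneg _)
  have hnf : ∀ (l m : ℤ) (z : ℂ), ‖w θ l * w φ m * z‖ = ‖z‖ := by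
    intro l m z
    rw [norm_mul, norm_mul, w_norm, w_norm]; ring
  -- summability of the three families
  have hSL' : Summable fun q => ‖SL (eL q)‖ := by
    apply hbase.congr
    intro ⟨⟨a,b⟩,k⟩
    simp only [hSLdef, eL, Equiv.coe_fn_mk, hnf, norm_mul]
    simp
  have hSL : Summable SL := eL.summable_iff.mp (Summable.of_norm hSL')
  have hS1' : Summable fun q => ‖S1 (e1 q)‖ := by
    apply hbase.congr
    intro ⟨⟨a,b⟩,k⟩
    simp only [hS1def, e1, Equiv.coe_fn_mk, hnf, norm_mul]
    simp
  have hS1 : Summable S1 := e1.summable_iff.mp (Summable.of_norm hS1')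
  have hS2' : Summable fun q => ‖S2 (e2 q)‖ := by
    apply hbase.congr
    intro ⟨⟨a,b⟩,k⟩
    simp only [hS2def, e2, Equiv.coe_fn_mk, hnf, norm_mul]
    simp
  have hS2 : Summable S2 := e2.summable_iff.mp (Summable.of_norm hS2')
  -- norm-summability of the factor families
  have hfC : Summable fun p : ℤ×ℤ => ‖C p * w θ p.1 * w φ p.2‖ := by
    apply hSC.congr
    intro ⟨a,b⟩
    rw [norm_mul, norm_mul, w_norm, w_norm]; ring
  have hfD : ∀ ψ : ℝ, Summable fun k : ℤ => ‖D k * w ψ k‖ := by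
    intro ψ
    apply hSD.congr
    intro k
    rw [norm_mul, w_norm, mul_one]
  -- the three product identities
  have eqL : ∑' q, SL q =
      (∑' p : ℤ×ℤ, C p * w θ p.1 * w φ p.2) * (∑' k : ℤ, D k * w (θ+φ) k) := by
    rw [← eL.tsum_eq SL]
    have hptw : ∀ q : (ℤ×ℤ)×ℤ,
        SL (eL q) = (C q.1 * w θ q.1.1 * w φ q.1.2) * (D q.2 * w (θ+φ) q.2) := by
      intro ⟨⟨a,b⟩,k⟩
      simp only [hSLdef, eL, Equiv.coe_fn_mk]
      simp only [add_sub_cancel_right]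
      rw [w_index_add, w_index_add, w_arg_add]
      ring
    rw [tsum_congr hptw]
    exact (tsum_mul_tsum_of_summable_norm hfC (hfD (θ+φ))).symm
  have eq1 : ∑' q, S1 q =
      (∑' p : ℤ×ℤ, C p * w θ p.1 * w φ p.2) * (∑' k : ℤ, D k * w θ k) := by
    rw [← e1.tsum_eq S1]
    have hptw : ∀ q : (ℤ×ℤ)×ℤ,
        S1 (e1 q) = (C q.1 * w θ q.1.1 * w φ q.1.2) * (D q.2 * w θ q.2) := by
      intro ⟨⟨a,b⟩,k⟩
      simp only [hS1def, e1, Equiv.coe_fn_mk]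
      simp only [add_sub_cancel_left]
      rw [w_index_add]
      ring
    rw [tsum_congr hptw]
    exact (tsum_mul_tsum_of_summable_norm hfC (hfD θ)).symm
  have eq2 : ∑' q, S2 q =
      (∑' p : ℤ×ℤ, C p * w θ p.1 * w φ p.2) * (∑' k : ℤ, D k * w φ k) := by
    rw [← e2.tsum_eq S2]
    have hptw : ∀ q : (ℤ×ℤ)×ℤ,
        S2 (e2 q) = (C q.1 * w θ q.1.1 * w φ q.1.2) * (D q.2 * w φ q.2) := by
      intro ⟨⟨a,b⟩,k⟩
      simp only [hS2def, e2, Equiv.coe_fn_mk]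
      simp only [add_sub_cancel_left]
      rw [w_index_add]
      ring
    rw [tsum_congr hptw]
    exact (tsum_mul_tsum_of_summable_norm hfC (hfD φ)).symm
  -- rows
  have hrow : ∀ lm : ℤ×ℤ, (∑' k, SL (lm, k)) = (∑' k, S1 (lm, k)) + ∑' k, S2 (lm, k) := by
    intro lm
    have h1 : (∑' k, SL (lm, k)) =
        (w θ lm.1 * w φ lm.2) * ∑' k, C (lm.1 - k, lm.2 - k) * D k := by
      rw [← tsum_mul_left]
    have h2 : (∑' k, S1 (lm, k)) =
        (w θ lm.1 * w φ lm.2) * ∑' k, C (k, lm.2) * D (lm.1 - k) := by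
      rw [← tsum_mul_left]
    have h3 : (∑' k, S2 (lm, k)) =
        (w θ lm.1 * w φ lm.2) * ∑' k, C (lm.1, k) * D (lm.2 - k) := by
      rw [← tsum_mul_left]
    rw [h1, h2, h3, hl lm.1 lm.2, mul_add]
  -- assemble
  have hsplit : ∑' q, SL q = (∑' q, S1 q) + ∑' q, S2 q := by
    rw [Summable.tsum_prod' hSL (fun b => hSL.prod_factor b), Summable.tsum_prod' hS1 (fun b => hS1.prod_factor b), Summable.tsum_prod' hS2 (fun b => hS2.prod_factor b)]
    rw [← Summable.tsum_add (Summable.prod hS1) (Summable.prod hS2)]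
    exact tsum_congr fun lm => by rw [hrow lm]
  rw [← eqL, ← eq1, ← eq2, hsplit]

end Stmt12
end

section Main
open Stmt12

set_option maxHeartbeats 2000000 in
/-- Theorem 2: On an infinite one-dimensional lattice, there is
no nontrivial local translation-invariant difference operator `D` satisfying
the Leibniz rule with respect to a nontrivial local translation-invariant
product rule `C` (no associativity assumed): `D` must vanish identically. -/
theorem stmt_12 (C : ℤ × ℤ → ℂ) (D : ℤ → ℂ) (K r : ℝ) (hK : 0 < K) (hr : 0 < r)
    (hC : ∀ k l : ℤ,
      ‖C (k, l)‖ ≤ K * Real.exp (-r * ((|k| : ℝ) + (|l| : ℝ))))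
    (hD : ∀ m : ℤ, ‖D m‖ ≤ K * Real.exp (-r * (|m| : ℝ)))
    (hne : ∃ k l : ℤ, C (k, l) ≠ 0)
    (hzero : ∑' m : ℤ, D m = 0)
    (hleib : ∀ l m n : ℤ,
      ∑' k : ℤ, C (l - k, m - k) * D (k - n) =
        (∑' k : ℤ, C (k - n, m - n) * D (l - k)) +
          ∑' k : ℤ, C (l - n, k - n) * D (m - k)) :
    ∀ m : ℤ, D m = 0 := by
  have hr2 : 0 < r / 2 := by linarith
  -- bounds in norm form
  have hC' : ∀ p : ℤ × ℤ, ‖C p‖ ≤ K * Real.exp (-(r * (|(p.1 : ℝ)| + |(p.2 : ℝ)|))) := by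
    intro ⟨k, l⟩
    have h := hC k l
    convert h using 3
    push_cast
    ring
  have hD' : ∀ m : ℤ, ‖D m‖ ≤ K * Real.exp (-(r * |(m : ℝ)|)) := by
    intro m
    have h := hD m
    convert h using 3
    push_cast
    ring
  -- summability facts
  have hSD : Summable fun m : ℤ => ‖D m‖ :=
    Summable.of_nonneg_of_le (fun _ => norm_nonneg _) hD' ((summable_exp_int hr).mul_left K)
  have hSDw : Summable fun m : ℤ => ‖D m‖ * Real.exp (r / 2 * |(m : ℝ)|) := by
    apply Summable.of_nonneg_of_le (fun m => by positivity) _ ((summable_exp_int hr2).mul_left K)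
    intro m
    calc ‖D m‖ * Real.exp (r / 2 * |(m : ℝ)|)
        ≤ (K * Real.exp (-(r * |(m : ℝ)|))) * Real.exp (r / 2 * |(m : ℝ)|) :=
          mul_le_mul_of_nonneg_right (hD' m) (Real.exp_pos _).le
      _ = K * Real.exp (-(r / 2 * |(m : ℝ)|)) := by
          rw [mul_assoc, ← Real.exp_add]
          ring_nf
  have hsumCmaj : Summable fun p : ℤ × ℤ =>
      (K * Real.exp (-(r * |(p.1 : ℝ)|))) * Real.exp (-(r * |(p.2 : ℝ)|)) :=
    Summable.mul_of_nonneg ((summable_exp_int hr).mul_left K) (summable_exp_int hr)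
      (fun _ => by positivity) (fun _ => (Real.exp_pos _).le)
  have hCsplit : ∀ p : ℤ × ℤ, K * Real.exp (-(r * (|(p.1 : ℝ)| + |(p.2 : ℝ)|)))
      = (K * Real.exp (-(r * |(p.1 : ℝ)|))) * Real.exp (-(r * |(p.2 : ℝ)|)) := by
    intro p
    rw [mul_assoc, ← Real.exp_add]
    ring_nf
  have hSC : Summable fun p : ℤ × ℤ => ‖C p‖ := by
    apply Summable.of_nonneg_of_le (fun _ => norm_nonneg _) _ hsumCmaj
    intro p
    rw [← hCsplit]
    exact hC' p
  -- the two Fourier series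
  set fT : ℝ → ℂ := fun θ => ∑' k : ℤ, D k * w θ k with hfT
  set gT : ℝ → ℝ → ℂ := fun θ φ => ∑' p : ℤ × ℤ, C p * w θ p.1 * w φ p.2 with hgT
  have hl : ∀ l m : ℤ, (∑' k : ℤ, C (l - k, m - k) * D k) =
      (∑' k : ℤ, C (k, m) * D (l - k)) + ∑' k : ℤ, C (l, k) * D (m - k) := by
    intro l m
    have h := hleib l m 0
    simpa using h
  have hkey : ∀ θ φ : ℝ, gT θ φ * (fT (θ + φ) - fT θ - fT φ) = 0 := by
    intro θ φ
    have h := key C D hSC hSD hl θ φ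
    rw [hgT, hfT]
    simp only []
    linear_combination h
  have hcont : Continuous fT := by
    have h := F_cont (ι := ℤ) D (fun k => k) (r / 2) hr2 hSDw
    exact h
  -- Step 1: additivity of fT
  have Hadd : ∀ θ φ : ℝ, fT (θ + φ) = fT θ + fT φ := by
    by_contra hcon
    push_neg at hcon
    obtain ⟨θ₀, φ₀, hE0⟩ := hcon
    set E : ℝ × ℝ → ℂ := fun p => fT (p.1 + p.2) - fT p.1 - fT p.2 with hE
    have hEcont : Continuous E := by
      apply Continuous.sub (Continuous.sub _ _) _
      · exact hcont.comp (continuous_fst.add continuous_snd)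
      · exact hcont.comp continuous_fst
      · exact hcont.comp continuous_snd
    have hE0' : E (θ₀, φ₀) ≠ 0 := by
      simp only [hE]
      intro h
      exact hE0 (sub_eq_zero.mp (by linear_combination h))
    have hopen : IsOpen {p : ℝ × ℝ | E p ≠ 0} := by
      have : {p : ℝ × ℝ | E p ≠ 0} = E ⁻¹' ({0}ᶜ) := rfl
      rw [this]
      exact isOpen_compl_singleton.preimage hEcont
    obtain ⟨ε, hεpos, hball⟩ := Metric.isOpen_iff.mp hopen (θ₀, φ₀) hE0'
    have hmem : ∀ θ ∈ Ioo (θ₀ - ε) (θ₀ + ε), ∀ φ ∈ Ioo (φ₀ - ε) (φ₀ + ε),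
        (θ, φ) ∈ Metric.ball (θ₀, φ₀) ε := by
      intro θ hθ φ hφ
      rw [Metric.mem_ball, Prod.dist_eq]
      apply max_lt
      · rw [Real.dist_eq, abs_sub_lt_iff]
        constructor <;> [linarith [hθ.2]; linarith [hθ.1]]
      · rw [Real.dist_eq, abs_sub_lt_iff]
        constructor <;> [linarith [hφ.2]; linarith [hφ.1]]
    have hgz : ∀ θ ∈ Ioo (θ₀ - ε) (θ₀ + ε), ∀ φ ∈ Ioo (φ₀ - ε) (φ₀ + ε), gT θ φ = 0 := by
      intro θ hθ φ hφ
      have hEne : E (θ, φ) ≠ 0 := hball (hmem θ hθ φ hφ)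
      have := hkey θ φ
      rcases mul_eq_zero.mp this with h | h
      · exact h
      · exact absurd h hEne
    -- for φ in the window, gT θ φ = 0 for ALL real θ
    have hgθ : ∀ φ ∈ Ioo (φ₀ - ε) (φ₀ + ε), ∀ θ : ℝ, gT θ φ = 0 := by
      intro φ hφ
      have hsumW : Summable fun p : ℤ × ℤ =>
          ‖C p * w φ p.2‖ * Real.exp (r / 2 * |(p.1 : ℝ)|) := by
        apply Summable.of_nonneg_of_le (fun p => by positivity) _
          (Summable.mul_of_nonneg ((summable_exp_int hr2).mul_left K) (summable_exp_int hr)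
            (fun _ => by positivity) (fun _ => (Real.exp_pos _).le))
        intro p
        rw [norm_mul, w_norm, mul_one]
        calc ‖C p‖ * Real.exp (r / 2 * |(p.1 : ℝ)|)
            ≤ (K * Real.exp (-(r * (|(p.1 : ℝ)| + |(p.2 : ℝ)|)))) *
              Real.exp (r / 2 * |(p.1 : ℝ)|) :=
              mul_le_mul_of_nonneg_right (hC' p) (Real.exp_pos _).le
          _ = K * Real.exp (-(r / 2 * |(p.1 : ℝ)|)) * Real.exp (-(r * |(p.2 : ℝ)|)) := by
              rw [mul_assoc, ← Real.exp_add, mul_assoc, ← Real.exp_add]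
              ring_nf
      have hvan : ∀ θ : ℝ, θ ∈ Ioo (θ₀ - ε) (θ₀ + ε) →
          (∑' p : ℤ × ℤ, (C p * w φ p.2) * Complex.exp ((p.1 : ℂ) * θ * I)) = 0 := by
        intro θ hθ
        have h := hgz θ hθ φ hφ
        rw [hgT] at h
        simp only [] at h
        rw [← h]
        apply tsum_congr
        intro p
        unfold w
        ring
      have hext := F_ext_zero (ι := ℤ × ℤ) (fun p => C p * w φ p.2) (fun p => p.1)
        (r / 2) hr2 hsumW (θ₀ - ε) (θ₀ + ε) (by linarith) hvan
      intro θ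
      have h := hext θ
      rw [hgT]
      simp only []
      rw [← h]
      apply tsum_congr
      intro p
      unfold w
      ring
    -- extract: for φ in window, the k-th coefficient vanishes
    set ck : ℝ → ℤ → ℂ := fun φ k => ∑' l : ℤ, C (k, l) * w φ l with hck
    have hfibsum : ∀ (φ : ℝ) (k : ℤ), Summable fun l : ℤ => ‖C (k, l) * w φ l‖ := by
      intro φ k
      apply (hSC.prod_factor k).congr
      intro l
      rw [norm_mul, w_norm, mul_one]
    have hcksum : ∀ φ : ℝ, Summable fun k : ℤ => ‖ck φ k‖ := by
      intro φ
      set T : ℝ := ∑' l : ℤ, Real.exp (-(r * |(l : ℝ)|)) with hT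
      apply Summable.of_nonneg_of_le (fun _ => norm_nonneg _) _
        (((summable_exp_int hr).mul_left K).mul_right T)
      intro k
      calc ‖ck φ k‖ ≤ ∑' l : ℤ, ‖C (k, l) * w φ l‖ := norm_tsum_le_tsum_norm (hfibsum φ k)
        _ ≤ ∑' l : ℤ, (K * Real.exp (-(r * |(k : ℝ)|))) * Real.exp (-(r * |(l : ℝ)|)) := by
            apply Summable.tsum_le_tsum _ (hfibsum φ k)
              (((summable_exp_int hr).mul_left _))
            intro l
            rw [norm_mul, w_norm, mul_one]
            calc ‖C (k, l)‖ ≤ K * Real.exp (-(r * (|(k : ℝ)| + |(l : ℝ)|))) := hC' (k, l)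
              _ = (K * Real.exp (-(r * |(k : ℝ)|))) * Real.exp (-(r * |(l : ℝ)|)) :=
                hCsplit (k, l)
        _ = K * Real.exp (-(r * |(k : ℝ)|)) * T := tsum_mul_left
    have hck0 : ∀ φ ∈ Ioo (φ₀ - ε) (φ₀ + ε), ∀ k : ℤ, ck φ k = 0 := by
      intro φ hφ k
      apply fourier_zero (ck φ) (hcksum φ) _ k
      intro θ
      have hGsum : Summable fun p : ℤ × ℤ => C p * w θ p.1 * w φ p.2 := by
        apply Summable.of_norm
        apply hSC.congr
        intro p
        rw [norm_mul, norm_mul, w_norm, w_norm]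
        ring
      have hdec : gT θ φ = ∑' k : ℤ, (ck φ k) * Complex.exp ((k : ℂ) * θ * I) := by
        rw [hgT]
        simp only []
        rw [Summable.tsum_prod' hGsum (fun b => hGsum.prod_factor b)]
        apply tsum_congr
        intro k
        rw [hck]
        simp only []
        rw [← tsum_mul_right]
        apply tsum_congr
        intro l
        unfold w
        ring
      rw [← hdec]
      exact hgθ φ hφ θ
    -- conclude all C (k, l) = 0
    obtain ⟨k, l, hCkl⟩ := hne
    apply hCkl
    have hsumk : Summable fun l : ℤ => ‖C (k, l)‖ * Real.exp (r / 2 * |(l : ℝ)|) := by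
      apply Summable.of_nonneg_of_le (fun l => by positivity) _
        ((summable_exp_int hr2).mul_left (K * Real.exp (-(r * |(k : ℝ)|))))
      intro l
      calc ‖C (k, l)‖ * Real.exp (r / 2 * |(l : ℝ)|)
          ≤ (K * Real.exp (-(r * (|(k : ℝ)| + |(l : ℝ)|)))) * Real.exp (r / 2 * |(l : ℝ)|) :=
            mul_le_mul_of_nonneg_right (hC' (k, l)) (Real.exp_pos _).le
        _ = K * Real.exp (-(r * |(k : ℝ)|)) * Real.exp (-(r / 2 * |(l : ℝ)|)) := by
            rw [mul_assoc, ← Real.exp_add, mul_assoc, ← Real.exp_add]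
            ring_nf
    have hvanφ : ∀ φ : ℝ, φ ∈ Ioo (φ₀ - ε) (φ₀ + ε) →
        (∑' l : ℤ, C (k, l) * Complex.exp ((l : ℂ) * φ * I)) = 0 := by
      intro φ hφ
      have h := hck0 φ hφ k
      rw [hck] at h
      simp only [] at h
      rw [← h]
      apply tsum_congr
      intro l
      unfold w
      ring
    have hextφ := F_ext_zero (ι := ℤ) (fun l => C (k, l)) (fun l => l)
      (r / 2) hr2 hsumk (φ₀ - ε) (φ₀ + ε) (by linarith) hvanφ
    exact fourier_zero (fun l => C (k, l)) (hSC.prod_factor k) hextφ l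
  -- Step 2: additivity + periodicity + continuity give fT = 0
  have h00 : fT 0 = 0 := by
    have := Hadd 0 0
    rw [add_zero] at this
    linear_combination -this
  have hper : ∀ θ : ℝ, fT (θ + 2 * π) = fT θ := by
    intro θ
    rw [hfT]
    apply tsum_congr
    intro k
    congr 1
    unfold w
    rw [show ((k : ℂ) * ((θ + 2 * π : ℝ) : ℂ) * I) = (k : ℂ) * (θ : ℝ) * I + (k : ℂ) * (2 * π * I)
        by push_cast; ring,
      Complex.exp_add, Complex.exp_int_mul_two_pi_mul_I, mul_one]
  have h2pi : fT (2 * π) = 0 := by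
    have h := hper 0
    rw [zero_add] at h
    rw [h, h00]
  have hneg : ∀ x : ℝ, fT (-x) = - fT x := by
    intro x
    have h := Hadd x (-x)
    rw [add_neg_cancel, h00] at h
    linear_combination -h
  have hnat : ∀ (n : ℕ) (x : ℝ), fT ((n : ℝ) * x) = (n : ℂ) * fT x := by
    intro n
    induction n with
    | zero => intro x; simpa using h00
    | succ n ih =>
      intro x
      have hx : ((n + 1 : ℕ) : ℝ) * x = (n : ℝ) * x + x := by push_cast; ring
      rw [hx, Hadd, ih]
      push_cast
      ring
  have hint : ∀ (p : ℤ) (x : ℝ), fT ((p : ℝ) * x) = (p : ℂ) * fT x := by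
    intro p x
    obtain ⟨n, rfl | rfl⟩ := p.eq_nat_or_neg
    · have hx : (((n : ℤ) : ℝ)) * x = (n : ℝ) * x := by push_cast; ring
      rw [hx, hnat]
      push_cast
      ring
    · have hx : (((-(n : ℤ) : ℤ)) : ℝ) * x = -((n : ℝ) * x) := by push_cast; ring
      rw [hx, hneg, hnat]
      push_cast
      ring
  have hrat : ∀ q : ℚ, fT (2 * π * (q : ℝ)) = 0 := by
    intro q
    have hden : ((q.den : ℝ)) ≠ 0 := Nat.cast_ne_zero.mpr q.den_nz
    have hq : (q : ℝ) * (q.den : ℝ) = (q.num : ℝ) := by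
      rw [Rat.cast_def]
      field_simp
    have hmul : (q.den : ℝ) * (2 * π * (q : ℝ)) = (q.num : ℝ) * (2 * π) := by
      linear_combination (2 * π) * hq
    have h1 : fT ((q.den : ℝ) * (2 * π * (q : ℝ))) = (q.den : ℂ) * fT (2 * π * (q : ℝ)) :=
      hnat q.den _
    rw [hmul, hint q.num (2 * π), h2pi, mul_zero] at h1
    have hdenC : ((q.den : ℂ)) ≠ 0 := Nat.cast_ne_zero.mpr q.den_nz
    rcases mul_eq_zero.mp h1.symm with h | h
    · exact absurd h hdenC
    · exact h
  have hfzero : ∀ x : ℝ, fT (2 * π * x) = 0 := by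
    have hc2 : Continuous fun x : ℝ => fT (2 * π * x) :=
      hcont.comp (continuous_const.mul continuous_id)
    have heq : (fun x : ℝ => fT (2 * π * x)) = fun _ => (0 : ℂ) := by
      apply Continuous.ext_on Rat.denseRange_cast hc2 continuous_const
      rintro _ ⟨q, rfl⟩
      exact hrat q
    intro x
    exact congrFun heq x
  have hfT0 : ∀ θ : ℝ, fT θ = 0 := by
    intro θ
    have hπ : (2 * π) ≠ 0 := by positivity
    have h := hfzero (θ / (2 * π))
    rwa [show 2 * π * (θ / (2 * π)) = θ by field_simp] at h
  intro m
  apply fourier_zero D hSD _ m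
  intro θ
  exact hfT0 θ

end Main
end

section
/- Let 0 < ε < 1 and let A = {z ∈ ℂ : 1−ε < |z| < 1+ε}. Suppose Ĉ is analytic (jointly holomorphic) on A × A and not identically zero, D̂ is holomorphic on A, and Ĉ(v,w)·(D̂(vw) − D̂(v) − D̂(w)) = 0 for all v, w ∈ A such that vw ∈ A. Then D̂(z) = 0 for all z ∈ A. -/
lemma annulus_isPreconnected {ε : ℝ} (hε1 : ε < 1) : IsPreconnected (annulus ε) := by
  have himg : annulus ε =
      (fun p : ℝ × ℝ => (p.1 : ℂ) * Complex.exp (p.2 * Complex.I)) ''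
        (Set.Ioo (1 - ε) (1 + ε) ×ˢ (Set.univ : Set ℝ)) := by
    ext z
    constructor
    · rintro ⟨h1, h2⟩
      exact ⟨(‖z‖, Complex.arg z), ⟨⟨h1, h2⟩, trivial⟩,
        Complex.norm_mul_exp_arg_mul_I z⟩
    · rintro ⟨⟨r, θ⟩, ⟨⟨hr1, hr2⟩, -⟩, rfl⟩
      have hr0 : 0 < r := lt_of_lt_of_le (by linarith) (le_of_lt hr1)
      have : ‖(r : ℂ) * Complex.exp (θ * Complex.I)‖ = r := by
        rw [norm_mul, Complex.norm_exp_ofReal_mul_I, mul_one, Complex.norm_real, Real.norm_eq_abs,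
          abs_of_pos hr0]
      exact ⟨by rw [this]; exact hr1, by rw [this]; exact hr2⟩
  rw [himg]
  exact (isPreconnected_Ioo.prod isPreconnected_univ).image _
    (((Complex.continuous_ofReal.comp continuous_fst).mul
      (Complex.continuous_exp.comp
        ((Complex.continuous_ofReal.comp continuous_snd).mul continuous_const))).continuousOn)

lemma one_mem_annulus {ε : ℝ} (hε0 : 0 < ε) : (1 : ℂ) ∈ annulus ε := by
  constructor <;> simp <;> linarith

/-- Holomorphic form of Theorem 2: if `Ĉ` is holomorphic on the
polyannulus and not identically zero, `D̂` is holomorphic on the annulus, and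
`Ĉ(v,w)·(D̂(vw) − D̂(v) − D̂(w)) = 0` whenever `v, w, vw` lie in the annulus,
then `D̂` vanishes identically on the annulus. -/
theorem stmt_13 (ε : ℝ) (hε0 : 0 < ε) (hε1 : ε < 1)
    (Chat : ℂ × ℂ → ℂ) (Dhat : ℂ → ℂ)
    (hChol : AnalyticOnNhd ℂ Chat (annulus ε ×ˢ annulus ε))
    (hCnz : ∃ p ∈ annulus ε ×ˢ annulus ε, Chat p ≠ 0)
    (hDhol : AnalyticOnNhd ℂ Dhat (annulus ε))
    (hleib : ∀ v ∈ annulus ε, ∀ w ∈ annulus ε, v * w ∈ annulus ε →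
      Chat (v, w) * (Dhat (v * w) - Dhat v - Dhat w) = 0) :
    ∀ z ∈ annulus ε, Dhat z = 0 := by
  have hopen : IsOpen (annulus ε) := annulus_isOpen ε
  have hconn : IsPreconnected (annulus ε) := annulus_isPreconnected hε1
  have h1A : (1 : ℂ) ∈ annulus ε := one_mem_annulus hε0
  obtain ⟨p, hp, hpne⟩ := hCnz
  -- Step 1: the functional equation holds everywhere it makes sense
  have hfun : ∀ v ∈ annulus ε, ∀ w ∈ annulus ε, v * w ∈ annulus ε →
      Dhat (v * w) = Dhat v + Dhat w := by
    intro v hv w hw hvw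
    by_contra hne
    -- F(v,w) ≠ 0, and F is continuous near (v,w), so Chat ≡ 0 near (v,w)
    have hFne : Dhat (v * w) - Dhat v - Dhat w ≠ 0 := by
      intro h; apply hne; rwa [sub_sub, sub_eq_zero] at h
    set F : ℂ × ℂ → ℂ := fun q => Dhat (q.1 * q.2) - Dhat q.1 - Dhat q.2 with hF
    have hFcont : ContinuousAt F (v, w) := by
      have h1 : ContinuousAt (fun q : ℂ × ℂ => Dhat (q.1 * q.2)) (v, w) :=
        ContinuousAt.comp (x := (v, w)) (f := fun q : ℂ × ℂ => q.1 * q.2)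
          ((hDhol _ hvw).continuousAt) ((continuous_fst.mul continuous_snd).continuousAt)
      have h2 : ContinuousAt (fun q : ℂ × ℂ => Dhat q.1) (v, w) :=
        ((hDhol _ hv).continuousAt).comp continuous_fst.continuousAt
      have h3 : ContinuousAt (fun q : ℂ × ℂ => Dhat q.2) (v, w) :=
        ((hDhol _ hw).continuousAt).comp continuous_snd.continuousAt
      exact (h1.sub h2).sub h3
    have hevne : ∀ᶠ q : ℂ × ℂ in nhds (v, w), F q ≠ 0 :=
      hFcont.eventually_ne hFne
    have hevU : ∀ᶠ q : ℂ × ℂ in nhds (v, w),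
        q.1 ∈ annulus ε ∧ q.2 ∈ annulus ε ∧ q.1 * q.2 ∈ annulus ε := by
      have hU : IsOpen {q : ℂ × ℂ | q.1 ∈ annulus ε ∧ q.2 ∈ annulus ε ∧
          q.1 * q.2 ∈ annulus ε} := by
        refine IsOpen.inter (hopen.preimage continuous_fst) (IsOpen.inter
          (hopen.preimage continuous_snd)
          (hopen.preimage (continuous_fst.mul continuous_snd)))
      exact hU.mem_nhds ⟨hv, hw, hvw⟩
    have hCev : Chat =ᶠ[nhds (v, w)] 0 := by
      filter_upwards [hevne, hevU] with q hq hqU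
      have := hleib q.1 hqU.1 q.2 hqU.2.1 hqU.2.2
      have h0 : Chat (q.1, q.2) * F q = 0 := this
      have : Chat (q.1, q.2) = 0 := by
        rcases mul_eq_zero.mp h0 with h | h
        · exact h
        · exact absurd h hq
      simpa using this
    have := hChol.eqOn_zero_of_preconnected_of_eventuallyEq_zero
      (hconn.prod hconn) (Set.mk_mem_prod hv hw) hCev hp
    exact hpne this
  -- Dhat 1 = 0
  have hD1 : Dhat 1 = 0 := by
    have := hfun 1 h1A 1 h1A (by rw [one_mul]; exact h1A)
    rw [one_mul] at this
    exact left_eq_add.mp this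
  -- Step 2: deriv Dhat w * w = deriv Dhat 1 for all w in the annulus
  have hderiv : ∀ w ∈ annulus ε, ∀ v ∈ annulus ε, v * w ∈ annulus ε →
      deriv Dhat (v * w) * w = deriv Dhat v := by
    intro w hw v hv hvw
    have H1 : HasDerivAt (fun v' => Dhat (v' * w)) (deriv Dhat (v * w) * w) v :=
      HasDerivAt.comp v ((hDhol _ hvw).differentiableAt.hasDerivAt)
        (hasDerivAt_mul_const w)
    have H2 : HasDerivAt (fun v' => Dhat v' + Dhat w) (deriv Dhat v) v :=
      ((hDhol v hv).differentiableAt.hasDerivAt).add_const _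
    have hev : (fun v' => Dhat (v' * w)) =ᶠ[nhds v] fun v' => Dhat v' + Dhat w := by
      have hS : IsOpen {v' : ℂ | v' ∈ annulus ε ∧ v' * w ∈ annulus ε} :=
        IsOpen.inter hopen (hopen.preimage (continuous_mul_right w))
      filter_upwards [hS.mem_nhds ⟨hv, hvw⟩] with v' hv'
      exact hfun v' hv'.1 w hw hv'.2
    exact ((H2.congr_of_eventuallyEq hev).unique H1).symm
  have hkey : ∀ w ∈ annulus ε, deriv Dhat w * w = deriv Dhat 1 := by
    intro w hw
    have := hderiv w hw 1 h1A (by rwa [one_mul])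
    rwa [one_mul] at this
  -- Step 3: deriv Dhat 1 = 0 by integrating around the unit circle
  have hsub : Metric.sphere (0 : ℂ) 1 ⊆ annulus ε := by
    intro z hz
    have : ‖z‖ = 1 := by simpa [Complex.dist_eq] using hz
    exact ⟨by rw [this]; linarith, by rw [this]; linarith⟩
  have hint0 : (∮ z in C(0, 1), deriv Dhat z) = 0 := by
    apply circleIntegral.integral_eq_zero_of_hasDerivWithinAt (by norm_num : (0:ℝ) ≤ 1)
    intro z hz
    exact ((hDhol z (hsub hz)).differentiableAt.hasDerivAt).hasDerivWithinAt
  have hinteq : (∮ z in C(0, 1), deriv Dhat z) =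
      ∮ z in C(0, 1), deriv Dhat 1 * z⁻¹ := by
    apply circleIntegral.integral_congr (by norm_num : (0:ℝ) ≤ 1)
    intro z hz
    have hzA := hsub hz
    have hz0 : z ≠ 0 := by
      intro h
      have := hzA.1
      rw [h] at this
      simp at this
      linarith
    rw [← hkey z hzA]
    exact (mul_inv_cancel_right₀ hz0 _).symm
  have hc0 : deriv Dhat 1 = 0 := by
    have h2pi : (∮ z in C((0:ℂ), 1), (z - 0)⁻¹) = 2 * Real.pi * Complex.I :=
      circleIntegral.integral_sub_center_inv 0 one_ne_zero
    have : (∮ z in C((0:ℂ), 1), deriv Dhat 1 * z⁻¹) = deriv Dhat 1 * (2 * Real.pi * Complex.I) := by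
      rw [circleIntegral.integral_const_mul]
      congr 1
      rw [← h2pi]
      congr 1
      ext z
      rw [sub_zero]
    have hfin : deriv Dhat 1 * (2 * Real.pi * Complex.I) = 0 := by
      rw [← this, ← hinteq, hint0]
    exact (mul_eq_zero.mp hfin).resolve_right Complex.two_pi_I_ne_zero
  -- Step 4: deriv Dhat vanishes on the annulus
  have hderiv0 : ∀ z ∈ annulus ε, deriv Dhat z = 0 := by
    intro z hz
    have hz0 : z ≠ 0 := by
      intro h
      have := hz.1
      rw [h] at this
      simp at this
      linarith
    have := hkey z hz
    rw [hc0] at this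
    exact (mul_eq_zero.mp this).resolve_right hz0
  -- Step 5: Dhat is constant (= 0) near 1, hence zero on the annulus
  have hball : Metric.ball (1 : ℂ) ε ⊆ annulus ε := by
    intro z hz
    rw [Metric.mem_ball, Complex.dist_eq] at hz
    have h1 : ‖z‖ < 1 + ε := by
      calc ‖z‖ = ‖z - 1 + 1‖ := by ring_nf
        _ ≤ ‖z - 1‖ + ‖(1 : ℂ)‖ := norm_add_le _ _
        _ < ε + 1 := by simpa using hz
        _ = 1 + ε := by ring
    have h2 : 1 - ε < ‖z‖ := by
      have h := norm_sub_norm_le (1 : ℂ) z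
      rw [norm_one] at h
      have h' : ‖(1 : ℂ) - z‖ = ‖z - 1‖ := by
        rw [← norm_neg, neg_sub]
      rw [h'] at h
      linarith
    exact ⟨h2, h1⟩
  have hev1 : Dhat =ᶠ[nhds 1] 0 := by
    filter_upwards [Metric.ball_mem_nhds (1 : ℂ) hε0] with z hz
    have hconst : Dhat z = Dhat 1 := by
      apply Convex.is_const_of_fderivWithin_eq_zero (𝕜 := ℂ) (convex_ball (1:ℂ) ε)
      · intro x hx
        exact (hDhol x (hball hx)).differentiableAt.differentiableWithinAt
      · intro x hx
        rw [fderivWithin_of_isOpen Metric.isOpen_ball hx]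
        have hd : HasDerivAt Dhat 0 x := by
          have := (hDhol x (hball hx)).differentiableAt.hasDerivAt
          rwa [hderiv0 x (hball hx)] at this
        rw [hd.hasFDerivAt.fderiv]
        ext
        simp
      · exact hz
      · exact Metric.mem_ball_self hε0
    rw [hconst, hD1]
    rfl
  intro z hz
  exact hDhol.eqOn_zero_of_preconnected_of_eventuallyEq_zero hconn h1A hev1 hz
end
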